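/- arXiv:2406.11529 — 5 statements merged into one kernel-verified Lean document; each statement's English description precedes it below -/
import Mathlib

section
/- Let p be a prime and let j, k be integers with 0 < j < p−1 and 0 < k < p−1. Define the Jacobi sum mod p by J_{j,k} := ∑_{x ∈ 𝔽_p, x ≠ 0, x ≠ 1} x^{−j}·(1−x)^{−k} ∈ 𝔽_p. Then (a) J_{j,k} = −binom(j+k, k) in 𝔽_p, where binom(j+k,k) is the binomial coefficient reduced modulo p; and (b) J_{j,k} ≠ 0 if and only if j + k < p. -/
private lemma sum_pow_zmod (p : ℕ) (hp : p.Prime) (m : ℕ) (hm : 0 < m)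
    (hm2 : m < 2 * (p - 1)) :
    haveI : Fact p.Prime := ⟨hp⟩
    (∑ x : ZMod p, x ^ m) = if m = p - 1 then -1 else 0 := by
  haveI : Fact p.Prime := ⟨hp⟩
  split_ifs with h
  · subst h
    have h0 : (0 : ZMod p) ∈ (Finset.univ : Finset (ZMod p)) := Finset.mem_univ _
    rw [← Finset.add_sum_erase _ _ h0, zero_pow (by omega : p - 1 ≠ 0), zero_add]
    have : ∑ x ∈ Finset.univ.erase (0 : ZMod p), x ^ (p - 1)
        = ∑ _x ∈ Finset.univ.erase (0 : ZMod p), (1 : ZMod p) :=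
      Finset.sum_congr rfl fun x hx =>
        ZMod.pow_card_sub_one_eq_one (Finset.mem_erase.mp hx).1
    rw [this, Finset.sum_const, Finset.card_erase_of_mem h0, Finset.card_univ, ZMod.card,
      nsmul_eq_mul, mul_one, Nat.cast_sub hp.one_le, ZMod.natCast_self, Nat.cast_one, zero_sub]
  · rcases lt_or_ge m (p - 1) with h1 | h1
    · exact FiniteField.sum_pow_lt_card_sub_one (K := ZMod p) m (by rwa [ZMod.card])
    · have h1' : p - 1 < m := lt_of_le_of_ne h1 (Ne.symm h)
      have key : ∀ x : ZMod p, x ^ m = x ^ (m - (p - 1)) := by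
        intro x
        by_cases hx : x = 0
        · subst hx
          rw [zero_pow hm.ne', zero_pow (by omega : m - (p - 1) ≠ 0)]
        · have : x ^ m = x ^ (m - (p - 1)) * x ^ (p - 1) := by
            rw [← pow_add]; congr 1; omega
          rw [this, ZMod.pow_card_sub_one_eq_one hx, mul_one]
      simp_rw [key]
      exact FiniteField.sum_pow_lt_card_sub_one (K := ZMod p) _ (by rw [ZMod.card]; omega)

private lemma descFact_cong (p k : ℕ) :
    ∀ m : ℕ, m + k ≤ p - 1 →
      (((p - 1 - k).descFactorial m : ℕ) : ZMod p)
        = (-1) ^ m * (((k + m).descFactorial m : ℕ) : ZMod p)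
  | 0, _ => by simp
  | (m + 1), hm => by
    have ih := descFact_cong p k m (by omega)
    rw [Nat.descFactorial_succ,
      show k + (m + 1) = (k + m) + 1 from by omega, Nat.succ_descFactorial_succ]
    have hcast : (((p - 1 - k - m : ℕ)) : ZMod p) = -(((k + m + 1 : ℕ)) : ZMod p) := by
      have : p - 1 - k - m = p - (k + m + 1) := by omega
      rw [this, Nat.cast_sub (by omega), ZMod.natCast_self, zero_sub]
    push_cast [hcast] at *
    rw [ih]
    ring

/-- **Lemma 4.4 (Kummer).** Let `p` be prime and `0 < j, k < p - 1`. Define the Jacobi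
sum mod `p` by `J_{j,k} := ∑_{x ≠ 0, 1} x^{-j} (1-x)^{-k} ∈ 𝔽_p`. Then
(a) `J_{j,k} = - binom (j+k) k` in `𝔽_p`, and (b) `J_{j,k} ≠ 0 ↔ j + k < p`. -/
theorem jacobiSum_mod_p_eq_neg_binom
    (p : ℕ) (hp : p.Prime) (j k : ℕ)
    (hj0 : 0 < j) (hj : j < p - 1) (hk0 : 0 < k) (hk : k < p - 1) :
    haveI : NeZero p := ⟨hp.ne_zero⟩
    (∑ x ∈ Finset.univ.filter (fun x : ZMod p => x ≠ 0 ∧ x ≠ 1),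
        (x⁻¹) ^ j * ((1 - x)⁻¹) ^ k) = - (Nat.choose (j + k) k : ZMod p) ∧
    ((∑ x ∈ Finset.univ.filter (fun x : ZMod p => x ≠ 0 ∧ x ≠ 1),
        (x⁻¹) ^ j * ((1 - x)⁻¹) ^ k) ≠ 0 ↔ j + k < p) := by
  haveI : Fact p.Prime := ⟨hp⟩
  set a := p - 1 - j with ha_def
  set b := p - 1 - k with hb_def
  have hp3 : 3 ≤ p := by omega
  have pow_inv : ∀ (x : ZMod p) (m n : ℕ), x ≠ 0 → m + n = p - 1 → x⁻¹ ^ n = x ^ m := by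
    intro x m n hx hmn
    have h1 : x ^ m * x ^ n = 1 := by
      rw [← pow_add, hmn]; exact ZMod.pow_card_sub_one_eq_one hx
    rw [inv_pow, ← eq_inv_of_mul_eq_one_left h1]
  have step1 : (∑ x ∈ Finset.univ.filter (fun x : ZMod p => x ≠ 0 ∧ x ≠ 1),
        (x⁻¹) ^ j * ((1 - x)⁻¹) ^ k) = ∑ x : ZMod p, x ^ a * (1 - x) ^ b := by
    calc (∑ x ∈ Finset.univ.filter (fun x : ZMod p => x ≠ 0 ∧ x ≠ 1),
            (x⁻¹) ^ j * ((1 - x)⁻¹) ^ k)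
        = ∑ x ∈ Finset.univ.filter (fun x : ZMod p => x ≠ 0 ∧ x ≠ 1),
            x ^ a * (1 - x) ^ b := by
          apply Finset.sum_congr rfl
          intro x hx
          obtain ⟨hx0, hx1⟩ := (Finset.mem_filter.mp hx).2
          rw [pow_inv x a j hx0 (by omega), pow_inv (1 - x) b k
            (fun h => hx1 (by linear_combination -h)) (by omega)]
      _ = ∑ x : ZMod p, x ^ a * (1 - x) ^ b := by
          apply Finset.sum_subset (Finset.filter_subset _ _)
          intro x _ hx
          simp only [Finset.mem_filter, Finset.mem_univ, true_and, not_and_or, not_not] at hx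
          rcases hx with rfl | rfl
          · rw [zero_pow (by omega : a ≠ 0), zero_mul]
          · rw [sub_self, zero_pow (by omega : b ≠ 0), mul_zero]
  have expand : ∀ x : ZMod p, x ^ a * (1 - x) ^ b
      = ∑ i ∈ Finset.range (b + 1), ((-1) ^ i * (Nat.choose b i : ZMod p)) * x ^ (a + i) := by
    intro x
    rw [show (1 - x : ZMod p) = -x + 1 from by ring, add_pow, Finset.mul_sum]
    apply Finset.sum_congr rfl
    intro i _
    rw [one_pow, neg_pow, pow_add]
    ring
  have step2 : (∑ x : ZMod p, x ^ a * (1 - x) ^ b)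
      = ∑ i ∈ Finset.range (b + 1), ((-1) ^ i * (Nat.choose b i : ZMod p))
          * (∑ x : ZMod p, x ^ (a + i)) := by
    simp_rw [expand, Finset.mul_sum]
    rw [Finset.sum_comm]
  rw [step1, step2]
  have hsum : ∀ i ∈ Finset.range (b + 1),
      ((-1) ^ i * (Nat.choose b i : ZMod p)) * (∑ x : ZMod p, x ^ (a + i))
      = if i = j then -((-1) ^ i * (Nat.choose b i : ZMod p)) else 0 := by
    intro i hi
    rw [Finset.mem_range] at hi
    rw [sum_pow_zmod p hp (a + i) (by omega) (by omega),
      if_congr (by omega : a + i = p - 1 ↔ i = j) rfl rfl]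
    split_ifs <;> ring
  rw [Finset.sum_congr rfl hsum, Finset.sum_ite_eq' (Finset.range (b + 1)) j
    (fun i => -((-1) ^ i * (Nat.choose b i : ZMod p)))]
  by_cases hjk : j + k < p
  · rw [if_pos (Finset.mem_range.mpr (by omega))]
    have hfac : (j.factorial : ZMod p) ≠ 0 := by
      rw [Ne, ZMod.natCast_eq_zero_iff]
      intro h
      have := (Nat.Prime.dvd_factorial hp).mp h
      omega
    have E := descFact_cong p k j (by omega)
    rw [Nat.descFactorial_eq_factorial_mul_choose, Nat.descFactorial_eq_factorial_mul_choose]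
      at E
    push_cast at E
    have hbj : (Nat.choose b j : ZMod p) = (-1) ^ j * (Nat.choose (k + j) j : ZMod p) := by
      apply mul_left_cancel₀ hfac
      rw [E]; ring
    have hsymm : Nat.choose (k + j) j = Nat.choose (j + k) k := by
      rw [add_comm k j, Nat.choose_symm_add]
    have hval : -((-1) ^ j * (Nat.choose b j : ZMod p)) = -(Nat.choose (j + k) k : ZMod p) := by
      rw [hbj, hsymm, ← mul_assoc, ← pow_add, Even.neg_one_pow ⟨j, by ring⟩, one_mul]
    refine ⟨hval, ?_⟩
    rw [hval]
    have hC : (Nat.choose (j + k) k : ZMod p) ≠ 0 := by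
      rw [Ne, ZMod.natCast_eq_zero_iff]
      intro h
      have h2 : p ∣ (j + k).factorial := by
        have h3 := Nat.choose_mul_factorial_mul_factorial (Nat.le_add_left k j)
        exact h3 ▸ Dvd.dvd.mul_right (Dvd.dvd.mul_right h _) _
      have := (Nat.Prime.dvd_factorial hp).mp h2
      omega
    simpa using ⟨fun _ => hjk, fun _ => hC⟩
  · rw [if_neg (by simp only [Finset.mem_range]; omega)]
    have hdvd : p ∣ Nat.choose (j + k) k := by
      rw [add_comm j k]
      exact Nat.Prime.dvd_choose_add hp (by omega) (by omega) (by omega)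
    rw [(ZMod.natCast_eq_zero_iff _ _).mpr hdvd]
    simp [hjk]
end

section
/- Let p be a prime and let E = ℂ^{𝔽_p} be the space of functions on 𝔽_p with the sup-norm ‖·‖_∞, and E_{≥1} := {f ∈ E | ‖f‖_∞ ≥ 1}. Then the map Φ : E_{≥1} × E_{≥1} → E × E defined by Φ(f,g) = (f·g, f̂·(ǧ)^), where ǧ(x) := g(−x), is a proper map: the preimage of every compact subset of E × E is compact. -/
/-- The finite Fourier transform on `ℤ/pℤ`,
`f̂ k = (1/√p) ∑_{ℓ} e^{2πikℓ/p} f ℓ`. -/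
noncomputable def fourierZMod {p : ℕ} [NeZero p] (f : ZMod p → ℂ) (k : ZMod p) : ℂ :=
  (1 / Real.sqrt p) *
    ∑ ℓ : ZMod p, Complex.exp (2 * Real.pi * Complex.I * ((k * ℓ).val : ℂ) / p) * f ℓ

open Polynomial

lemma fewTerms (p : ℕ) [hp : Fact p.Prime] :
    ∀ (t : ℕ) (G : Polynomial (ZMod p)), G ≠ 0 →
      (∀ m ∈ G.support, m < p) → G.support.card ≤ t → ¬ (X - 1) ^ t ∣ G := by
  intro t
  induction t with
  | zero =>
    intro G hG _ hcard _
    exact hG (Polynomial.card_support_eq_zero.mp (Nat.le_zero.mp hcard))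
  | succ t ih =>
    intro G hG hlt hcard hdvd
    have hone : (X - 1 : Polynomial (ZMod p)) ∣ G :=
      dvd_trans (dvd_pow_self _ (Nat.succ_ne_zero t)) hdvd
    have heval : G.eval 1 = 0 := by
      obtain ⟨q, hq⟩ := hone
      simp [hq]
    by_cases hc2 : G.support.card ≤ 1
    · -- G is a monomial
      have h1 : G.support.card = 1 :=
        le_antisymm hc2 (Nat.one_le_iff_ne_zero.mpr
          (fun h => hG (Polynomial.card_support_eq_zero.mp h)))
      obtain ⟨k, x, hx, rfl⟩ := Polynomial.card_support_eq_one.mp h1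
      simp [hx] at heval
    · -- at least two terms
      push_neg at hc2
      obtain ⟨m₀, hm₀, m₁, hm₁, hne01⟩ := Finset.one_lt_card.mp hc2
      set H : Polynomial (ZMod p) :=
        X * derivative G - C ((m₀ : ZMod p)) * G with hH
      have hcoeff : ∀ m : ℕ, H.coeff m = ((m : ZMod p) - (m₀ : ZMod p)) * G.coeff m := by
        intro m
        rcases m with - | n
        · simp [hH, Polynomial.mul_coeff_zero]
        · rw [hH, Polynomial.coeff_sub, Polynomial.coeff_X_mul, Polynomial.coeff_derivative,
            Polynomial.coeff_C_mul]
          push_cast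
          ring
      have hsupp : H.support ⊆ G.support.erase m₀ := by
        intro m hm
        rw [Polynomial.mem_support_iff, hcoeff] at hm
        rw [Finset.mem_erase, Polynomial.mem_support_iff]
        constructor
        · rintro rfl; simp at hm
        · intro h; rw [h] at hm; simp at hm
      have hHne : H ≠ 0 := by
        intro h
        have := hcoeff m₁
        rw [h, Polynomial.coeff_zero] at this
        have h1 : ((m₁ : ZMod p) - (m₀ : ZMod p)) ≠ 0 := by
          rw [sub_ne_zero]
          intro h2
          apply hne01
          have := congrArg ZMod.val h2
          rw [ZMod.val_cast_of_lt (hlt _ hm₁), ZMod.val_cast_of_lt (hlt _ hm₀)] at this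
          exact this.symm
        exact h1 (by
          rcases mul_eq_zero.mp this.symm with h' | h'
          · exact h'
          · exact absurd h' (Polynomial.mem_support_iff.mp hm₁))
      have hdvd' : (X - 1 : Polynomial (ZMod p)) ^ t ∣ H := by
        have hd1 : (X - 1 : Polynomial (ZMod p)) ^ t ∣ derivative G := by
          obtain ⟨Q, hQ⟩ := hdvd
          rw [hQ, Polynomial.derivative_mul, Polynomial.derivative_pow]
          apply dvd_add
          · refine Dvd.dvd.mul_right (Dvd.dvd.mul_right ?_ _) _
            simpa using dvd_mul_left ((X - 1 : Polynomial (ZMod p)) ^ t) (C ((t:ZMod p)+1))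
          · exact Dvd.dvd.mul_right (pow_dvd_pow _ (Nat.le_succ t)) _
        exact dvd_sub (hd1.mul_left X)
          (((pow_dvd_pow _ (Nat.le_succ t)).trans hdvd).mul_left _)
      refine ih H hHne (fun m hm => hlt m (Finset.mem_of_mem_erase (hsupp hm))) ?_ hdvd'
      have h1 := Finset.card_le_card hsupp
      rw [Finset.card_erase_of_mem hm₀] at h1
      omega

namespace ChebAux
variable (p : ℕ) [hp : Fact p.Prime]

noncomputable def zeta : ℂ := Complex.exp (2 * Real.pi * Complex.I / p)

lemma hzeta : IsPrimitiveRoot (zeta p) p :=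
  Complex.isPrimitiveRoot_exp p hp.out.ne_zero

abbrev R : Type := Polynomial ℤ ⧸ Ideal.span {cyclotomic p ℤ}

instance : IsDomain (R p) := by
  have hprime : Prime (cyclotomic p ℤ) :=
    UniqueFactorizationMonoid.irreducible_iff_prime.mp (cyclotomic.irreducible hp.out.pos)
  haveI : (Ideal.span {cyclotomic p ℤ}).IsPrime :=
    (Ideal.span_singleton_prime (cyclotomic_ne_zero p ℤ)).mpr hprime
  infer_instance

instance : IsNoetherianRing (R p) := by infer_instance

noncomputable def ψ : R p →+* ℂ :=
  Ideal.Quotient.lift _ ((aeval (zeta p)).toRingHom : Polynomial ℤ →+* ℂ) (by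
    intro f hf
    rw [Ideal.mem_span_singleton] at hf
    obtain ⟨g, rfl⟩ := hf
    have hroot : aeval (zeta p) (cyclotomic p ℤ) = 0 := by
      rw [aeval_def, eval₂_eq_eval_map, algebraMap_int_eq, map_cyclotomic_int]
      exact ((hzeta p).isRoot_cyclotomic hp.out.pos).eq_zero
    simp [hroot])

lemma ψ_mk (f : Polynomial ℤ) : ψ p (Ideal.Quotient.mk _ f) = aeval (zeta p) f := rfl

lemma ψ_injective : Function.Injective (ψ p) := by
  rw [injective_iff_map_eq_zero]
  intro a ha
  obtain ⟨f, rfl⟩ := Ideal.Quotient.mk_surjective a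
  rw [ψ_mk] at ha
  have hint : IsIntegral ℤ (zeta p) := (hzeta p).isIntegral hp.out.pos
  have hdvd : minpoly ℤ (zeta p) ∣ f := minpoly.isIntegrallyClosed_dvd hint ha
  rw [← cyclotomic_eq_minpoly (hzeta p) hp.out.pos] at hdvd
  rwa [Ideal.Quotient.eq_zero_iff_mem, Ideal.mem_span_singleton]

noncomputable def φ : R p →+* ZMod p :=
  Ideal.Quotient.lift _ (eval₂RingHom (Int.castRingHom (ZMod p)) 1) (by
    intro f hf
    rw [Ideal.mem_span_singleton] at hf
    obtain ⟨g, rfl⟩ := hf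
    rw [map_mul]
    have : eval₂ (Int.castRingHom (ZMod p)) 1 (cyclotomic p ℤ) = (p : ZMod p) :=
      eval₂_one_cyclotomic_prime (Int.castRingHom (ZMod p))
    simp [eval₂RingHom, this, ZMod.natCast_self])

lemma φ_mk (f : Polynomial ℤ) :
    φ p (Ideal.Quotient.mk _ f) = eval₂ (Int.castRingHom (ZMod p)) 1 f := rfl

noncomputable def xbar : R p := Ideal.Quotient.mk _ (X : Polynomial ℤ)

lemma ψ_xbar : ψ p (xbar p) = zeta p := by simp [xbar, ψ_mk]

lemma φ_xbar : φ p (xbar p) = 1 := by simp [xbar, φ_mk]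

lemma sum_xbar_pow : ∑ i ∈ Finset.range p, (xbar p) ^ i = 0 := by
  have h0 : (Ideal.Quotient.mk (Ideal.span {cyclotomic p ℤ})) (cyclotomic p ℤ) = 0 := by
    rw [Ideal.Quotient.eq_zero_iff_mem]
    exact Ideal.subset_span rfl
  have h1 : (Ideal.Quotient.mk (Ideal.span {cyclotomic p ℤ}))
      (∑ i ∈ Finset.range p, X ^ i) = 0 := by
    rw [← cyclotomic_prime ℤ p, h0]
  simpa [map_sum, map_pow, xbar] using h1

lemma xbar_pow_p : (xbar p) ^ p = 1 := by
  have h := geom_sum_mul (xbar p) p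
  rw [sum_xbar_pow, zero_mul] at h
  linear_combination -h

lemma xbar_pow_mod (m : ℕ) : (xbar p) ^ m = (xbar p) ^ (m % p) := by
  conv_lhs => rw [← Nat.mod_add_div m p, pow_add, pow_mul, xbar_pow_p, one_pow, mul_one]

noncomputable def pi : R p := xbar p - 1

lemma pi_dvd_p : (pi p) ∣ (p : R p) := by
  have h1 : ∑ i ∈ Finset.range p, ((xbar p) ^ i - 1) = -(p : R p) := by
    rw [Finset.sum_sub_distrib, sum_xbar_pow]
    simp
  have h2 : (pi p) ∣ ∑ i ∈ Finset.range p, ((xbar p) ^ i - 1) := by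
    apply Finset.dvd_sum
    intro i _
    simpa [pi] using sub_dvd_pow_sub_pow (xbar p) 1 i
  rw [h1] at h2
  exact (dvd_neg).mp h2

lemma mem_span_pi_of_φ_eq_zero (y : R p) (hy : φ p y = 0) : y ∈ Ideal.span {pi p} := by
  obtain ⟨f, rfl⟩ := Ideal.Quotient.mk_surjective y
  rw [φ_mk] at hy
  have heval : eval₂ (Int.castRingHom (ZMod p)) 1 f = ((f.eval 1 : ℤ) : ZMod p) := by
    simpa using Polynomial.eval₂_at_one (Int.castRingHom (ZMod p)) (p := f)
  rw [heval, ZMod.intCast_zmod_eq_zero_iff_dvd] at hy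
  obtain ⟨m, hm⟩ := hy
  obtain ⟨q, hq⟩ := Polynomial.X_sub_C_dvd_sub_C_eval (a := (1:ℤ)) (p := f)
  have hf : f = (X - C 1) * q + C (f.eval 1) := by linear_combination hq
  rw [hf]
  rw [map_add, map_mul]
  apply Ideal.add_mem
  · apply Ideal.mul_mem_right
    apply Ideal.subset_span
    simp [pi, xbar, map_sub]
  · rw [hm]
    have : (Ideal.Quotient.mk (Ideal.span {cyclotomic p ℤ})) (C ((p:ℤ) * m)) = (p : R p) * (m : R p) := by
      push_cast [Polynomial.C_eq_intCast]
      simp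
    rw [this]
    obtain ⟨u, hu⟩ := pi_dvd_p p
    rw [hu]
    exact Ideal.mul_mem_right _ _ (Ideal.mul_mem_right _ _ (Ideal.subset_span rfl))

lemma span_pi_ne_top : Ideal.span {pi p} ≠ ⊤ := by
  intro h
  have h1 : (1 : R p) ∈ Ideal.span {pi p} := by rw [h]; trivial
  rw [Ideal.mem_span_singleton] at h1
  obtain ⟨t, ht⟩ := h1
  have := congrArg (φ p) ht
  simp [map_mul, pi, map_sub, φ_xbar] at this

lemma pi_ne_zero : pi p ≠ 0 := by
  intro h
  have := congrArg (ψ p) h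
  rw [pi, map_sub, ψ_xbar, map_one, map_zero, sub_eq_zero] at this
  exact (hzeta p).ne_one hp.out.one_lt this

variable {p}

lemma xbar_pow_inj {n : ℕ} (a : Fin n → ZMod p) (ha : Function.Injective a) :
    Function.Injective fun i => (xbar p) ^ (a i).val := by
  intro i i' h
  have h2 : (zeta p) ^ (a i).val = (zeta p) ^ (a i').val := by
    have := congrArg (ψ p) h
    simpa [map_pow, ψ_xbar] using this
  have h3 := (hzeta p).pow_inj (ZMod.val_lt _) (ZMod.val_lt _) h2
  exact ha (ZMod.val_injective p h3)

lemma key {n : ℕ} (a b : Fin n → ZMod p) (ha : Function.Injective a)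
    (hb : Function.Injective b) (c : Fin n → R p)
    (hc : (Matrix.of fun i j => (xbar p) ^ ((a i).val * (b j).val)).mulVec c = 0) :
    ∀ j, φ p (c j) = 0 := by
  classical
  by_contra hcon
  push_neg at hcon
  obtain ⟨j₀, hj₀⟩ := hcon
  set F : Polynomial (R p) := ∑ j : Fin n, C (c j) * X ^ ((b j).val) with hF
  have hbv : Function.Injective fun j => (b j).val :=
    fun j j' h => hb (ZMod.val_injective p h)
  have hcoeffF : ∀ j, F.coeff ((b j).val) = c j := by
    intro j
    rw [hF, Polynomial.finset_sum_coeff]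
    rw [Finset.sum_eq_single j]
    · simp [Polynomial.coeff_C_mul, Polynomial.coeff_X_pow]
    · intro j' _ hne
      have : (b j).val ≠ (b j').val := fun h => hne (hbv h.symm)
      simp [Polynomial.coeff_C_mul, Polynomial.coeff_X_pow, this]
    · intro h; exact absurd (Finset.mem_univ j) h
  have hFne : F ≠ 0 := by
    intro h
    apply hj₀
    have := hcoeffF j₀
    rw [h, Polynomial.coeff_zero] at this
    rw [← this, map_zero]
  have hroot : ∀ i, F.IsRoot ((xbar p) ^ (a i).val) := by
    intro i
    have h1 := congrFun hc i
    simp only [Matrix.mulVec, dotProduct, Matrix.of_apply, Pi.zero_apply] at h1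
    simp only [IsRoot, hF, Polynomial.eval_finset_sum, Polynomial.eval_mul,
      Polynomial.eval_C, Polynomial.eval_pow, Polynomial.eval_X, ← pow_mul]
    rw [← h1]
    exact Finset.sum_congr rfl fun j _ => mul_comm _ _
  have hdvdprod : (∏ i : Fin n, (X - C ((xbar p) ^ (a i).val))) ∣ F := by
    have hle : (Multiset.map (fun i => (xbar p) ^ (a i).val) Finset.univ.val) ≤ F.roots := by
      rw [Multiset.le_iff_count]
      intro x
      by_cases hx : x ∈ Multiset.map (fun i => (xbar p) ^ (a i).val) Finset.univ.val
      · obtain ⟨i, _, rfl⟩ := Multiset.mem_map.mp hx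
        rw [Multiset.count_map_eq_count' _ _ (xbar_pow_inj a ha)]
        have h1 : Multiset.count i Finset.univ.val = 1 :=
          Multiset.count_eq_one_of_mem Finset.univ.nodup (Finset.mem_univ i)
        rw [h1, Polynomial.count_roots]
        exact (Polynomial.rootMultiplicity_pos hFne).mpr (hroot i)
      · rw [Multiset.count_eq_zero_of_notMem hx]
        exact Nat.zero_le _
    have := (Multiset.prod_X_sub_C_dvd_iff_le_roots hFne _).mpr hle
    rwa [Multiset.map_map] at this
  set G : Polynomial (ZMod p) := F.map (φ p) with hG
  have hdvdG : (X - 1 : Polynomial (ZMod p)) ^ n ∣ G := by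
    have h2 := Polynomial.map_dvd (φ p) hdvdprod
    have h3 : (∏ i : Fin n, (X - C ((xbar p) ^ (a i).val))).map (φ p)
        = (X - 1 : Polynomial (ZMod p)) ^ n := by
      rw [← Polynomial.coe_mapRingHom, map_prod]
      have : ∀ i : Fin n, (mapRingHom (φ p)) (X - C ((xbar p) ^ (a i).val))
          = (X - 1 : Polynomial (ZMod p)) := by
        intro i
        simp [map_sub, map_pow, φ_xbar]
      rw [Finset.prod_congr rfl fun i _ => this i]
      simp
    rwa [h3] at h2
  have hGne : G ≠ 0 := by
    intro h
    apply hj₀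
    have : G.coeff ((b j₀).val) = φ p (c j₀) := by
      rw [hG, Polynomial.coeff_map, hcoeffF]
    rw [h, Polynomial.coeff_zero] at this
    exact this.symm
  have hGsupp : G.support ⊆ Finset.image (fun j => (b j).val) Finset.univ := by
    intro m hm
    rw [Polynomial.mem_support_iff, hG, Polynomial.coeff_map] at hm
    have hFm : F.coeff m ≠ 0 := fun h => hm (by rw [h, map_zero])
    by_contra hmem
    apply hFm
    rw [hF, Polynomial.finset_sum_coeff]
    apply Finset.sum_eq_zero
    intro j _
    have : m ≠ (b j).val := by
      intro h; exact hmem (Finset.mem_image.mpr ⟨j, Finset.mem_univ j, h.symm⟩)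
    simp [Polynomial.coeff_C_mul, Polynomial.coeff_X_pow, this]
  refine fewTerms p n G hGne ?_ ?_ hdvdG
  · intro m hm
    obtain ⟨j, _, rfl⟩ := Finset.mem_image.mp (hGsupp hm)
    exact ZMod.val_lt _
  · calc G.support.card ≤ (Finset.image (fun j => (b j).val) Finset.univ).card :=
          Finset.card_le_card hGsupp
      _ ≤ Finset.univ.card := Finset.card_image_le
      _ = n := Finset.card_univ.trans (Fintype.card_fin n)

theorem cheb_det {n : ℕ} (a b : Fin n → ZMod p) (ha : Function.Injective a)
    (hb : Function.Injective b) :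
    (Matrix.of fun i j : Fin n => (zeta p) ^ ((a i).val * (b j).val)).det ≠ 0 := by
  classical
  intro hdet
  set M : Matrix (Fin n) (Fin n) (R p) :=
    Matrix.of fun i j => (xbar p) ^ ((a i).val * (b j).val) with hM
  have hdetR : M.det = 0 := by
    apply ψ_injective p
    rw [map_zero, RingHom.map_det, RingHom.mapMatrix_apply]
    have : M.map (ψ p) = Matrix.of fun i j : Fin n => (zeta p) ^ ((a i).val * (b j).val) := by
      ext i j
      simp [hM, Matrix.map, map_pow, ψ_xbar]
    rw [this, hdet]
  obtain ⟨c, hc0, hc⟩ := (Matrix.exists_mulVec_eq_zero_iff).mpr hdetR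
  have hmem : ∀ (k : ℕ) (c : Fin n → R p), M.mulVec c = 0 → ∀ j,
      c j ∈ (Ideal.span {pi p}) ^ k := by
    intro k
    induction k with
    | zero => intro c _ j; simp
    | succ k ih =>
      intro c hc j
      have hall := key a b ha hb c hc
      choose d hd using fun j =>
        (Ideal.mem_span_singleton').mp (mem_span_pi_of_φ_eq_zero p _ (hall j))
      have hcd : M.mulVec d = 0 := by
        funext i
        have h1 : (M.mulVec d i) * pi p = 0 := by
          have h2 := congrFun hc i
          simp only [Matrix.mulVec, dotProduct, Pi.zero_apply] at h2 ⊢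
          rw [Finset.sum_mul, ← h2]
          apply Finset.sum_congr rfl
          intro j' _
          rw [← hd j']
          ring
        rcases mul_eq_zero.mp h1 with h | h
        · exact h
        · exact absurd h (pi_ne_zero p)
      rw [← hd j, pow_succ (Ideal.span {pi p}) k]
      exact Ideal.mul_mem_mul (ih d hcd j) (Ideal.subset_span rfl)
  apply hc0
  funext j
  show c j = 0
  have h1 : c j ∈ ⨅ k : ℕ, (Ideal.span {pi p}) ^ k :=
    Submodule.mem_iInf _ |>.mpr fun k => hmem k c hc j
  rwa [Ideal.iInf_pow_eq_bot_of_isDomain _ (span_pi_ne_top p), Ideal.mem_bot] at h1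

end ChebAux

namespace ChebAux
variable {p : ℕ} [hp : Fact p.Prime]

lemma zeta_pow_mod (m : ℕ) : zeta p ^ (m % p) = zeta p ^ m := by
  conv_rhs => rw [← Nat.mod_add_div m p, pow_add, pow_mul, (hzeta p).pow_eq_one, one_pow, mul_one]

lemma zeta_pow_val_mul (k ℓ : ZMod p) :
    Complex.exp (2 * Real.pi * Complex.I * ((k * ℓ).val : ℂ) / p)
      = zeta p ^ (k.val * ℓ.val) := by
  have h1 : ∀ m : ℕ, Complex.exp (2 * Real.pi * Complex.I * (m : ℂ) / p) = zeta p ^ m := by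
    intro m
    rw [zeta, ← Complex.exp_nat_mul]
    ring_nf
  rw [h1, ZMod.val_mul, zeta_pow_mod]

lemma fourier_eq (f : ZMod p → ℂ) (k : ZMod p) :
    fourierZMod f k = (1 / Real.sqrt p) * ∑ ℓ : ZMod p, zeta p ^ (k.val * ℓ.val) * f ℓ := by
  rw [fourierZMod]
  congr 1
  exact Finset.sum_congr rfl fun ℓ _ => by rw [zeta_pow_val_mul]

lemma sqrt_p_ne_zero : ((Real.sqrt p : ℝ) : ℂ) ≠ 0 := by
  have h0 : (0:ℝ) < Real.sqrt p := Real.sqrt_pos.mpr (by exact_mod_cast hp.out.pos)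
  exact_mod_cast h0.ne'

theorem uncertainty (f : ZMod p → ℂ) (hf : f ≠ 0) :
    p + 1 ≤ (Finset.univ.filter fun x => f x ≠ 0).card
        + (Finset.univ.filter fun k => fourierZMod f k ≠ 0).card := by
  classical
  set S := Finset.univ.filter fun x => f x ≠ 0 with hS
  set n := S.card with hn
  have hn1 : 1 ≤ n := by
    rcases Function.ne_iff.mp hf with ⟨x, hx⟩
    refine Finset.card_pos.mpr ⟨x, ?_⟩
    simpa [hS] using hx
  set Z := Finset.univ.filter fun k => fourierZMod f k = 0 with hZ
  have hcardsplit : Z.card + (Finset.univ.filter fun k => fourierZMod f k ≠ 0).card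
      = p := by
    rw [hZ]
    rw [Finset.card_filter_add_card_filter_not (fun k => fourierZMod f k = 0)]
    simp [ZMod.card]
  have hZlt : Z.card < n := by
    by_contra hge
    push_neg at hge
    obtain ⟨Z₀, hZ₀sub, hZ₀card⟩ := Finset.exists_subset_card_eq hge
    let eS : S ≃ Fin n := S.equivFinOfCardEq rfl
    let eZ : Z₀ ≃ Fin n := Z₀.equivFinOfCardEq hZ₀card
    set b : Fin n → ZMod p := fun j => ((eS.symm j : S) : ZMod p) with hb
    set a : Fin n → ZMod p := fun i => ((eZ.symm i : Z₀) : ZMod p) with ha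
    have hbinj : Function.Injective b :=
      fun j j' h => eS.symm.injective (Subtype.ext h)
    have hainj : Function.Injective a :=
      fun i i' h => eZ.symm.injective (Subtype.ext h)
    set c : Fin n → ℂ := fun j => f (b j) with hc
    have hc0 : c ≠ 0 := by
      intro h
      have hj : c ⟨0, hn1⟩ = 0 := by rw [h]; rfl
      have hmem : b ⟨0, hn1⟩ ∈ S := (eS.symm ⟨0, hn1⟩).2
      rw [hS, Finset.mem_filter] at hmem
      exact hmem.2 hj
    have hmv : (Matrix.of fun i j : Fin n =>
        zeta p ^ ((a i).val * (b j).val)).mulVec c = 0 := by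
      funext i
      have hZi : fourierZMod f (a i) = 0 := by
        have hmem : a i ∈ Z := hZ₀sub (eZ.symm i).2
        rw [hZ, Finset.mem_filter] at hmem
        exact hmem.2
      have hsum : ∑ ℓ : ZMod p, zeta p ^ ((a i).val * ℓ.val) * f ℓ = 0 := by
        have h1 : (1 / (Real.sqrt p : ℂ)) *
            ∑ ℓ : ZMod p, zeta p ^ ((a i).val * ℓ.val) * f ℓ = 0 := by
          rw [← fourier_eq f (a i)]; exact hZi
        rcases mul_eq_zero.mp h1 with h | h
        · exfalso
          apply sqrt_p_ne_zero (p := p)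
          simpa [one_div, inv_eq_zero] using h
        · exact h
      have hrestr : ∑ ℓ ∈ S, zeta p ^ ((a i).val * ℓ.val) * f ℓ
          = ∑ ℓ : ZMod p, zeta p ^ ((a i).val * ℓ.val) * f ℓ := by
        apply Finset.sum_subset (Finset.subset_univ S)
        intro x _ hx
        rw [hS, Finset.mem_filter] at hx
        push_neg at hx
        rw [hx (Finset.mem_univ x), mul_zero]
      have hreindex : ∑ j : Fin n, zeta p ^ ((a i).val * (b j).val) * f (b j)
          = ∑ ℓ ∈ S, zeta p ^ ((a i).val * ℓ.val) * f ℓ := by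
        rw [← Finset.sum_coe_sort S (fun ℓ => zeta p ^ ((a i).val * ℓ.val) * f ℓ)]
        exact Fintype.sum_equiv eS.symm _ _ (fun j => rfl)
      have hunfold : (Matrix.of fun i j : Fin n =>
          zeta p ^ ((a i).val * (b j).val)).mulVec c i
          = ∑ j : Fin n, zeta p ^ ((a i).val * (b j).val) * c j := rfl
      rw [hunfold, Pi.zero_apply]
      rw [show (fun j => zeta p ^ ((a i).val * (b j).val) * c j)
            = fun j => zeta p ^ ((a i).val * (b j).val) * f (b j) from rfl] at *
      rw [hreindex, hrestr, hsum]
    have hdet := (Matrix.exists_mulVec_eq_zero_iff).mp ⟨c, hc0, hmv⟩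
    exact cheb_det a b hainj hbinj hdet
  omega

end ChebAux

namespace ChebAux
variable {p : ℕ} [hp : Fact p.Prime]

theorem no_disjoint (u v : ZMod p → ℂ) (hu : u ≠ 0) (hv : v ≠ 0)
    (h1 : ∀ x, u x * v x = 0)
    (h2 : ∀ k, fourierZMod u k * fourierZMod (fun x => v (-x)) k = 0) : False := by
  classical
  set vc : ZMod p → ℂ := fun x => v (-x) with hvc
  have hvc0 : vc ≠ 0 := by
    intro h
    apply hv
    funext x
    have := congrFun h (-x)
    simpa [hvc] using this
  have hU := uncertainty u hu
  have hV := uncertainty vc hvc0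
  have hcardvc : (Finset.univ.filter fun x => vc x ≠ 0).card
      = (Finset.univ.filter fun x => v x ≠ 0).card := by
    apply Finset.card_bij (fun x _ => -x)
    · intro x hx
      simp only [Finset.mem_filter, Finset.mem_univ, true_and] at hx ⊢
      simpa [hvc] using hx
    · intro x _ y _ h
      exact neg_injective h
    · intro y hy
      simp only [Finset.mem_filter, Finset.mem_univ, true_and] at hy
      refine ⟨-y, ?_, by simp⟩
      simp only [Finset.mem_filter, Finset.mem_univ, true_and]
      simpa [hvc] using hy
  have huniv : (Finset.univ : Finset (ZMod p)).card = p := by simp [ZMod.card]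
  have hd1 : (Finset.univ.filter fun x => u x ≠ 0).card
      + (Finset.univ.filter fun x => v x ≠ 0).card ≤ p := by
    rw [← Finset.card_union_of_disjoint ?hdisj]
    case hdisj =>
      rw [Finset.disjoint_left]
      intro x hx hx'
      simp only [Finset.mem_filter, Finset.mem_univ, true_and] at hx hx'
      rcases mul_eq_zero.mp (h1 x) with h | h
      · exact hx h
      · exact hx' h
    calc _ ≤ (Finset.univ : Finset (ZMod p)).card :=
          Finset.card_le_card (Finset.subset_univ _)
      _ = p := huniv
  have hd2 : (Finset.univ.filter fun k => fourierZMod u k ≠ 0).card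
      + (Finset.univ.filter fun k => fourierZMod vc k ≠ 0).card ≤ p := by
    rw [← Finset.card_union_of_disjoint ?hdisj2]
    case hdisj2 =>
      rw [Finset.disjoint_left]
      intro k hk hk'
      simp only [Finset.mem_filter, Finset.mem_univ, true_and] at hk hk'
      rcases mul_eq_zero.mp (h2 k) with h | h
      · exact hk h
      · exact hk' h
    calc _ ≤ (Finset.univ : Finset (ZMod p)).card :=
          Finset.card_le_card (Finset.subset_univ _)
      _ = p := huniv
  omega

end ChebAux

/-- **Proposition 6.4 (Haagerup).** Let `p` be prime, `E = ℂ^{𝔽_p}` with the sup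
norm, and `E_{≥1} = {f | ‖f‖_∞ ≥ 1}`. Then the map
`Φ : E_{≥1} × E_{≥1} → E × E`, `Φ (f, g) = (f·g, f̂·(ǧ)^)` (with `ǧ x := g (-x)`),
is proper: the preimage of every compact set is compact. -/
theorem phi_isProper (p : ℕ) (hp : p.Prime) :
    haveI : NeZero p := ⟨hp.ne_zero⟩
    ∀ K : Set ((ZMod p → ℂ) × (ZMod p → ℂ)), IsCompact K →
      IsCompact ((fun fg : {fg : (ZMod p → ℂ) × (ZMod p → ℂ) //
          1 ≤ ‖fg.1‖ ∧ 1 ≤ ‖fg.2‖} =>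
        ((fun x => fg.val.1 x * fg.val.2 x),
          (fun k => fourierZMod fg.val.1 k *
            fourierZMod (fun x => fg.val.2 (-x)) k))) ⁻¹' K) := by
  haveI hfact : Fact p.Prime := ⟨hp⟩
  haveI : NeZero p := ⟨hp.ne_zero⟩
  intro K hK
  classical
  set Φ : (ZMod p → ℂ) × (ZMod p → ℂ) → (ZMod p → ℂ) × (ZMod p → ℂ) :=
    fun x => ((fun t => x.1 t * x.2 t),
      (fun k => fourierZMod x.1 k * fourierZMod (fun y => x.2 (-y)) k)) with hΦ
  -- continuity of the Fourier transform as a map (ZMod p → ℂ) → (ZMod p → ℂ)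
  have hfour_cont : Continuous fun f : (ZMod p → ℂ) => (fun k => fourierZMod f k : (ZMod p → ℂ)) := by
    apply continuous_pi
    intro k
    unfold fourierZMod
    exact continuous_const.mul (continuous_finset_sum _ fun ℓ _ =>
      continuous_const.mul (continuous_apply ℓ))
  have hΦcont : Continuous Φ := by
    apply Continuous.prodMk
    · exact continuous_pi fun t =>
        ((continuous_apply t).comp continuous_fst).mul
          ((continuous_apply t).comp continuous_snd)
    · apply continuous_pi
      intro k
      have hc1 : Continuous fun x : (ZMod p → ℂ) × (ZMod p → ℂ) => fourierZMod x.1 k :=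
        ((continuous_apply k).comp hfour_cont).comp continuous_fst
      have hrefl : Continuous fun x : (ZMod p → ℂ) × (ZMod p → ℂ) => (fun y => x.2 (-y) : (ZMod p → ℂ)) :=
        continuous_pi fun y => (continuous_apply (-y)).comp continuous_snd
      have hc2 : Continuous fun x : (ZMod p → ℂ) × (ZMod p → ℂ) => fourierZMod (fun y => x.2 (-y)) k :=
        ((continuous_apply k).comp hfour_cont).comp hrefl
      exact hc1.mul hc2
  -- scaling
  have hfour_smul : ∀ (c : ℂ) (f : (ZMod p → ℂ)) (k : ZMod p),
      fourierZMod (fun x => c * f x) k = c * fourierZMod f k := by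
    intro c f k
    unfold fourierZMod
    simp only [Finset.mul_sum]
    exact Finset.sum_congr rfl fun ℓ _ => by ring
  have hscale : ∀ (c d : ℂ) (f g : (ZMod p → ℂ)), Φ (c • f, d • g) = (c * d) • Φ (f, g) := by
    intro c d f g
    apply Prod.ext
    · funext t
      simp only [hΦ, Prod.smul_fst, Pi.smul_apply, smul_eq_mul]
      ring
    · funext k
      simp only [hΦ, Prod.smul_snd, Pi.smul_apply, smul_eq_mul]
      rw [show (c • f : ZMod p → ℂ) = fun y => c * f y from rfl,
        hfour_smul d (fun y => g (-y)) k, hfour_smul c f k]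
      ring
  set T : Set ((ZMod p → ℂ) × (ZMod p → ℂ)) := {x | 1 ≤ ‖x.1‖ ∧ 1 ≤ ‖x.2‖} with hT
  have hTclosed : IsClosed T := by
    have h1 : IsClosed {x : (ZMod p → ℂ) × (ZMod p → ℂ) | 1 ≤ ‖x.1‖} :=
      isClosed_le continuous_const (continuous_fst.norm)
    have h2 : IsClosed {x : (ZMod p → ℂ) × (ZMod p → ℂ) | 1 ≤ ‖x.2‖} :=
      isClosed_le continuous_const (continuous_snd.norm)
    exact h1.inter h2
  set A : Set ((ZMod p → ℂ) × (ZMod p → ℂ)) := T ∩ Φ ⁻¹' K with hA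
  have hAclosed : IsClosed A := hTclosed.inter (hK.isClosed.preimage hΦcont)
  have hAbdd : Bornology.IsBounded A := by
    by_contra hnb
    have hseq : ∀ m : ℕ, ∃ x, x ∈ A ∧ (m : ℝ) < ‖x‖ := by
      intro m
      by_contra hcon
      push_neg at hcon
      exact hnb (isBounded_iff_forall_norm_le.mpr ⟨m, hcon⟩)
    choose x hxA hxn using hseq
    obtain ⟨C, hC⟩ := hK.isBounded.exists_norm_le
    have hf1 : ∀ m, 1 ≤ ‖(x m).1‖ := fun m => (hxA m).1.1
    have hg1 : ∀ m, 1 ≤ ‖(x m).2‖ := fun m => (hxA m).1.2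
    set M : ℕ → ℝ := fun m => ‖(x m).1‖ * ‖(x m).2‖ with hM
    have hMpos : ∀ m : ℕ, 0 < M m := by
      intro m
      exact mul_pos (lt_of_lt_of_le one_pos (hf1 m)) (lt_of_lt_of_le one_pos (hg1 m))
    have hMlarge : ∀ m : ℕ, (m : ℝ) < M m := by
      intro m
      have h0 : ‖x m‖ = max ‖(x m).1‖ ‖(x m).2‖ := rfl
      have hmax : max ‖(x m).1‖ ‖(x m).2‖ ≤ M m := by
        rw [max_le_iff]
        constructor
        · calc ‖(x m).1‖ = ‖(x m).1‖ * 1 := (mul_one _).symm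
            _ ≤ M m := by
              apply mul_le_mul_of_nonneg_left (hg1 m)
              positivity
        · calc ‖(x m).2‖ = 1 * ‖(x m).2‖ := (one_mul _).symm
            _ ≤ M m := by
              apply mul_le_mul_of_nonneg_right (hf1 m)
              positivity
      calc (m : ℝ) < ‖x m‖ := hxn m
        _ = _ := h0
        _ ≤ M m := hmax
    set u : ℕ → (ZMod p → ℂ) := fun m => ((‖(x m).1‖ : ℂ))⁻¹ • (x m).1 with hu
    set v : ℕ → (ZMod p → ℂ) := fun m => ((‖(x m).2‖ : ℂ))⁻¹ • (x m).2 with hv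
    have hunorm : ∀ m, ‖u m‖ = 1 := by
      intro m
      rw [hu]
      simp only [norm_smul, norm_inv, Complex.norm_real, Real.norm_eq_abs,
        abs_of_nonneg (norm_nonneg _)]
      field_simp
      exact div_self (ne_of_gt (lt_of_lt_of_le one_pos (hf1 m)))
    have hvnorm : ∀ m, ‖v m‖ = 1 := by
      intro m
      rw [hv]
      simp only [norm_smul, norm_inv, Complex.norm_real, Real.norm_eq_abs,
        abs_of_nonneg (norm_nonneg _)]
      field_simp
      exact div_self (ne_of_gt (lt_of_lt_of_le one_pos (hg1 m)))
    have hball : ∀ m, (u m, v m) ∈ Metric.closedBall (0 : (ZMod p → ℂ) × (ZMod p → ℂ)) 1 := by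
      intro m
      rw [Metric.mem_closedBall, dist_zero_right]
      have : ‖(u m, v m)‖ = max ‖u m‖ ‖v m‖ := rfl
      rw [this, hunorm, hvnorm]
      simp
    obtain ⟨W, hWball, φs, hφmono, hφtend⟩ :=
      (isCompact_closedBall (0 : (ZMod p → ℂ) × (ZMod p → ℂ)) 1).tendsto_subseq hball
    -- W = (U, V)
    have hUnorm : ‖W.1‖ = 1 := by
      have h1 : Filter.Tendsto (fun m => ‖(u (φs m), v (φs m)).1‖)
          Filter.atTop (nhds ‖W.1‖) :=
        ((continuous_fst.norm.tendsto W).comp hφtend)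
      have h2 : (fun m => ‖(u (φs m), v (φs m)).1‖) = fun _ => (1:ℝ) :=
        funext fun m => hunorm _
      rw [h2] at h1
      exact (tendsto_nhds_unique h1 tendsto_const_nhds)
    have hVnorm : ‖W.2‖ = 1 := by
      have h1 : Filter.Tendsto (fun m => ‖(u (φs m), v (φs m)).2‖)
          Filter.atTop (nhds ‖W.2‖) :=
        ((continuous_snd.norm.tendsto W).comp hφtend)
      have h2 : (fun m => ‖(u (φs m), v (φs m)).2‖) = fun _ => (1:ℝ) :=
        funext fun m => hvnorm _
      rw [h2] at h1
      exact (tendsto_nhds_unique h1 tendsto_const_nhds)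
    -- Φ at normalized pair
    have hΦuv : ∀ m, Φ (u m, v m)
        = ((‖(x m).1‖ : ℂ)⁻¹ * (‖(x m).2‖ : ℂ)⁻¹) • Φ ((x m).1, (x m).2) :=
      fun m => hscale _ _ _ _
    have hΦnorm : ∀ m, ‖Φ (u m, v m)‖ ≤ C / M m := by
      intro m
      rw [hΦuv m, norm_smul]
      have hxK : Φ ((x m).1, (x m).2) ∈ K := (hxA m).2
      have hbound : ‖Φ ((x m).1, (x m).2)‖ ≤ C := hC _ hxK
      have hcoef : ‖(‖(x m).1‖ : ℂ)⁻¹ * (‖(x m).2‖ : ℂ)⁻¹‖ = (M m)⁻¹ := by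
        rw [norm_mul, norm_inv, norm_inv, Complex.norm_real, Complex.norm_real,
          Real.norm_eq_abs, Real.norm_eq_abs, abs_of_nonneg (norm_nonneg _),
          abs_of_nonneg (norm_nonneg _), hM, mul_inv]
      rw [hcoef, div_eq_inv_mul]
      exact mul_le_mul_of_nonneg_left hbound (by positivity)
    have hMtop : Filter.Tendsto (fun m => M (φs m)) Filter.atTop Filter.atTop := by
      apply Filter.tendsto_atTop_mono
        (fun m : ℕ => ((Nat.cast_le.mpr hφmono.le_apply).trans (hMlarge (φs m)).le :
          (m : ℝ) ≤ M (φs m)))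
      exact tendsto_natCast_atTop_atTop
    have hzero : Filter.Tendsto ((fun m => Φ (u m, v m)) ∘ φs)
        Filter.atTop (nhds 0) := by
      rw [tendsto_zero_iff_norm_tendsto_zero]
      apply squeeze_zero (fun m => norm_nonneg _) (fun m => hΦnorm (φs m))
      exact Filter.Tendsto.div_atTop tendsto_const_nhds hMtop
    have hΦW : Φ W = 0 := by
      have h1 : Filter.Tendsto ((fun m => Φ (u m, v m)) ∘ φs)
          Filter.atTop (nhds (Φ W)) := (hΦcont.tendsto W).comp hφtend
      exact tendsto_nhds_unique h1 hzero
    have hW1ne : W.1 ≠ 0 := fun h => by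
      rw [h, norm_zero] at hUnorm
      exact one_ne_zero hUnorm.symm
    have hW2ne : W.2 ≠ 0 := fun h => by
      rw [h, norm_zero] at hVnorm
      exact one_ne_zero hVnorm.symm
    apply ChebAux.no_disjoint W.1 W.2 hW1ne hW2ne
    · intro t
      have := congrFun (congrArg Prod.fst hΦW) t
      simpa [hΦ] using this
    · intro k
      have := congrFun (congrArg Prod.snd hΦW) k
      simpa [hΦ] using this
  have hAcompact : IsCompact A := Metric.isCompact_of_isClosed_isBounded hAclosed hAbdd
  have hpre : (fun fg : {fg : (ZMod p → ℂ) × (ZMod p → ℂ) // 1 ≤ ‖fg.1‖ ∧ 1 ≤ ‖fg.2‖} =>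
        ((fun x => fg.val.1 x * fg.val.2 x),
          (fun k => fourierZMod fg.val.1 k *
            fourierZMod (fun x => fg.val.2 (-x)) k))) ⁻¹' K
      = Subtype.val ⁻¹' A := by
    ext y
    simp only [Set.mem_preimage, hA, Set.mem_inter_iff]
    constructor
    · intro h
      exact ⟨y.2, h⟩
    · intro h
      exact h.2
  rw [hpre, Subtype.isCompact_iff]
  have himg : ((Subtype.val : {fg : (ZMod p → ℂ) × (ZMod p → ℂ) //
      1 ≤ ‖fg.1‖ ∧ 1 ≤ ‖fg.2‖} → (ZMod p → ℂ) × (ZMod p → ℂ)) ''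
      (Subtype.val ⁻¹' A)) = A := by
    apply Set.eq_of_subset_of_subset
    · rintro _ ⟨y, hy, rfl⟩
      exact hy
    · intro z hz
      have hzT : 1 ≤ ‖z.1‖ ∧ 1 ≤ ‖z.2‖ := by
        have h2 := hz
        rw [hA] at h2
        exact h2.1
      exact ⟨⟨z, hzT⟩, hz, rfl⟩
  rw [himg]
  exact hAcompact
end

section
/- Let p be an odd prime, H a proper subgroup of 𝔽_p*, and c : H → ℂ* a non-trivial character. Let V₁ := {f : 𝔽_p → ℂ | f is (H,c)-equivariant and f(1) = 1}, V̄₁ := {g : 𝔽_p → ℂ | g is (H,c̄)-equivariant and g(1) = 1}, and W₁ := {(f₀,g₀) | f₀, g₀ : 𝔽_p → ℂ are H-invariant, f₀(0) = g₀(0) = 0, f₀(1) = 1, and ∑_{x ∈ 𝔽_p} f₀(x) = ∑_{x ∈ 𝔽_p} g₀(x)}. Then the map Φ(f,g) = (f·g, f̂·(ǧ)^), with ǧ(x) := g(−x), maps V₁ × V̄₁ into W₁, and Φ : V₁ × V̄₁ → W₁ is a proper map (preimages of compact sets are compact). -/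
/-- `f : 𝔽_p → ℂ` is `(H,c)`-equivariant: `f (h x) = c h · f x`. -/
def IsEquivariant {p : ℕ} (H : Subgroup (ZMod p)ˣ) (c : H →* ℂˣ)
    (f : ZMod p → ℂ) : Prop :=
  ∀ (h : H) (x : ZMod p), f (((h : (ZMod p)ˣ) : ZMod p) * x) = (c h : ℂ) * f x

/-- `f : 𝔽_p → ℂ` is `(H,c̄)`-equivariant, `c̄` the complex conjugate character. -/
def IsConjEquivariant {p : ℕ} (H : Subgroup (ZMod p)ˣ) (c : H →* ℂˣ)
    (g : ZMod p → ℂ) : Prop :=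
  ∀ (h : H) (x : ZMod p),
    g (((h : (ZMod p)ˣ) : ZMod p) * x) = (starRingEnd ℂ) (c h : ℂ) * g x

/-- `f : 𝔽_p → ℂ` is `H`-invariant: `f (h x) = f x`. -/
def IsHInvariant {p : ℕ} (H : Subgroup (ZMod p)ˣ) (f : ZMod p → ℂ) : Prop :=
  ∀ (h : H) (x : ZMod p), f (((h : (ZMod p)ˣ) : ZMod p) * x) = f x



open MvPolynomial Finset

variable {n : ℕ}

noncomputable def substPair (i j : Fin n) : MvPolynomial (Fin n) ℤ →ₐ[ℤ] MvPolynomial (Fin n) ℤ :=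
  aeval (fun l => if l = j then X i else X l)

lemma substPair_X (i j l : Fin n) : substPair i j (X l) = if l = j then X i else X l := by
  simp [substPair]

lemma dvd_sub_substPair (i j : Fin n) (f : MvPolynomial (Fin n) ℤ) :
    (X i - X j) ∣ f - substPair i j f := by
  induction f using MvPolynomial.induction_on with
  | C a => simp [substPair]
  | add f g hf hg =>
      have h : f + g - substPair i j (f + g) = (f - substPair i j f) + (g - substPair i j g) := by
        rw [map_add]; ring
      rw [h]; exact dvd_add hf hg
  | mul_X f l hf =>
      have h : f * X l - substPair i j (f * X l)
          = (f - substPair i j f) * X l + substPair i j f * (X l - substPair i j (X l)) := by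
        rw [map_mul]; ring
      rw [h]
      refine dvd_add (Dvd.dvd.mul_right hf _) (Dvd.dvd.mul_left ?_ _)
      rw [substPair_X]
      by_cases hl : l = j
      · subst hl; rw [if_pos rfl]; exact ⟨-1, by ring⟩
      · simp [hl]

lemma substPair_dvd (i j : Fin n) (f : MvPolynomial (Fin n) ℤ) (h : substPair i j f = 0) :
    (X i - X j) ∣ f := by
  have h2 := dvd_sub_substPair i j f
  rwa [h, sub_zero] at h2

lemma X_sub_X_ne_zero {u v : Fin n} (h : u ≠ v) :
    (X u - X v : MvPolynomial (Fin n) ℤ) ≠ 0 := by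
  intro hz
  exact h (MvPolynomial.X_injective (sub_eq_zero.mp hz))

lemma substPair_X_sub_X_ne_zero {u v : Fin n} {q : Fin n × Fin n} (hq : q.1 < q.2)
    (huv : u < v) (hne : (u, v) ≠ q) :
    substPair q.1 q.2 (X u - X v) ≠ 0 := by
  rw [map_sub, substPair_X, substPair_X]
  by_cases h1 : u = q.2 <;> by_cases h2 : v = q.2
  · exact absurd (h1.trans h2.symm) (ne_of_lt huv)
  · rw [if_pos h1, if_neg h2]
    refine X_sub_X_ne_zero (ne_of_lt ?_)
    calc q.1 < q.2 := hq
    _ = u := h1.symm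
    _ < v := huv
  · rw [if_neg h1, if_pos h2]
    refine X_sub_X_ne_zero fun h => hne ?_
    rw [Prod.ext_iff]; exact ⟨h, h2⟩
  · rw [if_neg h1, if_neg h2]
    exact X_sub_X_ne_zero (ne_of_lt huv)

lemma prod_pairs_dvd (s : Finset (Fin n × Fin n)) (hs : ∀ q ∈ s, q.1 < q.2)
    (f : MvPolynomial (Fin n) ℤ) (hf : ∀ q ∈ s, substPair q.1 q.2 f = 0) :
    (∏ q ∈ s, (X q.2 - X q.1)) ∣ f := by
  induction s using Finset.induction_on generalizing f with
  | empty => simp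
  | @insert q s hq ih =>
      have hq12 : q.1 < q.2 := hs q (mem_insert_self q s)
      obtain ⟨g, hg⟩ : (X q.2 - X q.1 : MvPolynomial (Fin n) ℤ) ∣ f := by
        have := substPair_dvd q.1 q.2 f (hf q (mem_insert_self q s))
        rwa [← neg_sub (X q.2) (X q.1), neg_dvd] at this
      have hg' : ∀ q' ∈ s, substPair q'.1 q'.2 g = 0 := by
        intro q' hq'
        have h0 : substPair q'.1 q'.2 f = 0 := hf q' (mem_insert_of_mem hq')
        rw [hg, map_mul] at h0
        have hne : substPair q'.1 q'.2 (X q.2 - X q.1) ≠ 0 := by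
          have := substPair_X_sub_X_ne_zero (q := q') (hs q' (mem_insert_of_mem hq'))
            hq12 (by simp only [Prod.mk.eta]; rintro rfl; exact hq hq')
          rw [← neg_sub (X q.2) (X q.1), map_neg, neg_ne_zero] at this
          exact this
        exact (mul_eq_zero.mp h0).resolve_left hne
      rw [prod_insert hq, hg]
      exact mul_dvd_mul_left _ (ih (fun q' h => hs q' (mem_insert_of_mem h)) g hg')

lemma prod_pairs_eq {M : Type*} [CommMonoid M] (f : Fin n → Fin n → M) :
    (∏ q ∈ Finset.univ.filter (fun q : Fin n × Fin n => q.1 < q.2), f q.1 q.2)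
      = ∏ i, ∏ j ∈ Finset.Ioi i, f i j := by
  rw [Finset.prod_sigma' Finset.univ (fun i => Finset.Ioi i) (fun i j => f i j)]
  refine Finset.prod_nbij' (fun q => ⟨q.1, q.2⟩) (fun x => (x.1, x.2)) ?_ ?_ ?_ ?_ ?_
  · intro q hq
    simp only [Finset.mem_filter] at hq
    simp [Finset.mem_sigma, Finset.mem_Ioi, hq.2]
  · intro x hx
    simp only [Finset.mem_sigma, Finset.mem_Ioi] at hx
    simp [hx.2]
  · intro q hq; rfl
  · intro x hx; rfl
  · intro q hq; rfl

lemma geom_eval_one (m : ℕ) :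
    Polynomial.aeval (1 : ℤ) (∑ i ∈ Finset.range m, (Polynomial.X : Polynomial ℤ) ^ i) = m := by
  rw [map_sum]
  simp

lemma X_pow_sub_X_pow {u v : ℕ} (h : u < v) :
    (Polynomial.X : Polynomial ℤ) ^ v - Polynomial.X ^ u
      = Polynomial.X ^ u * (∑ i ∈ Finset.range (v - u), (Polynomial.X : Polynomial ℤ) ^ i)
        * (Polynomial.X - 1) := by
  rw [mul_assoc, geom_sum_mul, mul_sub, mul_one, ← pow_add, Nat.add_sub_cancel' h.le]

theorem cheb_det_ne_zero {p : ℕ} (hp : p.Prime) {ω : ℂ} (hω : IsPrimitiveRoot ω p)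
    (a k : Fin n → ℕ) (ha : StrictMono a) (hk : StrictMono k)
    (hap : ∀ i, a i < p) (hkp : ∀ i, k i < p) :
    Matrix.det (Matrix.of fun i j : Fin n => ω ^ (a i * k j)) ≠ 0 := by
  haveI : Fact p.Prime := ⟨hp⟩
  intro hdet
  classical
  set Pairs : Finset (Fin n × Fin n) := Finset.univ.filter (fun q => q.1 < q.2) with hPairs
  have hPmem : ∀ q ∈ Pairs, q.1 < q.2 := by intro q hq; simpa [hPairs] using hq
  set D : MvPolynomial (Fin n) ℤ :=
    (Matrix.of fun i j : Fin n => (X i : MvPolynomial (Fin n) ℤ) ^ (k j)).det with hD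
  have hsub : ∀ q ∈ Pairs, substPair q.1 q.2 D = 0 := by
    intro q hq
    rw [hD, AlgHom.map_det]
    apply Matrix.det_zero_of_row_eq (ne_of_lt (hPmem q hq))
    funext j
    show (substPair q.1 q.2) ((X q.1 : MvPolynomial (Fin n) ℤ) ^ k j)
        = (substPair q.1 q.2) ((X q.2 : MvPolynomial (Fin n) ℤ) ^ k j)
    rw [map_pow, map_pow, substPair_X, substPair_X, if_neg (ne_of_lt (hPmem q hq)), if_pos rfl]
  obtain ⟨Q, hQ⟩ := prod_pairs_dvd Pairs hPmem D hsub
  -- evaluation at powers of ω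
  have hφQ : (aeval fun i => ω ^ (a i)) Q = 0 := by
    have hφD : (aeval fun i => ω ^ (a i)) D = 0 := by
      rw [hD, AlgHom.map_det, ← hdet]
      congr 1
      funext i j
      simp only [AlgHom.mapMatrix_apply, Matrix.map_apply, Matrix.of_apply, map_pow, aeval_X]
      rw [← pow_mul, mul_comm (a i) (k j), pow_mul]
    rw [hQ, map_mul] at hφD
    have hV : (aeval fun i => ω ^ (a i))
        (∏ q ∈ Pairs, ((X q.2 : MvPolynomial (Fin n) ℤ) - X q.1)) ≠ 0 := by
      rw [map_prod]
      apply Finset.prod_ne_zero_iff.mpr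
      intro q hq
      simp only [map_sub, aeval_X]
      rw [sub_ne_zero]
      intro h
      exact absurd (hω.pow_inj (hap q.2) (hap q.1) h) (ne_of_gt (ha (hPmem q hq)))
    exact (mul_eq_zero.mp hφD).resolve_left hV
  -- the one-variable polynomial W and p ∣ N
  set W : Polynomial ℤ := (aeval fun i => (Polynomial.X : Polynomial ℤ) ^ (a i)) Q with hW
  set N : ℤ := (aeval fun _ : Fin n => (1 : ℤ)) Q with hN
  have hWω : Polynomial.aeval ω W = 0 := by
    have hcomp : (Polynomial.aeval ω).comp (aeval fun i => (Polynomial.X : Polynomial ℤ) ^ (a i))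
        = (aeval fun i => ω ^ (a i) : MvPolynomial (Fin n) ℤ →ₐ[ℤ] ℂ) := by
      apply MvPolynomial.algHom_ext
      intro i
      simp
    rw [hW, ← AlgHom.comp_apply, hcomp, hφQ]
  have hWone : Polynomial.aeval (1 : ℤ) W = N := by
    have hcomp : (Polynomial.aeval (1 : ℤ)).comp
          (aeval fun i => (Polynomial.X : Polynomial ℤ) ^ (a i))
        = (aeval fun _ : Fin n => (1 : ℤ) : MvPolynomial (Fin n) ℤ →ₐ[ℤ] ℤ) := by
      apply MvPolynomial.algHom_ext
      intro i
      simp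
    rw [hW, hN, ← AlgHom.comp_apply, hcomp]
  have hωint : IsIntegral ℤ ω := by
    refine ⟨Polynomial.X ^ p - Polynomial.C 1, Polynomial.monic_X_pow_sub_C 1 hp.ne_zero, ?_⟩
    simp [hω.pow_eq_one]
  have hpN : (p : ℤ) ∣ N := by
    have hdvd : Polynomial.cyclotomic p ℤ ∣ W := by
      rw [Polynomial.cyclotomic_eq_minpoly hω hp.pos]
      exact minpoly.isIntegrallyClosed_dvd hωint hWω
    obtain ⟨h1, hh1⟩ := hdvd
    refine ⟨Polynomial.aeval (1 : ℤ) h1, ?_⟩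
    rw [← hWone, hh1, map_mul]
    congr 1
    rw [Polynomial.coe_aeval_eq_eval]
    exact_mod_cast Polynomial.eval_one_cyclotomic_prime (R := ℤ) (p := p)
  -- specialization X i ↦ t^(i+1)
  have hQt := congrArg (aeval fun i : Fin n => (Polynomial.X : Polynomial ℤ) ^ ((i : ℕ) + 1)) hQ
  rw [map_mul] at hQt
  set q1 : Polynomial ℤ := (aeval fun i : Fin n => (Polynomial.X : Polynomial ℤ) ^ ((i : ℕ) + 1)) Q
    with hq1
  have hDt : (aeval fun i : Fin n => (Polynomial.X : Polynomial ℤ) ^ ((i : ℕ) + 1)) D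
      = (∏ j, (Polynomial.X : Polynomial ℤ) ^ (k j))
        * ∏ q ∈ Pairs, ((Polynomial.X : Polynomial ℤ) ^ (k q.2) - Polynomial.X ^ (k q.1)) := by
    rw [hD, AlgHom.map_det]
    have hentry : ((aeval fun i : Fin n => (Polynomial.X : Polynomial ℤ) ^ ((i : ℕ) + 1)).mapMatrix
          (Matrix.of fun i j : Fin n => (X i : MvPolynomial (Fin n) ℤ) ^ (k j)))
        = Matrix.of (fun i j : Fin n => (Polynomial.X : Polynomial ℤ) ^ (k j)
            * (Matrix.vandermonde
                (fun j : Fin n => (Polynomial.X : Polynomial ℤ) ^ (k j))).transpose i j) := by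
      funext i j
      simp only [AlgHom.mapMatrix_apply, Matrix.map_apply, Matrix.of_apply, map_pow, aeval_X,
        Matrix.transpose_apply, Matrix.vandermonde_apply]
      rw [← pow_mul, ← pow_mul, ← pow_add]
      congr 1
      ring
    rw [hentry, Matrix.det_mul_row, Matrix.det_transpose, Matrix.det_vandermonde,
      ← prod_pairs_eq (fun i j : Fin n =>
        (Polynomial.X : Polynomial ℤ) ^ (k j) - Polynomial.X ^ (k i)), ← hPairs]
  have hVt : (aeval fun i : Fin n => (Polynomial.X : Polynomial ℤ) ^ ((i : ℕ) + 1))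
        (∏ q ∈ Pairs, ((X q.2 : MvPolynomial (Fin n) ℤ) - X q.1))
      = ∏ q ∈ Pairs, ((Polynomial.X : Polynomial ℤ) ^ ((q.2 : ℕ) + 1)
          - Polynomial.X ^ ((q.1 : ℕ) + 1)) := by
    rw [map_prod]
    exact Finset.prod_congr rfl (fun q hq => by simp)
  rw [hDt, hVt] at hQt
  set E1 : Polynomial ℤ := ∏ q ∈ Pairs, (Polynomial.X ^ (k q.1)
      * ∑ i ∈ Finset.range (k q.2 - k q.1), (Polynomial.X : Polynomial ℤ) ^ i) with hE1
  set E2 : Polynomial ℤ := ∏ q ∈ Pairs, (Polynomial.X ^ ((q.1 : ℕ) + 1)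
      * ∑ i ∈ Finset.range (((q.2 : ℕ) + 1) - ((q.1 : ℕ) + 1)),
          (Polynomial.X : Polynomial ℤ) ^ i) with hE2
  have e1 : ∏ q ∈ Pairs, ((Polynomial.X : Polynomial ℤ) ^ (k q.2) - Polynomial.X ^ (k q.1))
      = E1 * ((Polynomial.X : Polynomial ℤ) - 1) ^ Pairs.card := by
    rw [hE1, ← Finset.prod_const, ← Finset.prod_mul_distrib]
    exact Finset.prod_congr rfl (fun q hq => X_pow_sub_X_pow (hk (hPmem q hq)))
  have e2 : ∏ q ∈ Pairs, ((Polynomial.X : Polynomial ℤ) ^ ((q.2 : ℕ) + 1)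
        - Polynomial.X ^ ((q.1 : ℕ) + 1))
      = E2 * ((Polynomial.X : Polynomial ℤ) - 1) ^ Pairs.card := by
    rw [hE2, ← Finset.prod_const, ← Finset.prod_mul_distrib]
    exact Finset.prod_congr rfl
      (fun q hq => X_pow_sub_X_pow (Nat.succ_lt_succ (hPmem q hq)))
  have hc : ((Polynomial.X : Polynomial ℤ) - 1) ^ Pairs.card ≠ 0 := by
    apply pow_ne_zero
    have h1 := Polynomial.X_sub_C_ne_zero (1 : ℤ)
    rwa [Polynomial.C_1] at h1
  have hkey : (∏ j, (Polynomial.X : Polynomial ℤ) ^ (k j)) * E1 = E2 * q1 := by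
    apply mul_left_cancel₀ hc
    calc ((Polynomial.X : Polynomial ℤ) - 1) ^ Pairs.card
          * ((∏ j, (Polynomial.X : Polynomial ℤ) ^ (k j)) * E1)
        = (∏ j, (Polynomial.X : Polynomial ℤ) ^ (k j))
          * (E1 * ((Polynomial.X : Polynomial ℤ) - 1) ^ Pairs.card) := by ring
      _ = (E2 * ((Polynomial.X : Polynomial ℤ) - 1) ^ Pairs.card) * q1 := by
          rw [← e1, ← e2]; exact hQt
      _ = ((Polynomial.X : Polynomial ℤ) - 1) ^ Pairs.card * (E2 * q1) := by ring
  have hq1one : Polynomial.aeval (1 : ℤ) q1 = N := by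
    have hcomp : (Polynomial.aeval (1 : ℤ)).comp
          (aeval fun i : Fin n => (Polynomial.X : Polynomial ℤ) ^ ((i : ℕ) + 1))
        = (aeval fun _ : Fin n => (1 : ℤ) : MvPolynomial (Fin n) ℤ →ₐ[ℤ] ℤ) := by
      apply MvPolynomial.algHom_ext
      intro i
      simp
    rw [hq1, hN, ← AlgHom.comp_apply, hcomp]
  rw [hE1, hE2] at hkey
  have hfin := congrArg (Polynomial.aeval (1 : ℤ)) hkey
  simp only [map_mul, map_prod, map_pow, Polynomial.aeval_X, one_pow, map_sum,
    Finset.prod_const_one, one_mul, Finset.sum_const, Finset.card_range, nsmul_eq_mul, mul_one,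
    hq1one] at hfin
  -- hfin : ∏ q in Pairs, (k q.2 - k q.1 : ℤ) = (∏ q in Pairs, ((q.2+1) - (q.1+1) : ℤ)) * N
  have hdvdP : (p : ℤ) ∣ ∏ q ∈ Pairs, ((k q.2 - k q.1 : ℕ) : ℤ) := by
    rw [hfin]
    exact Dvd.dvd.mul_left hpN _
  obtain ⟨q, hqmem, hqd⟩ := (Prime.dvd_finset_prod_iff (Nat.prime_iff_prime_int.mp hp) _).mp hdvdP
  have hqd' : p ∣ k q.2 - k q.1 := Int.natCast_dvd_natCast.mp hqd
  have hpos : 0 < k q.2 - k q.1 := Nat.sub_pos_of_lt (hk (hPmem q hqmem))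
  have hlt : k q.2 - k q.1 < p := lt_of_le_of_lt (Nat.sub_le _ _) (hkp q.2)
  exact absurd (Nat.le_of_dvd hpos hqd') (not_le.mpr hlt)


namespace FTaux

noncomputable def zet (p : ℕ) : ℂ := Complex.exp (2 * Real.pi * Complex.I / p)

lemma zet_prim {p : ℕ} [NeZero p] : IsPrimitiveRoot (zet p) p :=
  Complex.isPrimitiveRoot_exp p (NeZero.ne p)

lemma exp_eq_zet_pow {p : ℕ} [NeZero p] (n : ℕ) :
    Complex.exp (2 * Real.pi * Complex.I * (n : ℂ) / p) = zet p ^ n := by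
  rw [zet, ← Complex.exp_nat_mul]
  congr 1
  ring

lemma zet_pow_mod {p : ℕ} [NeZero p] (n : ℕ) : zet p ^ n = zet p ^ (n % p) := by
  conv_lhs => rw [← Nat.div_add_mod n p]
  rw [pow_add, pow_mul, zet_prim.pow_eq_one, one_pow, one_mul]

/-- the additive character -/
noncomputable def ech {p : ℕ} [NeZero p] (x : ZMod p) : ℂ := zet p ^ x.val

lemma ech_mul_val {p : ℕ} [NeZero p] (x y : ZMod p) : ech (x * y) = zet p ^ (x.val * y.val) := by
  rw [ech, ZMod.val_mul, ← zet_pow_mod]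

lemma ech_add {p : ℕ} [NeZero p] (x y : ZMod p) : ech (x + y) = ech x * ech y := by
  rw [ech, ech, ech, ZMod.val_add, ← zet_pow_mod, pow_add]

lemma fourierZMod_eq {p : ℕ} [NeZero p] (f : ZMod p → ℂ) (k : ZMod p) :
    fourierZMod f k = (1 / Real.sqrt p) * ∑ ℓ : ZMod p, ech (k * ℓ) * f ℓ := by
  rw [fourierZMod]
  congr 1
  apply Finset.sum_congr rfl
  intro ℓ _
  rw [ech, ← exp_eq_zet_pow]

lemma sum_ech {p : ℕ} [NeZero p] (hp : 1 < p) : ∑ x : ZMod p, ech x = 0 := by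
  have h : ∑ x : ZMod p, ech x = ∑ i ∈ Finset.range p, zet p ^ i := by
    refine Finset.sum_bij (fun x _ => x.val) ?_ ?_ ?_ ?_
    · intro x _; exact Finset.mem_range.mpr (ZMod.val_lt x)
    · intro x _ y _ h; exact ZMod.val_injective p h
    · intro i hi
      exact ⟨(i : ZMod p), Finset.mem_univ _, ZMod.val_natCast_of_lt (Finset.mem_range.mp hi)⟩
    · intro x _; rfl
  rw [h, geom_sum_eq (zet_prim.ne_one hp) p, zet_prim.pow_eq_one, sub_self, zero_div]

lemma sum_ech_mul {p : ℕ} [NeZero p] (hp : p.Prime) (d : ZMod p) :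
    ∑ k : ZMod p, ech (k * d) = if d = 0 then (p : ℂ) else 0 := by
  by_cases hd : d = 0
  · simp [hd, ech, ZMod.card]
  · rw [if_neg hd]
    haveI : Fact p.Prime := ⟨hp⟩
    have hbij : Function.Bijective (fun k : ZMod p => k * d) :=
      (Equiv.mulRight₀ d hd).bijective
    calc ∑ k : ZMod p, ech (k * d) = ∑ k : ZMod p, ech k :=
        Fintype.sum_bijective _ hbij _ _ (fun k => rfl)
      _ = 0 := sum_ech hp.one_lt

/-- Parseval-type identity for the pairing. -/
lemma sum_fourier_mul {p : ℕ} [NeZero p] (hp : p.Prime) (f g : ZMod p → ℂ) :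
    ∑ k : ZMod p, fourierZMod f k * fourierZMod (fun x => g (-x)) k
      = ∑ x : ZMod p, f x * g x := by
  have hsqrt : (Real.sqrt p : ℂ) * (Real.sqrt p : ℂ) = (p : ℂ) := by
    rw [← Complex.ofReal_mul, Real.mul_self_sqrt (Nat.cast_nonneg p)]
    norm_num
  have hp0 : (p : ℂ) ≠ 0 := Nat.cast_ne_zero.mpr hp.ne_zero
  have hs0 : (Real.sqrt p : ℂ) ≠ 0 := fun h => hp0 (by rw [← hsqrt, h, mul_zero])
  calc ∑ k : ZMod p, fourierZMod f k * fourierZMod (fun x => g (-x)) k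
      = ∑ k : ZMod p, (1 / (p : ℂ)) *
          ∑ ℓ : ZMod p, ∑ m : ZMod p, ech (k * (ℓ + m)) * (f ℓ * g (-m)) := by
        apply Finset.sum_congr rfl
        intro k _
        rw [fourierZMod_eq, fourierZMod_eq, mul_mul_mul_comm, Finset.sum_mul_sum]
        congr 1
        · rw [div_mul_div_comm, one_mul, hsqrt]
        · apply Finset.sum_congr rfl; intro ℓ _
          apply Finset.sum_congr rfl; intro m _
          rw [mul_add, ech_add, ech_mul_val, ech_mul_val]
          ring
    _ = (1 / (p : ℂ)) * ∑ ℓ : ZMod p, ∑ m : ZMod p,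
          (if ℓ + m = 0 then (p : ℂ) else 0) * (f ℓ * g (-m)) := by
        rw [← Finset.mul_sum]
        congr 1
        rw [Finset.sum_comm]
        apply Finset.sum_congr rfl
        intro ℓ _
        rw [Finset.sum_comm]
        apply Finset.sum_congr rfl
        intro m _
        rw [← Finset.sum_mul, sum_ech_mul hp]
    _ = ∑ x : ZMod p, f x * g x := by
        rw [Finset.mul_sum]
        apply Finset.sum_congr rfl
        intro ℓ _
        rw [Finset.sum_eq_single (-ℓ)]
        · rw [if_pos (by ring), neg_neg]
          field_simp
        · intro m _ hm
          have hne : ¬(ℓ + m = 0) := fun h => hm (by linear_combination h - ℓ)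
          rw [if_neg hne, zero_mul]
        · intro h; exact absurd (Finset.mem_univ _) h

open Finset in
theorem uncertainty {p : ℕ} [NeZero p] (hp : p.Prime) (f : ZMod p → ℂ) (hf : f ≠ 0) :
    p + 1 ≤ (univ.filter fun x => f x ≠ 0).card
      + (univ.filter fun k => fourierZMod f k ≠ 0).card := by
  classical
  set A : Finset (ZMod p) := univ.filter (fun x => f x ≠ 0) with hA
  set B0 : Finset (ZMod p) := univ.filter (fun k => fourierZMod f k ≠ 0) with hB0
  by_contra hcon
  push_neg at hcon
  set Z : Finset (ZMod p) := univ \ B0 with hZ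
  have hApos : 0 < A.card := by
    obtain ⟨x, hx⟩ := Function.ne_iff.mp hf
    exact card_pos.mpr ⟨x, mem_filter.mpr ⟨mem_univ _, by simpa using hx⟩⟩
  have hZcard : A.card ≤ Z.card := by
    have h1 : Z.card = p - B0.card := by
      rw [hZ, card_sdiff_of_subset (subset_univ _), card_univ, ZMod.card]
    have h2 : B0.card ≤ p := by
      have := card_le_card (subset_univ B0)
      rwa [card_univ, ZMod.card] at this
    omega
  obtain ⟨B, hBZ, hBcard⟩ := Finset.exists_subset_card_eq hZcard
  set n := A.card with hn
  have hAim : (A.image ZMod.val).card = n := by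
    rw [card_image_of_injective _ (ZMod.val_injective p)]
  have hBim : (B.image ZMod.val).card = n := by
    rw [card_image_of_injective _ (ZMod.val_injective p), hBcard]
  set av := (A.image ZMod.val).orderEmbOfFin hAim with hav
  set bv := (B.image ZMod.val).orderEmbOfFin hBim with hbv
  -- elements back in ZMod p
  have hback : ∀ (s : Finset (ZMod p)) (m : ℕ), m ∈ s.image ZMod.val →
      ((m : ZMod p) ∈ s ∧ (m : ZMod p).val = m) := by
    intro s m hm
    obtain ⟨x, hxs, hxv⟩ := Finset.mem_image.mp hm
    have : (m : ZMod p) = x := by rw [← hxv]; exact ZMod.natCast_rightInverse x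
    rw [this, hxv]
    exact ⟨hxs, rfl⟩
  have haA : ∀ j, ((av j : ℕ) : ZMod p) ∈ A ∧ ((av j : ℕ) : ZMod p).val = av j :=
    fun j => hback A _ (Finset.orderEmbOfFin_mem _ hAim j)
  have hbB : ∀ i, ((bv i : ℕ) : ZMod p) ∈ B ∧ ((bv i : ℕ) : ZMod p).val = bv i :=
    fun i => hback B _ (Finset.orderEmbOfFin_mem _ hBim i)
  have havp : ∀ j, av j < p := fun j => (haA j).2 ▸ ZMod.val_lt _
  have hbvp : ∀ i, bv i < p := fun i => (hbB i).2 ▸ ZMod.val_lt _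
  -- the matrix
  have hdet := cheb_det_ne_zero hp (zet_prim (p := p)) bv av
    (bv.strictMono) (av.strictMono) hbvp havp
  apply hdet
  rw [← Matrix.exists_mulVec_eq_zero_iff]
  refine ⟨fun j => f ((av j : ℕ) : ZMod p), ?_, ?_⟩
  · intro h0
    have := congrFun h0 ⟨0, hApos⟩
    simp only [Pi.zero_apply] at this
    have hmem := (haA ⟨0, hApos⟩).1
    rw [hA, mem_filter] at hmem
    exact hmem.2 this
  · funext i
    have hkey : ∑ x ∈ A, ech (((bv i : ℕ) : ZMod p) * x) * f x
        = ∑ j : Fin n, zet p ^ (bv i * av j) * f ((av j : ℕ) : ZMod p) := by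
      refine (Finset.sum_bij (fun (j : Fin n) _ => ((av j : ℕ) : ZMod p)) ?_ ?_ ?_ ?_).symm
      · intro j _; exact (haA j).1
      · intro j _ j' _ h
        have h' : ((av j : ℕ) : ZMod p) = ((av j' : ℕ) : ZMod p) := h
        have : av j = av j' := by
          rw [← (haA j).2, ← (haA j').2, h']
        exact av.injective this
      · intro x hx
        have hxv : x.val ∈ A.image ZMod.val := Finset.mem_image_of_mem _ hx
        have : x.val ∈ Set.range av := by
          rw [Finset.range_orderEmbOfFin]
          exact_mod_cast hxv
        obtain ⟨j, hj⟩ := this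
        refine ⟨j, Finset.mem_univ _, ?_⟩
        show ((av j : ℕ) : ZMod p) = x
        rw [hj]
        exact ZMod.natCast_rightInverse x
      · intro j _
        rw [ech_mul_val, (haA j).2, (hbB _).2]
    have hfour : fourierZMod f ((bv i : ℕ) : ZMod p) = 0 := by
      have hmem : ((bv i : ℕ) : ZMod p) ∈ Z := hBZ (hbB i).1
      rw [hZ, mem_sdiff, hB0, mem_filter] at hmem
      have := hmem.2
      simp only [mem_univ, true_and, not_not] at this
      exact this
    have hsum : ∑ x : ZMod p, ech (((bv i : ℕ) : ZMod p) * x) * f x = 0 := by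
      have := hfour
      rw [fourierZMod_eq] at this
      rcases mul_eq_zero.mp this with h | h
      · exfalso
        have hs : Real.sqrt p ≠ 0 :=
          Real.sqrt_ne_zero'.mpr (by exact_mod_cast hp.pos)
        rw [div_eq_zero_iff] at h
        rcases h with h | h
        · exact one_ne_zero h
        · exact hs (by exact_mod_cast h)
      · exact h
    have hAsum : ∑ x ∈ A, ech (((bv i : ℕ) : ZMod p) * x) * f x
        = ∑ x : ZMod p, ech (((bv i : ℕ) : ZMod p) * x) * f x := by
      apply Finset.sum_subset (subset_univ _)
      intro x _ hx
      have : f x = 0 := by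
        by_contra hfx
        exact hx (by rw [hA]; exact mem_filter.mpr ⟨mem_univ _, hfx⟩)
      rw [this, mul_zero]
    simp only [Matrix.mulVec, dotProduct, Matrix.of_apply, Pi.zero_apply]
    rw [← hkey, hAsum, hsum]

end FTaux


namespace FTaux

variable {p : ℕ}

/-- characters of finite groups take unit-circle values -/
lemma c_mul_conj [NeZero p] {H : Subgroup (ZMod p)ˣ} (c : H →* ℂˣ) (h : H) :
    (c h : ℂ) * (starRingEnd ℂ) (c h : ℂ) = 1 := by
  set z : ℂ := (c h : ℂ) with hzdef
  set n : ℕ := orderOf h with hn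
  have hn0 : n ≠ 0 := (orderOf_pos h).ne'
  have hzn : z ^ n = 1 := by
    have h1 : c h ^ n = 1 := by
      rw [← map_pow, hn, pow_orderOf_eq_one, map_one]
    calc z ^ n = ((c h ^ n : ℂˣ) : ℂ) := by rw [Units.val_pow_eq_pow_val]
    _ = 1 := by rw [h1, Units.val_one]
  have hkey : ∀ t : ℝ, 0 ≤ t → t ^ n = 1 → t = 1 := by
    intro t ht h1
    rcases lt_trichotomy t 1 with hlt | he | hgt
    · have := pow_lt_one₀ ht hlt hn0
      rw [h1] at this
      linarith
    · exact he
    · have := one_lt_pow₀ hgt hn0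
      rw [h1] at this
      linarith
  have hsq : Complex.normSq z = 1 := by
    have h2 : Complex.normSq z ^ n = 1 := by
      rw [← map_pow, hzn, map_one]
    exact hkey _ (Complex.normSq_nonneg z) h2
  rw [Complex.mul_conj, hsq, Complex.ofReal_one]

lemma c_ne_one_coe {H : Subgroup (ZMod p)ˣ} {c : H →* ℂˣ} (hc : c ≠ 1) :
    ∃ h : H, ((c h : ℂ) ≠ 1) := by
  obtain ⟨a, ha⟩ := DFunLike.ne_iff.mp hc
  refine ⟨a, fun h1 => ha ?_⟩
  have : c a = 1 := Units.ext (by simpa using h1)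
  simpa using this

lemma conj_ne_one {z : ℂ} (hz : z ≠ 1) : (starRingEnd ℂ) z ≠ 1 := by
  intro h
  apply hz
  have := congrArg (starRingEnd ℂ) h
  rwa [Complex.conj_conj, map_one] at this

/-- If `f (a * x) = z * f x` for all `x`, with `z ≠ 1`, then `f 0 = 0`. -/
lemma map_zero_of_scale (f : ZMod p → ℂ) (a : ZMod p) {z : ℂ} (hz : z ≠ 1)
    (h : ∀ x, f (a * x) = z * f x) : f 0 = 0 := by
  have h0 := h 0
  rw [mul_zero] at h0
  have h1 : (1 - z) * f 0 = 0 := by linear_combination h0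
  rcases mul_eq_zero.mp h1 with h2 | h2
  · exact absurd (by linear_combination -h2) hz
  · exact h2

/-- If `f (a * x) = z * f x` for all `x`, `a ≠ 0`, `z ≠ 1`, then `∑ f = 0`. -/
lemma sum_zero_of_scale [Fact p.Prime] (f : ZMod p → ℂ) {a : ZMod p} (ha : a ≠ 0) {z : ℂ}
    (hz : z ≠ 1) (h : ∀ x, f (a * x) = z * f x) : ∑ x : ZMod p, f x = 0 := by
  have hb : Function.Bijective (fun x : ZMod p => a * x) := (Equiv.mulLeft₀ a ha).bijective
  have h1 : ∑ x : ZMod p, f (a * x) = ∑ x : ZMod p, f x :=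
    Fintype.sum_bijective _ hb _ _ (fun x => rfl)
  have h2 : ∑ x : ZMod p, f (a * x) = z * ∑ x : ZMod p, f x := by
    rw [Finset.mul_sum]
    exact Finset.sum_congr rfl (fun x _ => h x)
  have h3 : (1 - z) * ∑ x : ZMod p, f x = 0 := by linear_combination h2 - h1
  rcases mul_eq_zero.mp h3 with h4 | h4
  · exact absurd (by linear_combination -h4) hz
  · exact h4

lemma fourier_const_mul [NeZero p] (z : ℂ) (f : ZMod p → ℂ) (k : ZMod p) :
    fourierZMod (fun x => z * f x) k = z * fourierZMod f k := by
  simp only [fourierZMod, Finset.mul_sum]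
  exact Finset.sum_congr rfl (fun ℓ _ => by ring)

/-- Fourier transform of a `(u, z)`-scaling-equivariant function. -/
lemma fourier_scale [NeZero p] (f : ZMod p → ℂ) (u : (ZMod p)ˣ) {z : ℂ} (hz : z ≠ 0)
    (h : ∀ x, f (((u : (ZMod p)ˣ) : ZMod p) * x) = z * f x) (k : ZMod p) :
    fourierZMod f (((u : (ZMod p)ˣ) : ZMod p) * k) = z⁻¹ * fourierZMod f k := by
  have huu : ((u : (ZMod p)ˣ) : ZMod p) * ((u⁻¹ : (ZMod p)ˣ) : ZMod p) = 1 := by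
    rw [← Units.val_mul, mul_inv_cancel, Units.val_one]
  have hfinv : ∀ m : ZMod p, f (((u⁻¹ : (ZMod p)ˣ) : ZMod p) * m) = z⁻¹ * f m := by
    intro m
    have h1 := h (((u⁻¹ : (ZMod p)ˣ) : ZMod p) * m)
    rw [← mul_assoc, huu, one_mul] at h1
    rw [h1, inv_mul_cancel_left₀ hz]
  rw [fourierZMod_eq, fourierZMod_eq]
  have hb : Function.Bijective (fun m : ZMod p => ((u⁻¹ : (ZMod p)ˣ) : ZMod p) * m) := by
    constructor
    · intro x y hxy
      have := congrArg (fun w => ((u : (ZMod p)ˣ) : ZMod p) * w) hxy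
      simpa [← mul_assoc, huu] using this
    · intro y
      refine ⟨((u : (ZMod p)ˣ) : ZMod p) * y, ?_⟩
      show ((u⁻¹ : (ZMod p)ˣ) : ZMod p) * (((u : (ZMod p)ˣ) : ZMod p) * y) = y
      rw [← mul_assoc, mul_comm ((u⁻¹ : (ZMod p)ˣ) : ZMod p) ((u : (ZMod p)ˣ) : ZMod p), huu,
        one_mul]
  have hsum : ∑ ℓ : ZMod p, ech ((((u : (ZMod p)ˣ) : ZMod p) * k) * ℓ) * f ℓ
      = ∑ m : ZMod p, ech (k * m) * (z⁻¹ * f m) := by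
    rw [← Fintype.sum_bijective _ hb
      (fun m => ech ((((u : (ZMod p)ˣ) : ZMod p) * k) * (((u⁻¹ : (ZMod p)ˣ) : ZMod p) * m))
        * f (((u⁻¹ : (ZMod p)ˣ) : ZMod p) * m)) _ (fun m => rfl)]
    apply Finset.sum_congr rfl
    intro m _
    rw [hfinv m]
    congr 2
    calc ((u : (ZMod p)ˣ) : ZMod p) * k * (((u⁻¹ : (ZMod p)ˣ) : ZMod p) * m)
        = (((u : (ZMod p)ˣ) : ZMod p) * ((u⁻¹ : (ZMod p)ˣ) : ZMod p)) * (k * m) := by ring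
      _ = k * m := by rw [huu, one_mul]
  rw [hsum]
  rw [Finset.mul_sum, Finset.mul_sum, Finset.mul_sum]
  exact Finset.sum_congr rfl (fun m _ => by ring)

lemma fourier_zero_eq [NeZero p] (f : ZMod p → ℂ) :
    fourierZMod f 0 = (1 / Real.sqrt p) * ∑ x : ZMod p, f x := by
  rw [fourierZMod_eq]
  congr 1
  apply Finset.sum_congr rfl
  intro x _
  rw [zero_mul, ech, ZMod.val_zero, pow_zero, one_mul]

end FTaux

namespace FTaux

theorem part1 {p : ℕ} [NeZero p] [Fact p.Prime] (hp : p.Prime)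
    (H : Subgroup (ZMod p)ˣ) (c : H →* ℂˣ) (hc : c ≠ 1)
    (f g : ZMod p → ℂ) (hf : IsEquivariant H c f) (hf1 : f 1 = 1)
    (hg : IsConjEquivariant H c g) (hg1 : g 1 = 1) :
    IsHInvariant H (fun x => f x * g x) ∧
    IsHInvariant H (fun k => fourierZMod f k * fourierZMod (fun x => g (-x)) k) ∧
    f 0 * g 0 = 0 ∧
    fourierZMod f 0 * fourierZMod (fun x => g (-x)) 0 = 0 ∧
    f 1 * g 1 = 1 ∧
    ∑ x : ZMod p, f x * g x =
      ∑ x : ZMod p, fourierZMod f x * fourierZMod (fun y => g (-y)) x := by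
  obtain ⟨h0, hch0⟩ := c_ne_one_coe hc
  have hf0 : f 0 = 0 :=
    map_zero_of_scale f (((h0 : (ZMod p)ˣ) : ZMod p)) hch0 (fun x => hf h0 x)
  have hg0 : g 0 = 0 :=
    map_zero_of_scale g (((h0 : (ZMod p)ˣ) : ZMod p)) (conj_ne_one hch0) (fun x => hg h0 x)
  have hfs : ∑ x : ZMod p, f x = 0 :=
    sum_zero_of_scale f (Units.ne_zero (h0 : (ZMod p)ˣ)) hch0 (fun x => hf h0 x)
  have hgneg : ∀ (h : H) (x : ZMod p), g (-(((h : (ZMod p)ˣ) : ZMod p) * x))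
      = (starRingEnd ℂ) (c h : ℂ) * g (-x) := by
    intro h x
    rw [← mul_neg]
    exact hg h (-x)
  have hgs : ∑ x : ZMod p, g (-x) = 0 := by
    apply sum_zero_of_scale (fun x => g (-x)) (Units.ne_zero (h0 : (ZMod p)ˣ))
      (conj_ne_one hch0)
    intro x
    exact hgneg h0 x
  refine ⟨?_, ?_, ?_, ?_, ?_, ?_⟩
  · intro h x
    have hcc := c_mul_conj c h
    show f (((h : (ZMod p)ˣ) : ZMod p) * x) * g (((h : (ZMod p)ˣ) : ZMod p) * x) = f x * g x
    rw [hf h x, hg h x]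
    linear_combination (f x * g x) * hcc
  · intro h k
    have hcc := c_mul_conj c h
    have hcinv : ((c h : ℂ))⁻¹ * ((starRingEnd ℂ) (c h : ℂ))⁻¹ = 1 := by
      rw [← mul_inv, hcc, inv_one]
    have h1 := fourier_scale f (h : (ZMod p)ˣ) (Units.ne_zero (c h)) (fun x => hf h x) k
    have h2 := fourier_scale (fun x => g (-x)) (h : (ZMod p)ˣ)
      (by simp only [starRingEnd_apply, star_ne_zero]; exact Units.ne_zero (c h))
      (fun x => hgneg h x) k
    show fourierZMod f (((h : (ZMod p)ˣ) : ZMod p) * k)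
        * fourierZMod (fun x => g (-x)) (((h : (ZMod p)ˣ) : ZMod p) * k)
      = fourierZMod f k * fourierZMod (fun x => g (-x)) k
    rw [h1, h2]
    linear_combination (fourierZMod f k * fourierZMod (fun x => g (-x)) k) * hcinv
  · rw [hf0, zero_mul]
  · rw [fourier_zero_eq, hfs, mul_zero, zero_mul]
  · rw [hf1, hg1, one_mul]
  · exact (sum_fourier_mul hp f g).symm

end FTaux

namespace FTaux

open Finset in
theorem q_pos_aux {p : ℕ} [NeZero p] [Fact p.Prime] (hp : p.Prime)
    (H : Subgroup (ZMod p)ˣ) (c : H →* ℂˣ) (hc : c ≠ 1)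
    (F G : ZMod p → ℂ) (hF : IsEquivariant H c F) (hG : IsConjEquivariant H c G)
    (hFne : F ≠ 0) (hGne : G ≠ 0)
    (hprod : ∀ x, F x * G x = 0)
    (hfour : ∀ k, fourierZMod F k * fourierZMod (fun x => G (-x)) k = 0) : False := by
  classical
  obtain ⟨h0, hch0⟩ := c_ne_one_coe hc
  have hF0 : F 0 = 0 :=
    map_zero_of_scale F (((h0 : (ZMod p)ˣ) : ZMod p)) hch0 (fun x => hF h0 x)
  have hG0 : G 0 = 0 :=
    map_zero_of_scale G (((h0 : (ZMod p)ˣ) : ZMod p)) (conj_ne_one hch0) (fun x => hG h0 x)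
  have hGvne : (fun x => G (-x)) ≠ 0 := by
    obtain ⟨x, hx⟩ := Function.ne_iff.mp hGne
    exact Function.ne_iff.mpr ⟨-x, by simpa using hx⟩
  have hFs : ∑ x : ZMod p, F x = 0 :=
    sum_zero_of_scale F (Units.ne_zero (h0 : (ZMod p)ˣ)) hch0 (fun x => hF h0 x)
  have hGvs : ∑ x : ZMod p, G (-x) = 0 := by
    apply sum_zero_of_scale (fun x => G (-x)) (Units.ne_zero (h0 : (ZMod p)ˣ))
      (conj_ne_one hch0)
    intro x
    rw [← mul_neg]
    exact hG h0 (-x)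
  -- supports
  set sF := univ.filter (fun x : ZMod p => F x ≠ 0) with hsF
  set sG := univ.filter (fun x : ZMod p => G x ≠ 0) with hsG
  set sGv := univ.filter (fun x : ZMod p => G (-x) ≠ 0) with hsGv
  set sFh := univ.filter (fun k : ZMod p => fourierZMod F k ≠ 0) with hsFh
  set sGh := univ.filter (fun k : ZMod p => fourierZMod (fun x => G (-x)) k ≠ 0) with hsGh
  have hUP1 : p + 1 ≤ sF.card + sFh.card := uncertainty hp F hFne
  have hUP2 : p + 1 ≤ sGv.card + sGh.card := uncertainty hp _ hGvne
  have hGvcard : sGv.card = sG.card := by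
    refine Finset.card_bij' (fun x _ => -x) (fun x _ => -x) ?_ ?_ ?_ ?_
    · intro x hx
      rw [hsGv, mem_filter] at hx
      exact mem_filter.mpr ⟨mem_univ _, hx.2⟩
    · intro x hx
      rw [hsG, mem_filter] at hx
      exact mem_filter.mpr ⟨mem_univ _, by simpa using hx.2⟩
    · intro x _; exact neg_neg x
    · intro x _; exact neg_neg x
  have hcard_space : sF.card + sG.card ≤ p - 1 := by
    have hdisj : Disjoint sF sG := by
      rw [Finset.disjoint_left]
      intro x hx1 hx2
      rw [hsF, mem_filter] at hx1
      rw [hsG, mem_filter] at hx2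
      exact absurd (hprod x) (mul_ne_zero hx1.2 hx2.2)
    have hsub : sF ∪ sG ⊆ univ.erase 0 := by
      intro x hx
      rcases Finset.mem_union.mp hx with h | h
      · rw [hsF, mem_filter] at h
        exact Finset.mem_erase.mpr ⟨fun h0' => h.2 (h0' ▸ hF0), mem_univ _⟩
      · rw [hsG, mem_filter] at h
        exact Finset.mem_erase.mpr ⟨fun h0' => h.2 (h0' ▸ hG0), mem_univ _⟩
    have := Finset.card_le_card hsub
    rw [Finset.card_union_of_disjoint hdisj] at this
    rwa [Finset.card_erase_of_mem (mem_univ _), card_univ, ZMod.card] at this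
  have hcard_four : sFh.card + sGh.card ≤ p - 1 := by
    have hdisj : Disjoint sFh sGh := by
      rw [Finset.disjoint_left]
      intro k hk1 hk2
      rw [hsFh, mem_filter] at hk1
      rw [hsGh, mem_filter] at hk2
      exact absurd (hfour k) (mul_ne_zero hk1.2 hk2.2)
    have hFh0 : fourierZMod F 0 = 0 := by
      rw [fourier_zero_eq, hFs, mul_zero]
    have hGh0 : fourierZMod (fun x => G (-x)) 0 = 0 := by
      rw [fourier_zero_eq, hGvs, mul_zero]
    have hsub : sFh ∪ sGh ⊆ univ.erase 0 := by
      intro k hk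
      rcases Finset.mem_union.mp hk with h | h
      · rw [hsFh, mem_filter] at h
        exact Finset.mem_erase.mpr ⟨fun h0' => h.2 (h0' ▸ hFh0), mem_univ _⟩
      · rw [hsGh, mem_filter] at h
        exact Finset.mem_erase.mpr ⟨fun h0' => h.2 (h0' ▸ hGh0), mem_univ _⟩
    have := Finset.card_le_card hsub
    rw [Finset.card_union_of_disjoint hdisj] at this
    rwa [Finset.card_erase_of_mem (mem_univ _), card_univ, ZMod.card] at this
  have hp2 : 2 ≤ p := hp.two_le
  omega

end FTaux

namespace FTaux

open Finset Metric Bornology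

variable {p : ℕ}

lemma fourier_cont [NeZero p] (k : ZMod p) :
    Continuous (fun f : ZMod p → ℂ => fourierZMod f k) := by
  unfold fourierZMod
  exact continuous_const.mul (continuous_finset_sum _
    (fun ℓ _ => continuous_const.mul (continuous_apply ℓ)))

lemma phi_cont [NeZero p] :
    Continuous (fun fg : (ZMod p → ℂ) × (ZMod p → ℂ) =>
      ((fun x => fg.1 x * fg.2 x : ZMod p → ℂ),
       (fun k => fourierZMod fg.1 k * fourierZMod (fun x => fg.2 (-x)) k : ZMod p → ℂ))) := by
  have hneg : Continuous (fun fg : (ZMod p → ℂ) × (ZMod p → ℂ) => (fun x => fg.2 (-x))) :=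
    continuous_pi (fun x => (continuous_apply (-x)).comp continuous_snd)
  refine Continuous.prodMk ?_ ?_
  · exact continuous_pi (fun x =>
      (((continuous_apply x).comp continuous_fst).mul ((continuous_apply x).comp continuous_snd)))
  · exact continuous_pi (fun k =>
      (((fourier_cont k).comp continuous_fst).mul ((fourier_cont k).comp hneg)))

lemma norm_real_inv_of_pos {a : ℝ} (ha : 0 < a) : ‖((a : ℂ))⁻¹‖ = a⁻¹ := by
  rw [norm_inv, Complex.norm_real, Real.norm_eq_abs, abs_of_pos ha]

lemma norm_one_ne_zero [NeZero p] {f : ZMod p → ℂ} (h : ‖f‖ = 1) : f ≠ 0 := by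
  intro h0
  subst h0
  rw [norm_zero] at h
  exact zero_ne_one h

/-- normalization of an equivariant pair -/
lemma normalized_facts [NeZero p] (f : ZMod p → ℂ) (hf1 : f 1 = 1) :
    1 ≤ ‖f‖ ∧ ‖(fun x => ((‖f‖ : ℂ))⁻¹ * f x : ZMod p → ℂ)‖ = 1 := by
  have h1 : (1 : ℝ) ≤ ‖f‖ := by
    have := norm_le_pi_norm f 1
    rwa [hf1, norm_one] at this
  have hne : (‖f‖ : ℝ) ≠ 0 := by linarith
  constructor
  · exact h1
  · have : (fun x => ((‖f‖ : ℂ))⁻¹ * f x) = ((‖f‖ : ℂ))⁻¹ • f := rfl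
    rw [this, norm_smul, norm_inv, Complex.norm_real, Real.norm_eq_abs,
      abs_of_nonneg (norm_nonneg f), inv_mul_cancel₀ hne]

theorem part2 [NeZero p] [Fact p.Prime] (hp : p.Prime)
    (H : Subgroup (ZMod p)ˣ) (c : H →* ℂˣ) (hc : c ≠ 1)
    (K : Set ((ZMod p → ℂ) × (ZMod p → ℂ))) (hK : IsCompact K) :
    IsCompact ((fun fg : {fg : (ZMod p → ℂ) × (ZMod p → ℂ) //
        IsEquivariant H c fg.1 ∧ fg.1 1 = 1 ∧
        IsConjEquivariant H c fg.2 ∧ fg.2 1 = 1} =>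
      ((fun x => fg.val.1 x * fg.val.2 x),
        (fun k => fourierZMod fg.val.1 k *
          fourierZMod (fun x => fg.val.2 (-x)) k))) ⁻¹' K) := by
  classical
  set Φ : (ZMod p → ℂ) × (ZMod p → ℂ) → (ZMod p → ℂ) × (ZMod p → ℂ) := fun fg =>
    ((fun x => fg.1 x * fg.2 x),
     (fun k => fourierZMod fg.1 k * fourierZMod (fun x => fg.2 (-x)) k)) with hΦdef
  set S : Set ((ZMod p → ℂ) × (ZMod p → ℂ)) := {fg | IsEquivariant H c fg.1 ∧ fg.1 1 = 1 ∧
      IsConjEquivariant H c fg.2 ∧ fg.2 1 = 1} with hSdef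
  have hScl : IsClosed S := by
    rw [hSdef]
    rw [Set.setOf_and, Set.setOf_and, Set.setOf_and]
    refine IsClosed.inter ?_ (IsClosed.inter ?_ (IsClosed.inter ?_ ?_))
    · have he : {fg : (ZMod p → ℂ) × (ZMod p → ℂ) | IsEquivariant H c fg.1}
          = ⋂ (h : H), ⋂ (x : ZMod p), {fg : (ZMod p → ℂ) × (ZMod p → ℂ) |
              fg.1 (((h : (ZMod p)ˣ) : ZMod p) * x) = (c h : ℂ) * fg.1 x} := by
        ext fg
        simp only [Set.mem_setOf_eq, Set.mem_iInter, IsEquivariant]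
      rw [he]
      exact isClosed_iInter fun h => isClosed_iInter fun x =>
        isClosed_eq ((continuous_apply _).comp continuous_fst)
          (continuous_const.mul ((continuous_apply _).comp continuous_fst))
    · exact isClosed_eq ((continuous_apply 1).comp continuous_fst) continuous_const
    · have he : {fg : (ZMod p → ℂ) × (ZMod p → ℂ) | IsConjEquivariant H c fg.2}
          = ⋂ (h : H), ⋂ (x : ZMod p), {fg : (ZMod p → ℂ) × (ZMod p → ℂ) |
              fg.2 (((h : (ZMod p)ˣ) : ZMod p) * x)
                = (starRingEnd ℂ) (c h : ℂ) * fg.2 x} := by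
        ext fg
        simp only [Set.mem_setOf_eq, Set.mem_iInter, IsConjEquivariant]
      rw [he]
      exact isClosed_iInter fun h => isClosed_iInter fun x =>
        isClosed_eq ((continuous_apply _).comp continuous_snd)
          (continuous_const.mul ((continuous_apply _).comp continuous_snd))
    · exact isClosed_eq ((continuous_apply 1).comp continuous_snd) continuous_const
  set T : Set ((ZMod p → ℂ) × (ZMod p → ℂ)) := S ∩ Φ ⁻¹' K with hTdef
  suffices hTc : IsCompact T by
    have heq : ((fun fg : {fg : (ZMod p → ℂ) × (ZMod p → ℂ) //
          IsEquivariant H c fg.1 ∧ fg.1 1 = 1 ∧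
          IsConjEquivariant H c fg.2 ∧ fg.2 1 = 1} =>
        ((fun x => fg.val.1 x * fg.val.2 x),
          (fun k => fourierZMod fg.val.1 k *
            fourierZMod (fun x => fg.val.2 (-x)) k))) ⁻¹' K)
        = (Subtype.val : {fg : (ZMod p → ℂ) × (ZMod p → ℂ) //
            IsEquivariant H c fg.1 ∧ fg.1 1 = 1 ∧
            IsConjEquivariant H c fg.2 ∧ fg.2 1 = 1} → (ZMod p → ℂ) × (ZMod p → ℂ)) ⁻¹' T := by
      ext fg
      simp only [Set.mem_preimage, hTdef, Set.mem_inter_iff]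
      exact ⟨fun h => ⟨fg.2, h⟩, fun h => h.2⟩
    rw [heq]
    exact hScl.isClosedEmbedding_subtypeVal.isCompact_preimage hTc
  refine Metric.isCompact_of_isClosed_isBounded ?_ ?_
  · exact hScl.inter (hK.isClosed.preimage phi_cont)
  -- boundedness
  rcases Set.eq_empty_or_nonempty T with hTe | ⟨fg₀, hfg₀⟩
  · rw [hTe]; exact isBounded_empty
  obtain ⟨r, hr⟩ := (isBounded_iff_subset_closedBall 0).mp hK.isBounded
  -- pointwise bounds from K
  have hbound : ∀ fg : (ZMod p → ℂ) × (ZMod p → ℂ), fg ∈ T →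
      (∀ x, ‖fg.1 x * fg.2 x‖ ≤ r) ∧
      (∀ k, ‖fourierZMod fg.1 k * fourierZMod (fun x => fg.2 (-x)) k‖ ≤ r) := by
    intro fg hfg
    have hmem : Φ fg ∈ K := hfg.2
    have hnorm : ‖Φ fg‖ ≤ r := mem_closedBall_zero_iff.mp (hr hmem)
    constructor
    · intro x
      calc ‖fg.1 x * fg.2 x‖ ≤ ‖(Φ fg).1‖ := norm_le_pi_norm (Φ fg).1 x
        _ ≤ ‖Φ fg‖ := norm_fst_le _
        _ ≤ r := hnorm
    · intro k
      calc ‖fourierZMod fg.1 k * fourierZMod (fun x => fg.2 (-x)) k‖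
          ≤ ‖(Φ fg).2‖ := norm_le_pi_norm (Φ fg).2 k
        _ ≤ ‖Φ fg‖ := norm_snd_le _
        _ ≤ r := hnorm
  -- the compact set E of normalized pairs and the positive minimum of q
  set E : Set ((ZMod p → ℂ) × (ZMod p → ℂ)) := {FG | IsEquivariant H c FG.1 ∧ IsConjEquivariant H c FG.2 ∧
      ‖FG.1‖ = 1 ∧ ‖FG.2‖ = 1} with hEdef
  set q : (ZMod p → ℂ) × (ZMod p → ℂ) → ℝ := fun FG => (∑ x : ZMod p, ‖FG.1 x * FG.2 x‖)
      + ∑ k : ZMod p, ‖fourierZMod FG.1 k * fourierZMod (fun x => FG.2 (-x)) k‖ with hqdef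
  have hqcont : Continuous q := by
    have hneg : Continuous (fun fg : (ZMod p → ℂ) × (ZMod p → ℂ) => (fun x => fg.2 (-x))) :=
      continuous_pi (fun x => (continuous_apply (-x)).comp continuous_snd)
    rw [hqdef]
    refine Continuous.add ?_ ?_
    · exact continuous_finset_sum _ fun x _ =>
        (((continuous_apply x).comp continuous_fst).mul
          ((continuous_apply x).comp continuous_snd)).norm
    · exact continuous_finset_sum _ fun k _ =>
        (((fourier_cont k).comp continuous_fst).mul ((fourier_cont k).comp hneg)).norm
  have hEcomp : IsCompact E := by
    refine Metric.isCompact_of_isClosed_isBounded ?_ ?_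
    · rw [hEdef, Set.setOf_and, Set.setOf_and, Set.setOf_and]
      refine IsClosed.inter ?_ (IsClosed.inter ?_ (IsClosed.inter ?_ ?_))
      · have he : {fg : (ZMod p → ℂ) × (ZMod p → ℂ) | IsEquivariant H c fg.1}
            = ⋂ (h : H), ⋂ (x : ZMod p), {fg : (ZMod p → ℂ) × (ZMod p → ℂ) |
                fg.1 (((h : (ZMod p)ˣ) : ZMod p) * x) = (c h : ℂ) * fg.1 x} := by
          ext fg
          simp only [Set.mem_setOf_eq, Set.mem_iInter, IsEquivariant]
        rw [he]
        exact isClosed_iInter fun h => isClosed_iInter fun x =>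
          isClosed_eq ((continuous_apply _).comp continuous_fst)
            (continuous_const.mul ((continuous_apply _).comp continuous_fst))
      · have he : {fg : (ZMod p → ℂ) × (ZMod p → ℂ) | IsConjEquivariant H c fg.2}
            = ⋂ (h : H), ⋂ (x : ZMod p), {fg : (ZMod p → ℂ) × (ZMod p → ℂ) |
                fg.2 (((h : (ZMod p)ˣ) : ZMod p) * x)
                  = (starRingEnd ℂ) (c h : ℂ) * fg.2 x} := by
          ext fg
          simp only [Set.mem_setOf_eq, Set.mem_iInter, IsConjEquivariant]
        rw [he]
        exact isClosed_iInter fun h => isClosed_iInter fun x =>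
          isClosed_eq ((continuous_apply _).comp continuous_snd)
            (continuous_const.mul ((continuous_apply _).comp continuous_snd))
      · exact isClosed_eq (continuous_norm.comp continuous_fst) continuous_const
      · exact isClosed_eq (continuous_norm.comp continuous_snd) continuous_const
    · apply (isBounded_closedBall
        (x := (0 : (ZMod p → ℂ) × (ZMod p → ℂ))) (r := 1)).subset
      intro FG hFG
      rw [hEdef] at hFG
      apply mem_closedBall_zero_iff.mpr
      rw [Prod.norm_def]
      exact max_le (le_of_eq hFG.2.2.1) (le_of_eq hFG.2.2.2)
  -- normalization map
  have hnorm_mem : ∀ fg : (ZMod p → ℂ) × (ZMod p → ℂ), fg ∈ T →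
      ((fun x => ((‖fg.1‖ : ℂ))⁻¹ * fg.1 x : ZMod p → ℂ),
       (fun x => ((‖fg.2‖ : ℂ))⁻¹ * fg.2 x : ZMod p → ℂ)) ∈ E := by
    intro fg hfg
    obtain ⟨⟨hfe, hf1, hge, hg1⟩, -⟩ := hfg
    have hfa := normalized_facts fg.1 hf1
    have hgb := normalized_facts fg.2 hg1
    rw [hEdef]
    refine ⟨?_, ?_, hfa.2, hgb.2⟩
    · intro h x
      show ((‖fg.1‖ : ℂ))⁻¹ * fg.1 (((h : (ZMod p)ˣ) : ZMod p) * x)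
          = (c h : ℂ) * (((‖fg.1‖ : ℂ))⁻¹ * fg.1 x)
      rw [hfe h x]; ring
    · intro h x
      show ((‖fg.2‖ : ℂ))⁻¹ * fg.2 (((h : (ZMod p)ˣ) : ZMod p) * x)
          = (starRingEnd ℂ) (c h : ℂ) * (((‖fg.2‖ : ℂ))⁻¹ * fg.2 x)
      rw [hge h x]; ring
  have hEne : E.Nonempty := ⟨_, hnorm_mem fg₀ hfg₀⟩
  obtain ⟨FG₀, hFG₀E, hFG₀min⟩ := hEcomp.exists_isMinOn hEne hqcont.continuousOn
  set κ : ℝ := q FG₀ with hκdef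
  have hκnonneg : 0 ≤ κ := by
    have : κ = (∑ x : ZMod p, ‖FG₀.1 x * FG₀.2 x‖)
        + ∑ k : ZMod p, ‖fourierZMod FG₀.1 k * fourierZMod (fun x => FG₀.2 (-x)) k‖ := by
      rw [hκdef, hqdef]
    rw [this]
    exact add_nonneg (Finset.sum_nonneg fun x _ => norm_nonneg _)
      (Finset.sum_nonneg fun k _ => norm_nonneg _)
  have hκpos : 0 < κ := by
    rcases lt_or_eq_of_le hκnonneg with hlt | heq
    · exact hlt
    · exfalso
      have h2 : (∑ x : ZMod p, ‖FG₀.1 x * FG₀.2 x‖)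
          + (∑ k : ZMod p, ‖fourierZMod FG₀.1 k * fourierZMod (fun x => FG₀.2 (-x)) k‖) = 0 := by
        have h3 : q FG₀ = 0 := heq.symm
        rw [hqdef] at h3
        exact h3
      have n1 : (0:ℝ) ≤ ∑ x : ZMod p, ‖FG₀.1 x * FG₀.2 x‖ :=
        Finset.sum_nonneg fun x _ => norm_nonneg _
      have n2 : (0:ℝ) ≤ ∑ k : ZMod p,
          ‖fourierZMod FG₀.1 k * fourierZMod (fun x => FG₀.2 (-x)) k‖ :=
        Finset.sum_nonneg fun k _ => norm_nonneg _
      have hq1 : (∑ x : ZMod p, ‖FG₀.1 x * FG₀.2 x‖) = 0 := by linarith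
      have hq2 : (∑ k : ZMod p,
          ‖fourierZMod FG₀.1 k * fourierZMod (fun x => FG₀.2 (-x)) k‖) = 0 := by linarith
      obtain ⟨hFe, hGe, hF1, hG1⟩ := hFG₀E
      refine q_pos_aux hp H c hc FG₀.1 FG₀.2 hFe hGe (norm_one_ne_zero hF1)
        (norm_one_ne_zero hG1) ?_ ?_
      · intro x
        exact norm_eq_zero.mp ((Finset.sum_eq_zero_iff_of_nonneg
          (fun x _ => norm_nonneg _)).mp hq1 x (Finset.mem_univ x))
      · intro k
        exact norm_eq_zero.mp ((Finset.sum_eq_zero_iff_of_nonneg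
          (fun k _ => norm_nonneg _)).mp hq2 k (Finset.mem_univ k))
  -- final bound
  have hfinal : ∀ fg : (ZMod p → ℂ) × (ZMod p → ℂ), fg ∈ T → ‖fg‖ ≤ 2 * p * r / κ := by
    intro fg hfg
    obtain ⟨hb1, hb2⟩ := hbound fg hfg
    have hr0 : (0:ℝ) ≤ r := le_trans (norm_nonneg _) (mem_closedBall_zero_iff.mp (hr hfg.2))
    obtain ⟨⟨hfe, hf1, hge, hg1⟩, -⟩ := id hfg
    have hfa := normalized_facts fg.1 hf1
    have hgb := normalized_facts fg.2 hg1
    have ha0 : (0:ℝ) < ‖fg.1‖ := lt_of_lt_of_le one_pos hfa.1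
    have hb0 : (0:ℝ) < ‖fg.2‖ := lt_of_lt_of_le one_pos hgb.1
    have hmemE := hnorm_mem fg hfg
    have hκle : κ ≤ q ((fun x => ((‖fg.1‖ : ℂ))⁻¹ * fg.1 x : ZMod p → ℂ),
        (fun x => ((‖fg.2‖ : ℂ))⁻¹ * fg.2 x : ZMod p → ℂ)) :=
      isMinOn_iff.mp hFG₀min _ hmemE
    have habnorm : ‖((‖fg.1‖ : ℂ))⁻¹ * ((‖fg.2‖ : ℂ))⁻¹‖ = ‖fg.1‖⁻¹ * ‖fg.2‖⁻¹ := by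
      rw [norm_mul, norm_real_inv_of_pos ha0, norm_real_inv_of_pos hb0]
    have hterm1 : ∀ x : ZMod p,
        ‖((‖fg.1‖ : ℂ))⁻¹ * fg.1 x * (((‖fg.2‖ : ℂ))⁻¹ * fg.2 x)‖
          ≤ ‖fg.1‖⁻¹ * ‖fg.2‖⁻¹ * r := by
      intro x
      have heqx : ((‖fg.1‖ : ℂ))⁻¹ * fg.1 x * (((‖fg.2‖ : ℂ))⁻¹ * fg.2 x)
          = (((‖fg.1‖ : ℂ))⁻¹ * ((‖fg.2‖ : ℂ))⁻¹) * (fg.1 x * fg.2 x) := by ring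
      rw [heqx, norm_mul, habnorm]
      exact mul_le_mul_of_nonneg_left (hb1 x) (by positivity)
    have hterm2 : ∀ k : ZMod p,
        ‖fourierZMod (fun x => ((‖fg.1‖ : ℂ))⁻¹ * fg.1 x) k
          * fourierZMod (fun x => ((‖fg.2‖ : ℂ))⁻¹ * fg.2 (-x)) k‖
          ≤ ‖fg.1‖⁻¹ * ‖fg.2‖⁻¹ * r := by
      intro k
      rw [fourier_const_mul, fourier_const_mul (((‖fg.2‖ : ℂ))⁻¹) (fun x => fg.2 (-x))]
      have heqx : ((‖fg.1‖ : ℂ))⁻¹ * fourierZMod fg.1 k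
            * (((‖fg.2‖ : ℂ))⁻¹ * fourierZMod (fun x => fg.2 (-x)) k)
          = (((‖fg.1‖ : ℂ))⁻¹ * ((‖fg.2‖ : ℂ))⁻¹)
            * (fourierZMod fg.1 k * fourierZMod (fun x => fg.2 (-x)) k) := by ring
      rw [heqx, norm_mul, habnorm]
      exact mul_le_mul_of_nonneg_left (hb2 k) (by positivity)
    have hqle : q ((fun x => ((‖fg.1‖ : ℂ))⁻¹ * fg.1 x : ZMod p → ℂ),
        (fun x => ((‖fg.2‖ : ℂ))⁻¹ * fg.2 x : ZMod p → ℂ))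
        ≤ ‖fg.1‖⁻¹ * ‖fg.2‖⁻¹ * (2 * p * r) := by
      rw [hqdef]
      have hs1 : ∑ x : ZMod p, ‖((‖fg.1‖ : ℂ))⁻¹ * fg.1 x * (((‖fg.2‖ : ℂ))⁻¹ * fg.2 x)‖
          ≤ p * (‖fg.1‖⁻¹ * ‖fg.2‖⁻¹ * r) := by
        have := Finset.sum_le_card_nsmul Finset.univ
          (fun x : ZMod p => ‖((‖fg.1‖ : ℂ))⁻¹ * fg.1 x * (((‖fg.2‖ : ℂ))⁻¹ * fg.2 x)‖)
          (‖fg.1‖⁻¹ * ‖fg.2‖⁻¹ * r) (fun x _ => hterm1 x)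
        rwa [Finset.card_univ, ZMod.card, nsmul_eq_mul] at this
      have hs2 : ∑ k : ZMod p, ‖fourierZMod (fun x => ((‖fg.1‖ : ℂ))⁻¹ * fg.1 x) k
            * fourierZMod (fun x => ((‖fg.2‖ : ℂ))⁻¹ * fg.2 (-x)) k‖
          ≤ p * (‖fg.1‖⁻¹ * ‖fg.2‖⁻¹ * r) := by
        have := Finset.sum_le_card_nsmul Finset.univ
          (fun k : ZMod p => ‖fourierZMod (fun x => ((‖fg.1‖ : ℂ))⁻¹ * fg.1 x) k
            * fourierZMod (fun x => ((‖fg.2‖ : ℂ))⁻¹ * fg.2 (-x)) k‖)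
          (‖fg.1‖⁻¹ * ‖fg.2‖⁻¹ * r) (fun k _ => hterm2 k)
        rwa [Finset.card_univ, ZMod.card, nsmul_eq_mul] at this
      calc (∑ x : ZMod p, ‖((‖fg.1‖ : ℂ))⁻¹ * fg.1 x * (((‖fg.2‖ : ℂ))⁻¹ * fg.2 x)‖)
            + ∑ k : ZMod p, ‖fourierZMod (fun x => ((‖fg.1‖ : ℂ))⁻¹ * fg.1 x) k
              * fourierZMod (fun x => ((‖fg.2‖ : ℂ))⁻¹ * fg.2 (-x)) k‖
          ≤ p * (‖fg.1‖⁻¹ * ‖fg.2‖⁻¹ * r) + p * (‖fg.1‖⁻¹ * ‖fg.2‖⁻¹ * r) :=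
            add_le_add hs1 hs2
        _ = ‖fg.1‖⁻¹ * ‖fg.2‖⁻¹ * (2 * p * r) := by ring
    have hcore : κ * (‖fg.1‖ * ‖fg.2‖) ≤ 2 * p * r := by
      have h1 := mul_le_mul_of_nonneg_right (le_trans hκle hqle)
        (le_of_lt (mul_pos ha0 hb0))
      have h2 : ‖fg.1‖⁻¹ * ‖fg.2‖⁻¹ * (2 * p * r) * (‖fg.1‖ * ‖fg.2‖) = 2 * p * r := by
        field_simp
      rw [h2] at h1
      exact h1
    have hale : ‖fg.1‖ ≤ 2 * p * r / κ := by
      rw [le_div_iff₀ hκpos]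
      nlinarith [mul_nonneg (mul_nonneg (sub_nonneg.mpr hgb.1) ha0.le) hκpos.le]
    have hble : ‖fg.2‖ ≤ 2 * p * r / κ := by
      rw [le_div_iff₀ hκpos]
      nlinarith [mul_nonneg (mul_nonneg (sub_nonneg.mpr hfa.1) hb0.le) hκpos.le]
    rw [Prod.norm_def]
    exact max_le hale hble
  apply (isBounded_closedBall (x := (0 : (ZMod p → ℂ) × (ZMod p → ℂ))) (r := 2 * p * r / κ)).subset
  intro fg hfg
  exact mem_closedBall_zero_iff.mpr (hfinal fg hfg)

end FTaux

/-- **Lemma 6.7.** Let `p` be an odd prime, `H` a proper subgroup of `𝔽_p^*` and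
`c : H → ℂ*` a non-trivial character. With
`V₁ = {f (H,c)-equivariant, f 1 = 1}`, `V̄₁ = {g (H,c̄)-equivariant, g 1 = 1}` and
`W₁ = {(f₀,g₀) H-invariant, f₀ 0 = g₀ 0 = 0, f₀ 1 = 1, ∑ f₀ = ∑ g₀}`,
the map `Φ (f,g) = (f·g, f̂·(ǧ)^)` maps `V₁ × V̄₁` into `W₁` and is proper. -/
theorem phi_equivariant_maps_into_W1_and_isProper
    (p : ℕ) (hp : p.Prime) (hodd : p ≠ 2)
    (H : Subgroup (ZMod p)ˣ) (hH : H ≠ ⊤) (c : H →* ℂˣ) (hc : c ≠ 1) :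
    haveI : NeZero p := ⟨hp.ne_zero⟩
    (∀ f g : ZMod p → ℂ,
      IsEquivariant H c f → f 1 = 1 → IsConjEquivariant H c g → g 1 = 1 →
        IsHInvariant H (fun x => f x * g x) ∧
        IsHInvariant H (fun k => fourierZMod f k *
          fourierZMod (fun x => g (-x)) k) ∧
        f 0 * g 0 = 0 ∧
        fourierZMod f 0 * fourierZMod (fun x => g (-x)) 0 = 0 ∧
        f 1 * g 1 = 1 ∧
        ∑ x : ZMod p, f x * g x =
          ∑ x : ZMod p, fourierZMod f x * fourierZMod (fun y => g (-y)) x) ∧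
    (∀ K : Set ((ZMod p → ℂ) × (ZMod p → ℂ)), IsCompact K →
      IsCompact ((fun fg : {fg : (ZMod p → ℂ) × (ZMod p → ℂ) //
          IsEquivariant H c fg.1 ∧ fg.1 1 = 1 ∧
          IsConjEquivariant H c fg.2 ∧ fg.2 1 = 1} =>
        ((fun x => fg.val.1 x * fg.val.2 x),
          (fun k => fourierZMod fg.val.1 k *
            fourierZMod (fun x => fg.val.2 (-x)) k))) ⁻¹' K)) := by
  haveI : NeZero p := ⟨hp.ne_zero⟩
  haveI : Fact p.Prime := ⟨hp⟩
  refine ⟨?_, ?_⟩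
  · intro f g hf hf1 hg hg1
    exact FTaux.part1 hp H c hc f g hf hf1 hg hg1
  · intro K hK
    exact FTaux.part2 hp H c hc K hK
end

section
/- Let p be an odd prime, H a subgroup of 𝔽_p* of order d_H, and c : H → ℂ* a non-trivial character. Let A and B be H-invariant subsets of 𝔽_p* (i.e. hA = A and hB = B for all h ∈ H) with |A| + |B| = (p−1) + d_H. Then there exists a non-zero (H,c)-equivariant function f : 𝔽_p → ℂ with support of f contained in A and support of f̂ contained in B; such f is unique up to a non-zero scalar multiple; moreover f vanishes nowhere on A and f̂ vanishes nowhere on B. -/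
open MvPolynomial Finset Matrix

namespace Cheb

variable {n : ℕ}

/-- substitution collapsing variable j to i -/
noncomputable def clps (i j : Fin n) : MvPolynomial (Fin n) ℤ →ₐ[ℤ] MvPolynomial (Fin n) ℤ :=
  aeval (fun t => if t = j then X i else X t)

lemma dvd_sub_clps (i j : Fin n) (f : MvPolynomial (Fin n) ℤ) :
    (X j - X i) ∣ f - clps i j f := by
  induction f using MvPolynomial.induction_on with
  | C a => simp [clps]
  | add f g hf hg =>
      have : f + g - clps i j (f + g) = (f - clps i j f) + (g - clps i j g) := by
        rw [map_add]; ring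
      rw [this]; exact dvd_add hf hg
  | mul_X f t hf =>
      have : f * X t - clps i j (f * X t)
          = (f - clps i j f) * X t + clps i j f * (X t - clps i j (X t)) := by
        rw [_root_.map_mul]; ring
      rw [this]
      refine dvd_add (Dvd.dvd.mul_right hf _) (Dvd.dvd.mul_left ?_ _)
      by_cases h : t = j
      · subst h; simp [clps]
      · simp [clps, h]

lemma clps_X_sub (i j : Fin n) : clps i j (X j - X i) = 0 := by
  by_cases h : i = j
  · subst h; simp [clps]
  · simp [clps, h]

lemma prime_X_sub (i j : Fin n) (hij : i ≠ j) : Prime (X j - X i : MvPolynomial (Fin n) ℤ) := by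
  constructor
  · intro h
    have := congrArg (eval (fun t => if t = j then (2:ℤ) else 0)) h
    simp [hij] at this
  constructor
  · intro h
    have := h.map (eval (fun t => if t = j then (2:ℤ) else 0))
    simp [hij] at this
    norm_num [Int.isUnit_iff] at this
  · intro a b hab
    have h0 : clps i j (a * b) = 0 := by
      obtain ⟨k, hk⟩ := hab
      rw [hk, _root_.map_mul, clps_X_sub]; ring
    rw [_root_.map_mul] at h0
    rcases mul_eq_zero.mp h0 with h | h
    · left
      have := dvd_sub_clps i j a
      rw [h, sub_zero] at this; exact this
    · right
      have := dvd_sub_clps i j b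
      rw [h, sub_zero] at this; exact this

lemma not_dvd_X_sub {i j k l : Fin n} (hkl : k ≠ l) (m : Fin n) (hm : m = k ∨ m = l)
    (hmi : m ≠ i) (hmj : m ≠ j) :
    ¬ ((X j - X i : MvPolynomial (Fin n) ℤ) ∣ (X l - X k)) := by
  intro hdvd
  have := map_dvd (eval (fun t => if t = m then (1:ℤ) else 0)) hdvd
  simp [hmi.symm, hmj.symm] at this
  rcases hm with rfl | rfl
  · rcases eq_or_ne l m with rfl | h
    · exact hkl rfl
    · simp [h] at this
  · simp [hkl] at this

lemma not_associated_X_sub {i j k l : Fin n} (hij : i < j) (hkl : k < l)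
    (hne : (i, j) ≠ (k, l)) :
    ¬ Associated (X j - X i : MvPolynomial (Fin n) ℤ) (X l - X k) := by
  intro h
  have hsets : ¬ (({i, j} : Finset (Fin n)) = {k, l}) := by
    intro hs
    apply hne
    have hi : i ∈ ({k, l} : Finset (Fin n)) := by rw [← hs]; simp
    have hj : j ∈ ({k, l} : Finset (Fin n)) := by rw [← hs]; simp
    have hk : k ∈ ({i, j} : Finset (Fin n)) := by rw [hs]; simp
    simp only [mem_insert, mem_singleton] at hi hj hk
    have hi' : i.1 = k.1 ∨ i.1 = l.1 := by rcases hi with h1|h1 <;> [left; right] <;> rw [h1]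
    have hj' : j.1 = k.1 ∨ j.1 = l.1 := by rcases hj with h1|h1 <;> [left; right] <;> rw [h1]
    have hk' : k.1 = i.1 ∨ k.1 = j.1 := by rcases hk with h1|h1 <;> [left; right] <;> rw [h1]
    have hij' : i.1 < j.1 := hij
    have hkl' : k.1 < l.1 := hkl
    simp only [Prod.ext_iff, Fin.ext_iff]
    omega
  by_cases hcase : ∃ m, (m = k ∨ m = l) ∧ m ≠ i ∧ m ≠ j
  · obtain ⟨m, hm, hmi, hmj⟩ := hcase
    exact not_dvd_X_sub hkl.ne m hm hmi hmj h.dvd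
  · have hsub' : ∀ m : Fin n, (m = k ∨ m = l) → (m = i ∨ m = j) := by
      intro m hm
      by_contra hmm
      push_neg at hmm
      exact hcase ⟨m, hm, hmm.1, hmm.2⟩
    have hsub : ({k, l} : Finset (Fin n)) ⊆ {i, j} := by
      intro m hm
      simp only [mem_insert, mem_singleton] at hm ⊢
      exact hsub' m hm
    have : ({k, l} : Finset (Fin n)) = {i, j} := by
      apply Finset.eq_of_subset_of_card_le hsub
      rw [Finset.card_insert_of_notMem (by simp [hij.ne]),
          Finset.card_insert_of_notMem (by simp [hkl.ne])]
      simp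
    exact hsets this.symm

lemma prod_primes_dvd' {α : Type*} [CommMonoidWithZero α] [IsCancelMulZero α] {ι : Type*}
    (s : Finset ι) (f : ι → α) (n : α)
    (hp : ∀ i ∈ s, Prime (f i))
    (hna : ∀ i ∈ s, ∀ j ∈ s, i ≠ j → ¬ Associated (f i) (f j))
    (hdvd : ∀ i ∈ s, f i ∣ n) : (∏ i ∈ s, f i) ∣ n := by
  classical
  revert hp hna hdvd
  induction s using Finset.cons_induction generalizing n with
  | empty => simp
  | cons a t ha ih =>
      intro hp hna hdvd
      rw [Finset.prod_cons]
      obtain ⟨k, rfl⟩ := hdvd a (Finset.mem_cons_self a t)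
      refine mul_dvd_mul_left _ (ih k (fun i hi => hp i (Finset.mem_cons_of_mem hi))
        (fun i hi j hj hij => hna i (Finset.mem_cons_of_mem hi) j (Finset.mem_cons_of_mem hj) hij)
        (fun i hi => ?_))
      have hprime := hp i (Finset.mem_cons_of_mem hi)
      have hd := hdvd i (Finset.mem_cons_of_mem hi)
      rcases hprime.dvd_or_dvd hd with h | h
      · exfalso
        exact hna i (Finset.mem_cons_of_mem hi) a (Finset.mem_cons_self a t)
          (by rintro rfl; exact ha hi)
          (hprime.associated_of_dvd (hp a (Finset.mem_cons_self a t)) h)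
      · exact h

/-- The set of ordered pairs i < j. -/
def pairs (n : ℕ) : Finset (Fin n × Fin n) := Finset.univ.filter (fun p => p.1 < p.2)

noncomputable def Vdm (n : ℕ) : MvPolynomial (Fin n) ℤ :=
  ∏ q ∈ pairs n, (X q.2 - X q.1)

noncomputable def Dmat (e : Fin n → ℕ) : MvPolynomial (Fin n) ℤ :=
  Matrix.det (Matrix.of fun i j : Fin n => (X i : MvPolynomial (Fin n) ℤ) ^ e j)

lemma vdm_dvd_dmat (e : Fin n → ℕ) : Vdm n ∣ Dmat e := by
  refine prod_primes_dvd' _ _ _ ?_ ?_ ?_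
  · rintro ⟨i, j⟩ hq
    simp only [pairs, Finset.mem_filter] at hq
    exact prime_X_sub i j hq.2.ne
  · rintro ⟨i, j⟩ hq ⟨k, l⟩ hq' hne
    simp only [pairs, Finset.mem_filter] at hq hq'
    exact not_associated_X_sub hq.2 hq'.2 (by simpa using hne)
  · rintro ⟨i, j⟩ hq
    simp only [pairs, Finset.mem_filter] at hq
    have hij : i ≠ j := hq.2.ne
    have h1 : clps i j (Dmat e) = 0 := by
      unfold Dmat
      rw [AlgHom.map_det]
      apply Matrix.det_zero_of_row_eq hij
      funext t
      simp [clps, Matrix.of_apply, map_pow, hij, AlgHom.mapMatrix_apply, Matrix.map_apply]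
    have := dvd_sub_clps i j (Dmat e)
    rwa [h1, sub_zero] at this



/-! ### q-specialization -/

lemma prod_pairs {M : Type*} [CommMonoid M] (f : Fin n → Fin n → M) :
    ∏ q ∈ pairs n, f q.1 q.2 = ∏ i : Fin n, ∏ j ∈ Finset.Ioi i, f i j := by
  rw [← Finset.prod_sigma (Finset.univ : Finset (Fin n)) (fun i => Finset.Ioi i)
    (fun x => f x.1 x.2)]
  refine Finset.prod_nbij' (fun q => ⟨q.1, q.2⟩) (fun x => (x.1, x.2)) ?_ ?_ ?_ ?_ ?_ <;>
    simp [pairs, Finset.mem_sigma]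

noncomputable def theta (n : ℕ) : MvPolynomial (Fin n) ℤ →ₐ[ℤ] Polynomial ℤ :=
  aeval (fun i => Polynomial.X ^ (i : ℕ))

lemma theta_dmat (e : Fin n → ℕ) :
    theta n (Dmat e) = ∏ q ∈ pairs n, ((Polynomial.X : Polynomial ℤ) ^ e q.2 - Polynomial.X ^ e q.1) := by
  unfold Dmat theta
  rw [AlgHom.map_det]
  have hmat : (aeval (fun i : Fin n => (Polynomial.X : Polynomial ℤ) ^ (i : ℕ))).mapMatrix
      (Matrix.of fun i j : Fin n => (X i : MvPolynomial (Fin n) ℤ) ^ e j)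
      = (Matrix.vandermonde (fun j : Fin n => (Polynomial.X : Polynomial ℤ) ^ e j))ᵀ := by
    refine Matrix.ext fun i j => ?_
    simp only [AlgHom.mapMatrix_apply, Matrix.map_apply, Matrix.of_apply, map_pow, aeval_X,
      Matrix.transpose_apply, Matrix.vandermonde_apply, ← pow_mul]
    rw [Nat.mul_comm]
  rw [hmat, Matrix.det_transpose, Matrix.det_vandermonde, prod_pairs
    (fun i j => (Polynomial.X : Polynomial ℤ) ^ e j - Polynomial.X ^ e i)]

lemma theta_vdm : theta n (Vdm n) =
    ∏ q ∈ pairs n, ((Polynomial.X : Polynomial ℤ) ^ (q.2 : ℕ) - Polynomial.X ^ (q.1 : ℕ)) := by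
  unfold Vdm theta
  rw [map_prod]
  refine Finset.prod_congr rfl fun q hq => by simp

lemma pow_sub_pow_factor {a b : ℕ} (hab : a < b) :
    (Polynomial.X : Polynomial ℤ) ^ b - Polynomial.X ^ a
      = (Polynomial.X - 1) * (Polynomial.X ^ a * ∑ t ∈ Finset.range (b - a), Polynomial.X ^ t) := by
  have hg := geom_sum_mul (Polynomial.X : Polynomial ℤ) (b - a)
  calc (Polynomial.X : Polynomial ℤ) ^ b - Polynomial.X ^ a
      = Polynomial.X ^ a * (Polynomial.X ^ (b - a) - 1) := by
        rw [mul_sub, mul_one, ← pow_add]; congr 2; omega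
    _ = Polynomial.X ^ a * ((∑ t ∈ Finset.range (b - a), Polynomial.X ^ t) * (Polynomial.X - 1)) := by
        rw [hg]
    _ = _ := by ring

lemma eval_one_aeval_pow (k : Fin n → ℕ) (f : MvPolynomial (Fin n) ℤ) :
    Polynomial.eval 1 (aeval (fun i => (Polynomial.X : Polynomial ℤ) ^ (k i)) f)
      = eval (fun _ => (1:ℤ)) f := by
  induction f using MvPolynomial.induction_on with
  | C a => simp
  | add f g hf hg => simp [hf, hg]
  | mul_X f i hf => simp [hf]

lemma key_identity (e : Fin n → ℕ) (he : StrictMono e) (Q : MvPolynomial (Fin n) ℤ)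
    (hQ : Dmat e = Vdm n * Q) :
    (∏ q ∈ pairs n, ((e q.2 - e q.1 : ℕ) : ℤ))
      = (∏ q ∈ pairs n, (((q.2 : ℕ) - (q.1 : ℕ) : ℕ) : ℤ)) * eval (fun _ => (1:ℤ)) Q := by
  have hth := congrArg (theta n) hQ
  rw [_root_.map_mul, theta_dmat, theta_vdm] at hth
  have hlt : ∀ q ∈ pairs n, q.1 < q.2 := by
    intro q hq; simpa [pairs] using hq
  have hfac1 : ∀ q ∈ pairs n,
      (Polynomial.X : Polynomial ℤ) ^ e q.2 - Polynomial.X ^ e q.1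
        = (Polynomial.X - 1) * (Polynomial.X ^ e q.1 * ∑ t ∈ Finset.range (e q.2 - e q.1), Polynomial.X ^ t) :=
    fun q hq => pow_sub_pow_factor (he (hlt q hq))
  have hfac2 : ∀ q ∈ pairs n,
      (Polynomial.X : Polynomial ℤ) ^ (q.2 : ℕ) - Polynomial.X ^ (q.1 : ℕ)
        = (Polynomial.X - 1) * (Polynomial.X ^ (q.1 : ℕ) * ∑ t ∈ Finset.range ((q.2 : ℕ) - (q.1 : ℕ)), Polynomial.X ^ t) :=
    fun q hq => pow_sub_pow_factor (hlt q hq)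
  rw [Finset.prod_congr rfl hfac1, Finset.prod_congr rfl hfac2] at hth
  have hd1 : ∏ q ∈ pairs n, ((Polynomial.X - 1) * (Polynomial.X ^ e q.1 * ∑ t ∈ Finset.range (e q.2 - e q.1), (Polynomial.X:Polynomial ℤ) ^ t))
      = (Polynomial.X - 1) ^ (pairs n).card * ∏ q ∈ pairs n, (Polynomial.X ^ e q.1 * ∑ t ∈ Finset.range (e q.2 - e q.1), Polynomial.X ^ t) := by
    rw [Finset.prod_mul_distrib, Finset.prod_const]
  have hd2 : ∏ q ∈ pairs n, ((Polynomial.X - 1) * (Polynomial.X ^ (q.1:ℕ) * ∑ t ∈ Finset.range ((q.2:ℕ) - (q.1:ℕ)), (Polynomial.X:Polynomial ℤ) ^ t))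
      = (Polynomial.X - 1) ^ (pairs n).card * ∏ q ∈ pairs n, (Polynomial.X ^ (q.1:ℕ) * ∑ t ∈ Finset.range ((q.2:ℕ) - (q.1:ℕ)), Polynomial.X ^ t) := by
    rw [Finset.prod_mul_distrib, Finset.prod_const]
  rw [hd1, hd2] at hth
  have hXne : (Polynomial.X - 1 : Polynomial ℤ) ^ (pairs n).card ≠ 0 := by
    apply pow_ne_zero
    simpa using Polynomial.X_sub_C_ne_zero (1 : ℤ)
  have hth2 : (∏ q ∈ pairs n, (Polynomial.X ^ e q.1 * ∑ t ∈ Finset.range (e q.2 - e q.1), (Polynomial.X:Polynomial ℤ) ^ t))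
      = (∏ q ∈ pairs n, (Polynomial.X ^ (q.1:ℕ) * ∑ t ∈ Finset.range ((q.2:ℕ) - (q.1:ℕ)), (Polynomial.X:Polynomial ℤ) ^ t)) * theta n Q := by
    apply mul_left_cancel₀ hXne
    linear_combination hth
  have := congrArg (Polynomial.eval (1 : ℤ)) hth2
  simpa [Polynomial.eval_prod, Polynomial.eval_finset_sum, eval_one_aeval_pow, theta] using this

lemma not_dvd_eval_one {p : ℕ} (hp : p.Prime) (e : Fin n → ℕ) (he : StrictMono e)
    (hb : ∀ j, e j < p) (Q : MvPolynomial (Fin n) ℤ) (hQ : Dmat e = Vdm n * Q) :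
    ¬ ((p : ℤ) ∣ eval (fun _ => (1:ℤ)) Q) := by
  intro hdvd
  have hkey := key_identity e he Q hQ
  have hpZ : Prime (p : ℤ) := Nat.prime_iff_prime_int.mp hp
  have : (p : ℤ) ∣ ∏ q ∈ pairs n, ((e q.2 - e q.1 : ℕ) : ℤ) := by
    rw [hkey]; exact Dvd.dvd.mul_left hdvd _
  rcases hpZ.dvd_finset_prod_iff _ |>.mp this with ⟨q, hq, hqd⟩
  have hlt : q.1 < q.2 := by simpa [pairs] using hq
  have h1 : 0 < e q.2 - e q.1 := Nat.sub_pos_of_lt (he hlt)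
  have h2 : e q.2 - e q.1 < p := lt_of_le_of_lt (Nat.sub_le _ _) (hb q.2)
  have : p ∣ (e q.2 - e q.1) := Int.ofNat_dvd.mp (by exact_mod_cast hqd)
  have := Nat.le_of_dvd h1 this
  omega


/-! ### Chebotarev determinant theorem -/

lemma zeta_pow_congr {p : ℕ} (hp : 0 < p) {ζ : ℂ} (hζ : IsPrimitiveRoot ζ p)
    {a b : ℕ} (h : ζ ^ a = ζ ^ b) : (a : ZMod p) = (b : ZMod p) := by
  have hmod : ∀ m : ℕ, ζ ^ m = ζ ^ (m % p) := by
    intro m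
    conv_lhs => rw [← Nat.mod_add_div m p]
    rw [pow_add, pow_mul, hζ.pow_eq_one, one_pow, mul_one]
  rw [hmod a, hmod b] at h
  have := hζ.pow_inj (Nat.mod_lt _ hp) (Nat.mod_lt _ hp) h
  rw [ZMod.natCast_eq_natCast_iff]
  exact this

theorem cheb_det_ne_zero {p : ℕ} (hp : p.Prime) {ζ : ℂ} (hζ : IsPrimitiveRoot ζ p)
    {n : ℕ} (k : Fin n → ℕ) (hk : Function.Injective fun i => ((k i : ZMod p)))
    (e : Fin n → ℕ) (he : StrictMono e) (heb : ∀ j, e j < p) :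
    Matrix.det (Matrix.of fun i j : Fin n => ζ ^ (k i * e j)) ≠ 0 := by
  obtain ⟨Q, hQ⟩ := vdm_dvd_dmat (n := n) e
  haveI : Fact p.Prime := ⟨hp⟩
  set ψ : MvPolynomial (Fin n) ℤ →ₐ[ℤ] ℂ := aeval (fun i => ζ ^ k i) with hψ
  have hψD : ψ (Dmat e) = Matrix.det (Matrix.of fun i j : Fin n => ζ ^ (k i * e j)) := by
    unfold Dmat; rw [AlgHom.map_det]; congr 1
    refine Matrix.ext fun i j => ?_
    simp [hψ, ← pow_mul]
  have hψV : ψ (Vdm n) ≠ 0 := by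
    unfold Vdm
    rw [map_prod]
    refine Finset.prod_ne_zero_iff.mpr fun q hq => ?_
    have hlt : q.1 < q.2 := by simpa [pairs] using hq
    simp only [hψ, map_sub, aeval_X]
    intro h
    rw [sub_eq_zero] at h
    exact hlt.ne' (hk (zeta_pow_congr hp.pos hζ h))
  have hψQ : ψ Q ≠ 0 := by
    intro h0
    set χ : MvPolynomial (Fin n) ℤ →ₐ[ℤ] Polynomial ℤ :=
      aeval (fun i => (Polynomial.X : Polynomial ℤ) ^ k i) with hχ
    have hcomp : (Polynomial.aeval ζ).comp χ = ψ := by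
      apply MvPolynomial.algHom_ext
      intro i
      simp [hχ, hψ]
    set g : Polynomial ℤ := χ Q with hg
    have hgζ : Polynomial.aeval ζ g = 0 := by
      have := congrArg (fun φ : MvPolynomial (Fin n) ℤ →ₐ[ℤ] ℂ => φ Q) hcomp
      simpa [hg, h0] using this
    have hmin : minpoly ℚ ζ ∣ g.map (algebraMap ℤ ℚ) := by
      apply minpoly.dvd
      rw [Polynomial.aeval_map_algebraMap]
      exact hgζ
    rw [← Polynomial.cyclotomic_eq_minpoly_rat hζ hp.pos, ← Polynomial.map_cyclotomic p
      (algebraMap ℤ ℚ)] at hmin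
    have hdvdZ : Polynomial.cyclotomic p ℤ ∣ g := by
      have hinj : Function.Injective (algebraMap ℤ ℚ) := fun a b hab => by exact_mod_cast hab
      exact (Polynomial.map_dvd_map (algebraMap ℤ ℚ) hinj (Polynomial.cyclotomic.monic p ℤ)).mp hmin
    have hpdvd : (p : ℤ) ∣ g.eval 1 := by
      have := Polynomial.eval_dvd (x := (1:ℤ)) hdvdZ
      rwa [Polynomial.eval_one_cyclotomic_prime] at this
    rw [hg, hχ, eval_one_aeval_pow] at hpdvd
    exact not_dvd_eval_one hp e he heb Q hQ hpdvd
  rw [← hψD, hQ, _root_.map_mul]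
  exact mul_ne_zero hψV hψQ


end Cheb

namespace Cheb

noncomputable def zC (p : ℕ) : ℂ := Complex.exp (2 * Real.pi * Complex.I / p)

lemma zC_prim {p : ℕ} (hp : p ≠ 0) : IsPrimitiveRoot (zC p) p :=
  Complex.isPrimitiveRoot_exp p hp

lemma exp_eq_zC_pow (p : ℕ) (m : ℕ) :
    Complex.exp (2 * Real.pi * Complex.I * (m : ℂ) / p) = zC p ^ m := by
  rw [zC, ← Complex.exp_nat_mul]
  congr 1
  ring

lemma zC_pow_mod {p : ℕ} (hp : p ≠ 0) (m : ℕ) : zC p ^ (m % p) = zC p ^ m := by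
  conv_rhs => rw [← Nat.mod_add_div m p]
  rw [pow_add, pow_mul, (zC_prim hp).pow_eq_one, one_pow, mul_one]

lemma fourier_apply {p : ℕ} [NeZero p] (f : ZMod p → ℂ) (k : ZMod p) :
    fourierZMod f k = (1 / Real.sqrt p) * ∑ ℓ : ZMod p, zC p ^ (k.val * ℓ.val) * f ℓ := by
  unfold fourierZMod
  congr 1
  refine Finset.sum_congr rfl fun ℓ _ => ?_
  rw [exp_eq_zC_pow, ZMod.val_mul, zC_pow_mod (NeZero.ne p)]

theorem uncertainty {p : ℕ} (hp : p.Prime) [NeZero p] (f : ZMod p → ℂ)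
    (S T : Finset (ZMod p)) (hS : ∀ x, x ∉ S → f x = 0) (hST : S.card = T.card)
    (hT : ∀ t ∈ T, fourierZMod f t = 0) : f = 0 := by
  classical
  set n := S.card with hn
  set s : Fin n → ZMod p := fun i => (S.equivFin.symm i : ZMod p) with hs
  set t : Fin n → ZMod p := fun i => (T.equivFin.symm (Fin.cast hST i) : ZMod p) with ht
  have hsmem : ∀ i, s i ∈ S := fun i => (S.equivFin.symm i).2
  have htmem : ∀ i, t i ∈ T := fun i => (T.equivFin.symm (Fin.cast hST i)).2
  have hsinj : Function.Injective s := by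
    intro i j hij
    have := Subtype.ext hij (p := fun x => x ∈ S)
    simpa using S.equivFin.symm.injective this
  have htinj : Function.Injective t := by
    intro i j hij
    have := Subtype.ext hij (p := fun x => x ∈ T)
    have := T.equivFin.symm.injective this
    exact Fin.cast_injective hST this
  -- sort the columns
  set e' : Fin n → ℕ := fun j => (s j).val with he'
  have he'inj : Function.Injective e' := fun i j hij => hsinj (ZMod.val_injective p hij)
  set σ : Equiv.Perm (Fin n) := Tuple.sort e' with hσ
  have hmono : StrictMono (e' ∘ σ) :=
    (Tuple.monotone_sort e').strictMono_of_injective (he'inj.comp σ.injective)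
  set k : Fin n → ℕ := fun i => (t i).val with hkk
  have hkinj : Function.Injective fun i => ((k i : ZMod p)) := by
    intro i j hij
    apply htinj
    simpa [hkk, ZMod.natCast_val, ZMod.cast_id] using hij
  set M : Matrix (Fin n) (Fin n) ℂ :=
    Matrix.of (fun i j : Fin n => zC p ^ (k i * (e' ∘ σ) j)) with hM
  have hdet : M.det ≠ 0 :=
    cheb_det_ne_zero hp (zC_prim hp.ne_zero) k hkinj (e' ∘ σ) hmono
      (fun j => ZMod.val_lt _)
  set v : Fin n → ℂ := fun j => f (s (σ j)) with hv
  have hmv : M.mulVec v = 0 := by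
    funext i
    have h1 : ∑ j : Fin n, zC p ^ ((t i).val * (s (σ j)).val) * f (s (σ j))
        = ∑ j : Fin n, zC p ^ ((t i).val * (s j).val) * f (s j) :=
      Equiv.sum_comp σ (fun j => zC p ^ ((t i).val * (s j).val) * f (s j))
    have h2 : ∑ j : Fin n, zC p ^ ((t i).val * (s j).val) * f (s j)
        = ∑ x ∈ S, zC p ^ ((t i).val * x.val) * f x := by
      rw [← Finset.sum_attach S (fun x => zC p ^ ((t i).val * x.val) * f x)]
      exact (Equiv.sum_comp S.equivFin.symm
        (fun x : ↥S => zC p ^ ((t i).val * (x : ZMod p).val) * f x)).symm ▸ rfl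
    have h3 : ∑ x ∈ S, zC p ^ ((t i).val * x.val) * f x
        = ∑ x : ZMod p, zC p ^ ((t i).val * x.val) * f x := by
      apply Finset.sum_subset (Finset.subset_univ S)
      intro x _ hx
      rw [hS x hx, mul_zero]
    have h4 : fourierZMod f (t i) = 0 := hT _ (htmem i)
    rw [fourier_apply] at h4
    have hsqrt : (1 / (Real.sqrt p) : ℂ) ≠ 0 := by
      simp only [ne_eq, one_div, inv_eq_zero]
      exact_mod_cast Real.sqrt_ne_zero'.mpr (by exact_mod_cast hp.pos)
    have h5 : ∑ x : ZMod p, zC p ^ ((t i).val * x.val) * f x = 0 := by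
      rcases mul_eq_zero.mp h4 with h | h
      · exact absurd h (by exact_mod_cast hsqrt)
      · exact h
    show ∑ j : Fin n, M i j * v j = 0
    calc ∑ j : Fin n, M i j * v j
        = ∑ j : Fin n, zC p ^ ((t i).val * (s (σ j)).val) * f (s (σ j)) := rfl
      _ = 0 := by rw [h1, h2, h3, h5]
  have hv0 : v = 0 := Matrix.eq_zero_of_mulVec_eq_zero hdet hmv
  funext x
  by_cases hx : x ∈ S
  · have : x = s (σ (σ.symm (S.equivFin ⟨x, hx⟩))) := by simp [hs]
    rw [this]
    have := congrFun hv0 (σ.symm (S.equivFin ⟨x, hx⟩))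
    exact this
  · exact hS x hx

end Cheb
section Equivariant

open Finset

set_option linter.unusedSectionVars false

variable {p : ℕ} [NeZero p] (H : Subgroup (ZMod p)ˣ) [Fintype H]

/-- the orbit of `r` under `H` -/
def orbH (r : ZMod p) : Finset (ZMod p) :=
  Finset.image (fun h : H => ((h : (ZMod p)ˣ) : ZMod p) * r) Finset.univ

variable {H}

lemma mem_orbH_iff {r x : ZMod p} :
    x ∈ orbH H r ↔ ∃ h : H, ((h : (ZMod p)ˣ) : ZMod p) * r = x := by
  simp [orbH]

lemma self_mem_orbH (r : ZMod p) : r ∈ orbH H r :=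
  mem_orbH_iff.mpr ⟨1, by simp⟩

lemma unit_coe_ne_zero [Nontrivial (ZMod p)] (h : H) : ((h : (ZMod p)ˣ) : ZMod p) ≠ 0 :=
  Units.ne_zero _

lemma orbH_card (hp : p.Prime) {r : ZMod p} (hr : r ≠ 0) :
    (orbH H r).card = Fintype.card H := by
  haveI : Fact p.Prime := ⟨hp⟩
  rw [orbH, Finset.card_image_of_injective _ ?_, Finset.card_univ]
  intro h₁ h₂ hh
  have : ((h₁ : (ZMod p)ˣ) : ZMod p) = ((h₂ : (ZMod p)ˣ) : ZMod p) :=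
    mul_right_cancel₀ hr hh
  exact Subtype.ext (Units.ext this)

lemma orbH_smul_mem {r x : ZMod p} (h : H) (hx : x ∈ orbH H r) :
    ((h : (ZMod p)ˣ) : ZMod p) * x ∈ orbH H r := by
  obtain ⟨h', hh'⟩ := mem_orbH_iff.mp hx
  refine mem_orbH_iff.mpr ⟨h * h', ?_⟩
  rw [← hh']
  push_cast
  ring

lemma orbH_mem_of_smul_mem {r x : ZMod p} (h : H)
    (hx : ((h : (ZMod p)ˣ) : ZMod p) * x ∈ orbH H r) : x ∈ orbH H r := by
  have := orbH_smul_mem (h⁻¹) hx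
  rwa [← mul_assoc, ← Units.val_mul, ← Subgroup.coe_mul, inv_mul_cancel,
    Subgroup.coe_one, Units.val_one, one_mul] at this

/-- orbit decomposition of an invariant set -/
lemma exists_reps (hp : p.Prime) :
    ∀ A : Finset (ZMod p), (∀ x ∈ A, x ≠ 0) →
    (∀ (h : H), ∀ x ∈ A, ((h : (ZMod p)ˣ) : ZMod p) * x ∈ A) →
    ∃ R : Finset (ZMod p), R ⊆ A ∧ (∀ x ∈ A, ∃ r ∈ R, x ∈ orbH H r) ∧
      (∀ r ∈ R, ∀ r' ∈ R, r ≠ r' → r' ∉ orbH H r) ∧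
      A.card = R.card * Fintype.card H := by
  classical
  intro A
  induction A using Finset.strongInduction with
  | _ A ih =>
    intro h0 hinv
    rcases A.eq_empty_or_nonempty with rfl | ⟨a, ha⟩
    · exact ⟨∅, by simp⟩
    · have horbsub : orbH H a ⊆ A := by
        intro x hx
        obtain ⟨h, hh⟩ := mem_orbH_iff.mp hx
        rw [← hh]; exact hinv h a ha
      have haorb : a ∈ orbH H a := self_mem_orbH a
      set A' := A \ orbH H a with hA'
      have hss : A' ⊂ A := Finset.sdiff_ssubset horbsub ⟨a, haorb⟩
      have h0' : ∀ x ∈ A', x ≠ 0 := fun x hx => h0 x (Finset.mem_sdiff.mp hx).1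
      have hinv' : ∀ (h : H), ∀ x ∈ A', ((h : (ZMod p)ˣ) : ZMod p) * x ∈ A' := by
        intro h x hx
        rw [Finset.mem_sdiff] at hx ⊢
        refine ⟨hinv h x hx.1, fun hmem => hx.2 (orbH_mem_of_smul_mem h hmem)⟩
      obtain ⟨R', hsub', hcov', hsep', hcard'⟩ := ih A' hss h0' hinv'
      have haA' : a ∉ A' := by simp [hA', haorb]
      have haR' : a ∉ R' := fun hmem => haA' (hsub' hmem)
      refine ⟨insert a R', ?_, ?_, ?_, ?_⟩
      · exact Finset.insert_subset ha (hsub'.trans Finset.sdiff_subset)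
      · intro x hx
        by_cases hxa : x ∈ orbH H a
        · exact ⟨a, Finset.mem_insert_self _ _, hxa⟩
        · obtain ⟨r, hr, hxr⟩ := hcov' x (Finset.mem_sdiff.mpr ⟨hx, hxa⟩)
          exact ⟨r, Finset.mem_insert_of_mem hr, hxr⟩
      · intro r hr r' hr' hne
        rcases Finset.mem_insert.mp hr with rfl | hrR
        · rcases Finset.mem_insert.mp hr' with rfl | hr'R
          · exact absurd rfl hne
          · exact (Finset.mem_sdiff.mp (hsub' hr'R)).2
        · rcases Finset.mem_insert.mp hr' with rfl | hr'R
          · intro hmem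
            -- r' = a ∈ orbH r with r ∈ R' ⊆ A', but orbH r ⊆ A'
            have horb' : orbH H r ⊆ A' := by
              intro x hx
              obtain ⟨h, hh⟩ := mem_orbH_iff.mp hx
              rw [← hh]; exact hinv' h r (hsub' hrR)
            exact haA' (horb' hmem)
          · exact hsep' r hrR r' hr'R hne
      · have hc1 : (A \ orbH H a).card = A.card - (orbH H a).card :=
          Finset.card_sdiff_of_subset horbsub
        have hc2 : (orbH H a).card ≤ A.card := Finset.card_le_card horbsub
        rw [Finset.card_insert_of_notMem haR', add_mul, one_mul]
        rw [orbH_card hp (h0 a ha)] at hc1 hc2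
        have h3 : A'.card = A.card - Fintype.card ↥H := hc1
        rw [← hcard']
        omega

end Equivariant
section Equivariant2

open Finset Cheb
set_option linter.unusedSectionVars false

variable {p : ℕ} [NeZero p] {H : Subgroup (ZMod p)ˣ} [Fintype H] (c : H →* ℂˣ)

/-- `(H,c)`-equivariance -/
def IsEquivF (f : ZMod p → ℂ) : Prop :=
  ∀ (h : H) (x : ZMod p), f (((h : (ZMod p)ˣ) : ZMod p) * x) = (c h : ℂ) * f x

variable {c}

lemma fourier_apply' (f : ZMod p → ℂ) (k : ZMod p) :
    fourierZMod f k = (1 / Real.sqrt p) * ∑ ℓ : ZMod p, zC p ^ ((k * ℓ).val) * f ℓ := by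
  unfold fourierZMod
  congr 1
  exact Finset.sum_congr rfl fun ℓ _ => by rw [exp_eq_zC_pow]

lemma exists_c_ne_one (hc : c ≠ 1) : ∃ h₀ : H, (c h₀ : ℂ) ≠ 1 := by
  by_contra hcon
  push_neg at hcon
  apply hc
  ext h
  rw [MonoidHom.one_apply]
  simpa using hcon h

lemma sum_smul_reindex (hp : p.Prime) (u : (ZMod p)ˣ) (g : ZMod p → ℂ) :
    ∑ x : ZMod p, g ((u : ZMod p) * x) = ∑ x : ZMod p, g x := by
  haveI : Fact p.Prime := ⟨hp⟩
  exact Equiv.sum_comp (Equiv.mulLeft₀ (u : ZMod p) (Units.ne_zero u)) g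

lemma equiv_f_zero (hc : c ≠ 1) {f : ZMod p → ℂ} (hf : IsEquivF c f) : f 0 = 0 := by
  obtain ⟨h₀, hh₀⟩ := exists_c_ne_one hc
  have h1 := hf h₀ 0
  rw [mul_zero] at h1
  have h2 : ((c h₀ : ℂ) - 1) * f 0 = 0 := by linear_combination -h1
  rcases mul_eq_zero.mp h2 with h | h
  · exact absurd (by linear_combination h) hh₀
  · exact h

lemma sum_equiv_eq_zero (hp : p.Prime) (hc : c ≠ 1) {f : ZMod p → ℂ} (hf : IsEquivF c f) :
    ∑ x : ZMod p, f x = 0 := by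
  obtain ⟨h₀, hh₀⟩ := exists_c_ne_one hc
  have h1 : ∑ x : ZMod p, f (((h₀ : (ZMod p)ˣ) : ZMod p) * x) = ∑ x : ZMod p, f x :=
    sum_smul_reindex hp _ f
  have h2 : ∑ x : ZMod p, f (((h₀ : (ZMod p)ˣ) : ZMod p) * x)
      = (c h₀ : ℂ) * ∑ x : ZMod p, f x := by
    rw [Finset.mul_sum]
    exact Finset.sum_congr rfl fun x _ => hf h₀ x
  have h3 : ((c h₀ : ℂ) - 1) * ∑ x : ZMod p, f x = 0 := by
    linear_combination h2.symm.trans h1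
  rcases mul_eq_zero.mp h3 with h | h
  · exact absurd (by linear_combination h) hh₀
  · exact h

lemma fourier_zero_of_equiv (hp : p.Prime) (hc : c ≠ 1) {f : ZMod p → ℂ}
    (hf : IsEquivF c f) : fourierZMod f 0 = 0 := by
  rw [fourier_apply']
  have : ∑ ℓ : ZMod p, zC p ^ ((0 * ℓ : ZMod p).val) * f ℓ = ∑ ℓ : ZMod p, f ℓ := by
    refine Finset.sum_congr rfl fun ℓ _ => ?_
    rw [zero_mul, ZMod.val_zero, pow_zero, one_mul]
  rw [this, sum_equiv_eq_zero hp hc hf, mul_zero]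

lemma fourier_equiv (hp : p.Prime) {f : ZMod p → ℂ} (hf : IsEquivF c f) (h : H) (k : ZMod p) :
    fourierZMod f (((h : (ZMod p)ˣ) : ZMod p) * k) = ((c h : ℂ))⁻¹ * fourierZMod f k := by
  haveI : Fact p.Prime := ⟨hp⟩
  set u : (ZMod p)ˣ := (h : (ZMod p)ˣ) with hu
  rw [fourier_apply', fourier_apply']
  have hre : ∑ ℓ : ZMod p, zC p ^ ((((u : ZMod p) * k) * ℓ).val) * f ℓ
      = ∑ m : ZMod p, zC p ^ ((((u : ZMod p) * k) * (((u⁻¹ : (ZMod p)ˣ) : ZMod p) * m)).val)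
          * f (((u⁻¹ : (ZMod p)ˣ) : ZMod p) * m) :=
    (sum_smul_reindex hp u⁻¹ (fun ℓ => zC p ^ ((((u : ZMod p) * k) * ℓ).val) * f ℓ)).symm
  have harg : ∀ m : ZMod p,
      (((u : ZMod p) * k) * (((u⁻¹ : (ZMod p)ˣ) : ZMod p) * m)) = k * m := by
    intro m
    have huu : (u : ZMod p) * ((u⁻¹ : (ZMod p)ˣ) : ZMod p) = 1 := by
      rw [← Units.val_mul, mul_inv_cancel, Units.val_one]
    calc ((u : ZMod p) * k) * (((u⁻¹ : (ZMod p)ˣ) : ZMod p) * m)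
        = ((u : ZMod p) * ((u⁻¹ : (ZMod p)ˣ) : ZMod p)) * (k * m) := by ring
      _ = k * m := by rw [huu, one_mul]
  have hfval : ∀ m : ZMod p, f (((u⁻¹ : (ZMod p)ˣ) : ZMod p) * m) = ((c h : ℂ))⁻¹ * f m := by
    intro m
    have hcoe : (((h⁻¹ : H) : (ZMod p)ˣ) : ZMod p) = ((u⁻¹ : (ZMod p)ˣ) : ZMod p) := by
      rw [hu]; norm_cast
    have := hf h⁻¹ m
    rw [hcoe] at this
    rw [this, map_inv]
    norm_cast
  rw [hre]
  rw [Finset.mul_sum, Finset.mul_sum, Finset.mul_sum]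
  refine Finset.sum_congr rfl fun m _ => ?_
  rw [harg m, hfval m]
  ring

variable (c)

/-- basis function supported on the orbit of `r` -/
noncomputable def gfun (r : ZMod p) : ZMod p → ℂ :=
  fun x => ∑ h : H, if ((h : (ZMod p)ˣ) : ZMod p) * r = x then (c h : ℂ) else 0

variable {c}

lemma gfun_eq_zero {r x : ZMod p} (hx : x ∉ orbH H r) : gfun c r x = 0 := by
  rw [gfun]
  refine Finset.sum_eq_zero fun h _ => ?_
  rw [if_neg]
  intro hh
  exact hx (mem_orbH_iff.mpr ⟨h, hh⟩)

lemma gfun_self (hp : p.Prime) {r : ZMod p} (hr : r ≠ 0) : gfun c r r = 1 := by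
  haveI : Fact p.Prime := ⟨hp⟩
  have hiff : ∀ h : H, (((h : (ZMod p)ˣ) : ZMod p) * r = r) ↔ h = 1 := by
    intro h
    constructor
    · intro hh
      have h1 : ((h : (ZMod p)ˣ) : ZMod p) * r = 1 * r := by rw [hh, one_mul]
      have h2 := mul_right_cancel₀ hr h1
      exact Subtype.ext (Units.ext (by simpa using h2))
    · rintro rfl; simp
  rw [gfun]
  calc ∑ h : H, (if ((h : (ZMod p)ˣ) : ZMod p) * r = r then (c h : ℂ) else 0)
      = ∑ h : H, (if h = 1 then (c h : ℂ) else 0) :=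
        Finset.sum_congr rfl fun h _ => if_congr (hiff h) rfl rfl
    _ = 1 := by rw [Finset.sum_ite_eq' Finset.univ (1 : H) (fun h => (c h : ℂ))]; simp

lemma gfun_equivariant (hp : p.Prime) (r : ZMod p) : IsEquivF c (gfun c r) := by
  haveI : Fact p.Prime := ⟨hp⟩
  intro h₀ x
  rw [gfun, gfun, Finset.mul_sum]
  refine (Fintype.sum_equiv (Equiv.mulLeft h₀)
    (fun h' => (c h₀ : ℂ) * (if ((h' : (ZMod p)ˣ) : ZMod p) * r = x then (c h' : ℂ) else 0))
    (fun h => if ((h : (ZMod p)ˣ) : ZMod p) * r = ((h₀ : (ZMod p)ˣ) : ZMod p) * x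
       then (c h : ℂ) else 0) (fun h' => ?_)).symm
  show (c h₀ : ℂ) * (if ((h' : (ZMod p)ˣ) : ZMod p) * r = x then (c h' : ℂ) else 0)
      = if (((h₀ * h' : H) : (ZMod p)ˣ) : ZMod p) * r = ((h₀ : (ZMod p)ˣ) : ZMod p) * x
        then (c (h₀ * h') : ℂ) else 0
  have hco : (((h₀ * h' : H) : (ZMod p)ˣ) : ZMod p)
      = ((h₀ : (ZMod p)ˣ) : ZMod p) * ((h' : (ZMod p)ˣ) : ZMod p) := by push_cast; ring
  rw [hco, mul_ite, mul_zero]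
  refine (if_congr ?_ ?_ rfl).symm
  · rw [mul_assoc]
    constructor
    · intro hh
      exact mul_left_cancel₀ (Units.ne_zero (h₀ : (ZMod p)ˣ)) hh
    · intro hh
      rw [hh]
  · rw [_root_.map_mul, Units.val_mul]

lemma fourier_linsum {ι : Type*} [Fintype ι] (v : ι → ℂ) (F : ι → ZMod p → ℂ) (k : ZMod p) :
    fourierZMod (fun x => ∑ r : ι, v r * F r x) k = ∑ r : ι, v r * fourierZMod (F r) k := by
  simp only [fourier_apply']
  have h1 : ∑ ℓ : ZMod p, zC p ^ ((k * ℓ).val) * ∑ r : ι, v r * F r ℓ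
      = ∑ r : ι, ∑ ℓ : ZMod p, v r * (zC p ^ ((k * ℓ).val) * F r ℓ) := by
    rw [Finset.sum_comm]
    refine Finset.sum_congr rfl fun ℓ _ => ?_
    rw [Finset.mul_sum]
    exact Finset.sum_congr rfl fun r _ => by ring
  rw [h1, Finset.mul_sum]
  refine Finset.sum_congr rfl fun r _ => ?_
  simp only [← Finset.mul_sum]
  ring

lemma fourier_sub_smul (f g : ZMod p → ℂ) (a : ℂ) (k : ZMod p) :
    fourierZMod (fun x => f x - a * g x) k = fourierZMod f k - a * fourierZMod g k := by
  simp only [fourier_apply']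
  have : ∑ ℓ : ZMod p, zC p ^ ((k * ℓ).val) * (f ℓ - a * g ℓ)
      = (∑ ℓ : ZMod p, zC p ^ ((k * ℓ).val) * f ℓ)
        - a * ∑ ℓ : ZMod p, zC p ^ ((k * ℓ).val) * g ℓ := by
    rw [Finset.mul_sum, ← Finset.sum_sub_distrib]
    exact Finset.sum_congr rfl fun ℓ _ => by ring
  rw [this]
  ring

end Equivariant2

open Finset in
/-- **Lemma 6.8.a.** Let `p` be an odd prime, `H` a subgroup of `𝔽_p^*` of order
`d_H` and `c : H → ℂ*` a non-trivial character.  For all `H`-invariant subsets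
`A, B` of `𝔽_p^*` with `|A| + |B| = (p-1) + d_H`, there exists a non-zero
`(H,c)`-equivariant function `f : 𝔽_p → ℂ` with support contained in `A` whose
Fourier transform has support contained in `B`; such an `f` is unique up to a
non-zero scalar, it vanishes nowhere on `A`, and `f̂` vanishes nowhere on `B`. -/
theorem exists_unique_equivariant_function_with_prescribed_supports
    (p : ℕ) (hp : p.Prime) (hodd : p ≠ 2)
    (H : Subgroup (ZMod p)ˣ) (c : H →* ℂˣ) (hc : c ≠ 1)
    (A B : Finset (ZMod p))
    (hA0 : ∀ x ∈ A, x ≠ 0) (hB0 : ∀ x ∈ B, x ≠ 0)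
    (hAinv : ∀ (h : H), ∀ x ∈ A, ((h : (ZMod p)ˣ) : ZMod p) * x ∈ A)
    (hBinv : ∀ (h : H), ∀ x ∈ B, ((h : (ZMod p)ˣ) : ZMod p) * x ∈ B)
    (hcard : A.card + B.card = (p - 1) + Nat.card H) :
    haveI : NeZero p := ⟨hp.ne_zero⟩
    ∃ f : ZMod p → ℂ,
      f ≠ 0 ∧
      (∀ (h : H) (x : ZMod p),
        f (((h : (ZMod p)ˣ) : ZMod p) * x) = (c h : ℂ) * f x) ∧
      Function.support f ⊆ ↑A ∧
      Function.support (fourierZMod f) ⊆ ↑B ∧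
      (∀ x ∈ A, f x ≠ 0) ∧
      (∀ x ∈ B, fourierZMod f x ≠ 0) ∧
      (∀ f' : ZMod p → ℂ,
        f' ≠ 0 →
        (∀ (h : H) (x : ZMod p),
          f' (((h : (ZMod p)ˣ) : ZMod p) * x) = (c h : ℂ) * f' x) →
        Function.support f' ⊆ ↑A →
        Function.support (fourierZMod f') ⊆ ↑B →
        ∃ a : ℂ, a ≠ 0 ∧ f' = a • f) := by
  haveI : NeZero p := ⟨hp.ne_zero⟩
  haveI : Fact p.Prime := ⟨hp⟩
  letI : Fintype H := Fintype.ofFinite H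
  classical
  set d := Fintype.card ↥H with hd
  have hdpos : 0 < d := Fintype.card_pos
  have hp2 : 2 ≤ p := hp.two_le
  have hcard' : A.card + B.card = (p - 1) + d := by
    rw [hd, ← Nat.card_eq_fintype_card]; exact hcard
  -- the complement set C of B inside the nonzero elements
  set C : Finset (ZMod p) := (Finset.univ.erase 0) \ B with hC
  have hBsub : B ⊆ Finset.univ.erase 0 := fun x hx =>
    Finset.mem_erase.mpr ⟨hB0 x hx, Finset.mem_univ x⟩
  have hcarderase : (Finset.univ.erase (0 : ZMod p)).card = p - 1 := by
    rw [Finset.card_erase_of_mem (Finset.mem_univ _), Finset.card_univ, ZMod.card]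
  have hCcard : C.card = (p - 1) - B.card := by
    rw [hC, Finset.card_sdiff_of_subset hBsub, hcarderase]
  have hBle : B.card ≤ p - 1 := hcarderase ▸ Finset.card_le_card hBsub
  have hmemC : ∀ y : ZMod p, y ∈ C ↔ (y ≠ 0 ∧ y ∉ B) := by
    intro y
    rw [hC, Finset.mem_sdiff, Finset.mem_erase]
    simp
  have hC0 : ∀ x ∈ C, x ≠ 0 := fun x hx => ((hmemC x).mp hx).1
  have hCinv : ∀ (h : H), ∀ x ∈ C, ((h : (ZMod p)ˣ) : ZMod p) * x ∈ C := by
    intro h x hx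
    rw [hmemC] at hx ⊢
    refine ⟨mul_ne_zero (Units.ne_zero _) hx.1, fun hmem => hx.2 ?_⟩
    have hB2 := hBinv h⁻¹ _ hmem
    rw [← mul_assoc] at hB2
    have hcoe : (((h⁻¹ : H) : (ZMod p)ˣ) : ZMod p) * ((h : (ZMod p)ˣ) : ZMod p) = 1 := by
      rw [show (((h⁻¹ : H) : (ZMod p)ˣ) : ZMod p) = (((h : H) : (ZMod p)ˣ)⁻¹ : (ZMod p)ˣ) by
        norm_cast, ← Units.val_mul, inv_mul_cancel, Units.val_one]
    rwa [hcoe, one_mul] at hB2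
  obtain ⟨RA, hRAsub, hRAcov, hRAsep, hRAcard⟩ := exists_reps hp A hA0 hAinv
  obtain ⟨RC, hRCsub, hRCcov, hRCsep, hRCcard⟩ := exists_reps hp C hC0 hCinv
  have hACd : A.card = C.card + d := by omega
  have hRR : RA.card = RC.card + 1 := by
    have h1 : RA.card * d = (RC.card + 1) * d := by
      calc RA.card * d = A.card := hRAcard.symm
        _ = C.card + d := hACd
        _ = RC.card * d + d := by rw [hRCcard]
        _ = (RC.card + 1) * d := by ring
    exact Nat.eq_of_mul_eq_mul_right hdpos h1
  -- orbits of representatives stay inside A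
  have horbA : ∀ r ∈ RA, orbH H r ⊆ A := by
    intro r hr x hx
    obtain ⟨h, hh⟩ := mem_orbH_iff.mp hx
    rw [← hh]; exact hAinv h r (hRAsub hr)
  -- the "key" uniqueness/vanishing engine via the uncertainty principle
  have key : ∀ g : ZMod p → ℂ, IsEquivF c g → (∀ x, x ∉ A → g x = 0) →
      (∀ y, y ∉ B → fourierZMod g y = 0) → ∀ a ∈ A, g a = 0 → g = 0 := by
    intro g hge hgs hgf a ha hga
    have horb : ∀ x ∈ orbH H a, g x = 0 := by
      intro x hx
      obtain ⟨h, hh⟩ := mem_orbH_iff.mp hx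
      rw [← hh, hge h a, hga, mul_zero]
    have horbsubA : orbH H a ⊆ A := by
      intro x hx
      obtain ⟨h, hh⟩ := mem_orbH_iff.mp hx
      rw [← hh]; exact hAinv h a ha
    have hSsupp : ∀ x, x ∉ A \ orbH H a → g x = 0 := by
      intro x hx
      rw [Finset.mem_sdiff] at hx
      push_neg at hx
      by_cases hxA : x ∈ A
      · exact horb x (hx hxA)
      · exact hgs x hxA
    have hWv : ∀ y ∈ Finset.univ \ B, fourierZMod g y = 0 := fun y hy =>
      hgf y (Finset.mem_sdiff.mp hy).2
    have hScard : (A \ orbH H a).card = A.card - d := by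
      rw [Finset.card_sdiff_of_subset horbsubA, orbH_card hp (hA0 a ha)]
    have hWcard : (Finset.univ \ B).card = p - B.card := by
      rw [Finset.card_sdiff_of_subset (Finset.subset_univ B), Finset.card_univ, ZMod.card]
    have hle : (A \ orbH H a).card ≤ (Finset.univ \ B).card := by
      rw [hScard, hWcard]; omega
    obtain ⟨T, hTW, hTc⟩ := Finset.exists_subset_card_eq hle
    exact Cheb.uncertainty hp g (A \ orbH H a) T hSsupp hTc.symm
      (fun t ht => hWv t (hTW ht))
  -- construct the matrix of Fourier constraints and a kernel vector
  set K : Matrix ↥RC ↥RA ℂ :=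
    Matrix.of (fun ρ r => fourierZMod (gfun c (r : ZMod p)) (ρ : ZMod p)) with hK
  have hnotinj : ¬ Function.Injective K.mulVecLin := by
    intro hinj
    have hle := LinearMap.finrank_le_finrank_of_injective hinj
    rw [Module.finrank_pi, Module.finrank_pi, Fintype.card_coe, Fintype.card_coe] at hle
    omega
  have hker : ∃ v : ↥RA → ℂ, v ≠ 0 ∧ K.mulVecLin v = 0 := by
    by_contra hcon
    push_neg at hcon
    apply hnotinj
    rw [← LinearMap.ker_eq_bot, Submodule.eq_bot_iff]
    intro v hv
    by_contra hv0
    exact hcon v hv0 (LinearMap.mem_ker.mp hv)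
  obtain ⟨v, hv0, hvK⟩ := hker
  set f : ZMod p → ℂ := fun x => ∑ r : ↥RA, v r * gfun c (r : ZMod p) x with hf
  have hfe : IsEquivF c f := by
    intro h x
    show ∑ r : ↥RA, v r * gfun c (r : ZMod p) (((h : (ZMod p)ˣ) : ZMod p) * x)
      = (c h : ℂ) * ∑ r : ↥RA, v r * gfun c (r : ZMod p) x
    rw [Finset.mul_sum]
    refine Finset.sum_congr rfl fun r _ => ?_
    rw [gfun_equivariant hp (r : ZMod p) h x]
    ring
  have hfsupp : ∀ x, x ∉ A → f x = 0 := by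
    intro x hx
    refine Finset.sum_eq_zero fun r _ => ?_
    rw [gfun_eq_zero, mul_zero]
    exact fun hmem => hx (horbA _ r.2 hmem)
  have hfne : f ≠ 0 := by
    intro hzero
    apply hv0
    funext r₀
    have hz := congrFun hzero (r₀ : ZMod p)
    have hfr : f (r₀ : ZMod p) = v r₀ := by
      show ∑ r : ↥RA, v r * gfun c (r : ZMod p) (r₀ : ZMod p) = v r₀
      rw [Fintype.sum_eq_single r₀ ?_]
      · rw [gfun_self hp (hA0 _ (hRAsub r₀.2)), mul_one]
      · intro r hr
        rw [gfun_eq_zero, mul_zero]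
        exact hRAsep (r : ZMod p) r.2 (r₀ : ZMod p) r₀.2 (fun hcc => hr (Subtype.ext hcc))
    rw [hfr] at hz
    exact hz
  have hfourRC : ∀ ρ : ↥RC, fourierZMod f (ρ : ZMod p) = 0 := by
    intro ρ
    have hmv : K.mulVec v = 0 := by rw [← Matrix.mulVecLin_apply]; exact hvK
    calc fourierZMod f (ρ : ZMod p)
        = ∑ r : ↥RA, v r * fourierZMod (gfun c (r : ZMod p)) (ρ : ZMod p) :=
          fourier_linsum v _ _
      _ = (K.mulVec v) ρ := by
          rw [Matrix.mulVec, dotProduct]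
          exact Finset.sum_congr rfl fun r _ => by rw [hK]; exact mul_comm _ _
      _ = 0 := by rw [hmv]; rfl
  have hfour0 : ∀ y, y ∉ B → fourierZMod f y = 0 := by
    intro y hy
    by_cases hy0 : y = 0
    · subst hy0; exact fourier_zero_of_equiv hp hc hfe
    · have hyC : y ∈ C := (hmemC y).mpr ⟨hy0, hy⟩
      obtain ⟨ρ, hρ, hyρ⟩ := hRCcov y hyC
      obtain ⟨h, hh⟩ := mem_orbH_iff.mp hyρ
      rw [← hh, fourier_equiv hp hfe h, hfourRC ⟨ρ, hρ⟩, mul_zero]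
  have hfA : ∀ a ∈ A, f a ≠ 0 := fun a ha hfa =>
    hfne (key f hfe hfsupp hfour0 a ha hfa)
  have hfB : ∀ b ∈ B, fourierZMod f b ≠ 0 := by
    intro b hb hfb
    have hWv : ∀ y ∈ (Finset.univ \ B) ∪ orbH H b, fourierZMod f y = 0 := by
      intro y hy
      rcases Finset.mem_union.mp hy with hy | hy
      · exact hfour0 y (Finset.mem_sdiff.mp hy).2
      · obtain ⟨h, hh⟩ := mem_orbH_iff.mp hy
        rw [← hh, fourier_equiv hp hfe h, hfb, mul_zero]
    have horbB : orbH H b ⊆ B := by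
      intro x hx
      obtain ⟨h, hh⟩ := mem_orbH_iff.mp hx
      rw [← hh]; exact hBinv h b hb
    have hdisj : Disjoint (Finset.univ \ B) (orbH H b) := by
      rw [Finset.disjoint_right]
      intro x hx hx2
      exact (Finset.mem_sdiff.mp hx2).2 (horbB hx)
    have hWcard : ((Finset.univ \ B) ∪ orbH H b).card = (p - B.card) + d := by
      rw [Finset.card_union_of_disjoint hdisj, Finset.card_sdiff_of_subset (Finset.subset_univ B),
        Finset.card_univ, ZMod.card, orbH_card hp (hB0 b hb)]
    have hle : A.card ≤ ((Finset.univ \ B) ∪ orbH H b).card := by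
      rw [hWcard]; omega
    obtain ⟨T, hTW, hTc⟩ := Finset.exists_subset_card_eq hle
    exact hfne (Cheb.uncertainty hp f A T hfsupp hTc.symm (fun t ht => hWv t (hTW ht)))
  have hAne : A.Nonempty := by
    rw [← Finset.card_pos]; omega
  obtain ⟨a₀, ha₀⟩ := hAne
  refine ⟨f, hfne, hfe, ?_, ?_, hfA, hfB, ?_⟩
  · intro x hx
    rw [Function.mem_support] at hx
    by_contra hxA
    exact hx (hfsupp x (by simpa using hxA))
  · intro y hy
    rw [Function.mem_support] at hy
    by_contra hyB
    exact hy (hfour0 y (by simpa using hyB))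
  · intro f' hf'0 hf'e hf's hf'f
    have hf'supp : ∀ x, x ∉ A → f' x = 0 := by
      intro x hx
      by_contra h
      exact hx (by simpa using hf's (Function.mem_support.mpr h))
    have hf'four : ∀ y, y ∉ B → fourierZMod f' y = 0 := by
      intro y hy
      by_contra h
      exact hy (by simpa using hf'f (Function.mem_support.mpr h))
    set a : ℂ := f' a₀ / f a₀ with ha
    set g : ZMod p → ℂ := fun x => f' x - a * f x with hg
    have hge : IsEquivF c g := by
      intro h x
      show f' (((h : (ZMod p)ˣ) : ZMod p) * x) - a * f (((h : (ZMod p)ˣ) : ZMod p) * x)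
        = (c h : ℂ) * (f' x - a * f x)
      rw [hf'e h x, hfe h x]
      ring
    have hgs : ∀ x, x ∉ A → g x = 0 := by
      intro x hx
      show f' x - a * f x = 0
      rw [hf'supp x hx, hfsupp x hx]
      ring
    have hgf : ∀ y, y ∉ B → fourierZMod g y = 0 := by
      intro y hy
      rw [hg, fourier_sub_smul f' f a y, hf'four y hy, hfour0 y hy]
      ring
    have hga : g a₀ = 0 := by
      show f' a₀ - a * f a₀ = 0
      rw [ha, div_mul_cancel₀ _ (hfA a₀ ha₀)]
      ring
    have hgz : g = 0 := key g hge hgs hgf a₀ ha₀ hga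
    have hane : a ≠ 0 := by
      intro h0
      apply hf'0
      funext x
      have hx := congrFun hgz x
      have : f' x - a * f x = 0 := hx
      rw [h0] at this
      simpa using this
    refine ⟨a, hane, ?_⟩
    funext x
    have hx := congrFun hgz x
    have hxx : f' x - a * f x = 0 := hx
    show f' x = a * f x
    linear_combination hxx
end

section
/- Let p ≥ 11 be a prime. Then there exists a biunimodular function f on 𝔽_p which is not proportional to any gaussian function g_{m,a} and not proportional to any Björck–Saffari function h translated: i.e. for no c ∈ ℂ is f equal to c·g_{m,a} (m ∈ 𝔽_p*, a ∈ 𝔽_p) or to c·h(·−a) with h a Björck–Saffari function and a ∈ 𝔽_p. -/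
/-- The Legendre character of `𝔽_p`, with complex values. -/
noncomputable def legendreC (p : ℕ) [Fact p.Prime] : ZMod p → ℂ :=
  fun x => ((quadraticChar (ZMod p) x : ℤ) : ℂ)

/-- The gaussian function `g_{m,a} (x) = e^{2πi m (x-a)² / p}` on `𝔽_p`. -/
noncomputable def gaussFun (p : ℕ) [NeZero p] (m a : ZMod p) : ZMod p → ℂ :=
  fun x => Complex.exp (2 * Real.pi * Complex.I * ((m * (x - a) ^ 2).val : ℂ) / p)

/-- The angle `θ ∈ (0, π/2)` with `cos θ = 1/√(p+1)`. -/
noncomputable def bsTheta (p : ℕ) : ℝ := Real.arccos (1 / Real.sqrt (p + 1))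

/-- `e₀·δ₀ + cos θ·1_{𝔽_p^*} + i·ε·sin θ·χ₀` on `𝔽_p`. -/
noncomputable def bsFun (p : ℕ) [Fact p.Prime] (e₀ : ℂ) (ε : ℝ) : ZMod p → ℂ :=
  fun x => if x = 0 then e₀ else
    (Real.cos (bsTheta p) : ℂ) +
      Complex.I * ε * Real.sin (bsTheta p) * legendreC p x

/-- The Björck–Saffari functions on `𝔽_p`. -/
def IsBjorckSaffari (p : ℕ) [Fact p.Prime] (h : ZMod p → ℂ) : Prop :=
  (p % 4 = 1 ∧ ∃ ε : ℝ, (ε = 1 ∨ ε = -1) ∧ h = bsFun p 1 ε) ∨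
  (p % 4 = 3 ∧ ∃ ε₁ ε₂ : ℝ, (ε₁ = 1 ∨ ε₁ = -1) ∧ (ε₂ = 1 ∨ ε₂ = -1) ∧
    h = bsFun p (Complex.exp (Complex.I * ε₁ * bsTheta p)) ε₂)

namespace NewBiuni
open Complex Finset
variable {p : ℕ} [hp : Fact p.Prime]

noncomputable def χc (p : ℕ) [Fact p.Prime] : MulChar (ZMod p) ℂ :=
  (quadraticChar (ZMod p)).ringHomComp (Int.castRingHom ℂ)

noncomputable def Gp (p : ℕ) [Fact p.Prime] : ℂ := gaussSum (χc p) (ZMod.stdAddChar)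

lemma χc_apply (x : ZMod p) : χc p x = ((quadraticChar (ZMod p) x : ℤ) : ℂ) := rfl

lemma ringChar_ne_two (hp11 : 11 ≤ p) : ringChar (ZMod p) ≠ 2 := by
  rw [ZMod.ringChar_zmod_n]; omega

lemma χc_ne_one (hp11 : 11 ≤ p) : χc p ≠ 1 :=
  (MulChar.ringHomComp_ne_one_iff (fun a b h => by simpa using h)).mpr
    (quadraticChar_ne_one (ringChar_ne_two hp11))

lemma χc_quadratic : (χc p).IsQuadratic :=
  (quadraticChar_isQuadratic (ZMod p)).comp (Int.castRingHom ℂ)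

lemma χc_zero : χc p 0 = 0 := by
  rw [χc_apply, quadraticChar_zero]; norm_num

lemma χc_cases {t : ZMod p} (ht : t ≠ 0) : χc p t = 1 ∨ χc p t = -1 := by
  rcases χc_quadratic t with h | h | h
  · exfalso
    rw [χc_apply] at h
    exact ht (quadraticChar_eq_zero_iff.mp (by exact_mod_cast h))
  · exact Or.inl h
  · exact Or.inr h

lemma χc_sq_self {t : ZMod p} (ht : t ≠ 0) : χc p t * χc p t = 1 := by
  rcases χc_cases ht with h | h <;> rw [h] <;> norm_num

lemma χc_sq_eq_one {y : ZMod p} (hy : y ≠ 0) : χc p (y ^ 2) = 1 := by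
  rw [χc_apply, quadraticChar_sq_one' hy]; norm_num

noncomputable def bj (p : ℕ) [Fact p.Prime] (e₀ : ℂ) (c s : ℝ) : ZMod p → ℂ :=
  fun x => if x = 0 then e₀ else (c : ℂ) + Complex.I * s * χc p x

lemma psi_apply (j : ZMod p) :
    (ZMod.stdAddChar j : ℂ) = Complex.exp (2 * Real.pi * Complex.I * (j.val : ℂ) / p) := by
  rw [ZMod.stdAddChar_apply, ZMod.toCircle_apply]

lemma psi_abs (j : ZMod p) : ‖ZMod.stdAddChar j‖ = 1 := by
  rw [ZMod.stdAddChar_apply]; exact Circle.norm_coe _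

lemma psi_inj {j j' : ZMod p} (h : (ZMod.stdAddChar j : ℂ) = ZMod.stdAddChar j') : j = j' :=
  ZMod.injective_stdAddChar h

lemma sum_psi (t : ZMod p) :
    ∑ ℓ : ZMod p, (ZMod.stdAddChar (t * ℓ) : ℂ) = if t = 0 then (p : ℂ) else 0 := by
  split_ifs with h
  · subst h; simp [ZMod.card]
  · simp_rw [← AddChar.mulShift_apply]
    exact AddChar.sum_eq_zero_of_ne_one (ZMod.isPrimitive_stdAddChar p h)

lemma sum_chi_psi {t : ZMod p} (ht : t ≠ 0) :
    ∑ ℓ : ZMod p, (ZMod.stdAddChar (t * ℓ) : ℂ) * χc p ℓ = χc p t * Gp p := by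
  have h := gaussSum_mulShift (χc p) (ZMod.stdAddChar) (Units.mk0 t ht)
  have h2 : gaussSum (χc p) (AddChar.mulShift ZMod.stdAddChar ((Units.mk0 t ht) : ZMod p))
      = ∑ ℓ : ZMod p, (ZMod.stdAddChar (t * ℓ) : ℂ) * χc p ℓ := by
    simp [gaussSum, AddChar.mulShift_apply, mul_comm]
  rw [h2] at h
  calc ∑ ℓ : ZMod p, (ZMod.stdAddChar (t * ℓ) : ℂ) * χc p ℓ
      = (χc p t * χc p t) * ∑ ℓ : ZMod p, (ZMod.stdAddChar (t * ℓ) : ℂ) * χc p ℓ := by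
        rw [χc_sq_self ht, one_mul]
    _ = χc p t * Gp p := by
        rw [mul_assoc]
        simp only [Units.val_mk0] at h
        rw [h]
        rfl

lemma sum_bj (hp11 : 11 ≤ p) (e₀ : ℂ) (c s : ℝ) (t : ZMod p) :
    ∑ ℓ : ZMod p, (ZMod.stdAddChar (t * ℓ) : ℂ) * bj p e₀ c s ℓ
      = e₀ + (c : ℂ) * ((if t = 0 then (p : ℂ) else 0) - 1)
        + Complex.I * s * (if t = 0 then 0 else χc p t * Gp p) := by
  classical
  have hdecomp : ∀ ℓ : ZMod p, bj p e₀ c s ℓ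
      = (if ℓ = 0 then e₀ - (c : ℂ) else 0) + ((c : ℂ) + Complex.I * s * χc p ℓ) := by
    intro ℓ
    by_cases h : ℓ = 0
    · subst h; simp [bj, χc_zero]
    · simp [bj, h]
  have h1 : ∑ ℓ : ZMod p, (ZMod.stdAddChar (t * ℓ) : ℂ) * (if ℓ = 0 then e₀ - (c : ℂ) else 0)
      = e₀ - c := by
    rw [Finset.sum_eq_single 0]
    · simp
    · intro b _ hb; simp [hb]
    · simp
  have h2 := sum_psi (p := p) t
  have h3 : ∑ ℓ : ZMod p, (ZMod.stdAddChar (t * ℓ) : ℂ) * χc p ℓ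
      = (if t = 0 then 0 else χc p t * Gp p) := by
    split_ifs with h
    · subst h
      simp only [zero_mul, AddChar.map_zero_eq_one, one_mul]
      exact MulChar.sum_eq_zero_of_ne_one (χc_ne_one hp11)
    · exact sum_chi_psi h
  calc ∑ ℓ : ZMod p, (ZMod.stdAddChar (t * ℓ) : ℂ) * bj p e₀ c s ℓ
      = ∑ ℓ : ZMod p, ((ZMod.stdAddChar (t * ℓ) : ℂ) * (if ℓ = 0 then e₀ - (c : ℂ) else 0)
          + ((c : ℂ) * (ZMod.stdAddChar (t * ℓ) : ℂ)
            + Complex.I * s * ((ZMod.stdAddChar (t * ℓ) : ℂ) * χc p ℓ))) := by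
        refine Finset.sum_congr rfl fun ℓ _ => ?_
        rw [hdecomp]; ring
    _ = (e₀ - c) + ((c : ℂ) * (if t = 0 then (p : ℂ) else 0)
          + Complex.I * s * (if t = 0 then 0 else χc p t * Gp p)) := by
        rw [Finset.sum_add_distrib, h1, Finset.sum_add_distrib, ← Finset.mul_sum, h2,
          ← Finset.mul_sum, h3]
    _ = _ := by ring

lemma Gp_sq (hp11 : 11 ≤ p) : Gp p ^ 2 = χc p (-1) * p := by
  have := gaussSum_sq (χc_ne_one hp11) (χc_quadratic)
    (ZMod.isPrimitive_stdAddChar p)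
  rw [ZMod.card] at this; exact this

lemma Gp_cases_one (hp11 : 11 ≤ p) (h4 : p % 4 = 1) :
    Gp p = ((Real.sqrt p : ℝ) : ℂ) ∨ Gp p = -((Real.sqrt p : ℝ) : ℂ) := by
  have hneg : χc p (-1) = 1 := by
    rw [χc_apply, quadraticChar_neg_one (ringChar_ne_two hp11), ZMod.card,
      ZMod.χ₄_nat_one_mod_four h4]
    norm_num
  have h2 : Gp p ^ 2 = (p : ℂ) := by rw [Gp_sq hp11, hneg, one_mul]
  have hr : ((Real.sqrt p : ℝ) : ℂ) ^ 2 = (p : ℂ) := by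
    have : (Real.sqrt p) ^ 2 = (p : ℝ) := Real.sq_sqrt (by positivity)
    exact_mod_cast congrArg (fun x : ℝ => (x : ℂ)) this
  have hzero : (Gp p - ((Real.sqrt p : ℝ) : ℂ)) * (Gp p + ((Real.sqrt p : ℝ) : ℂ)) = 0 := by
    linear_combination h2 - hr
  rcases mul_eq_zero.mp hzero with h | h
  · exact Or.inl (sub_eq_zero.mp h)
  · exact Or.inr (eq_neg_of_add_eq_zero_left h)

lemma Gp_cases_three (hp11 : 11 ≤ p) (h4 : p % 4 = 3) :
    Gp p = ((Real.sqrt p : ℝ) : ℂ) * Complex.I ∨ Gp p = -(((Real.sqrt p : ℝ) : ℂ) * Complex.I) := by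
  have hneg : χc p (-1) = -1 := by
    rw [χc_apply, quadraticChar_neg_one (ringChar_ne_two hp11), ZMod.card,
      ZMod.χ₄_nat_three_mod_four h4]
    norm_num
  have h2 : Gp p ^ 2 = -(p : ℂ) := by rw [Gp_sq hp11, hneg]; ring
  have hr : ((Real.sqrt p : ℝ) : ℂ) ^ 2 = (p : ℂ) := by
    have : (Real.sqrt p) ^ 2 = (p : ℝ) := Real.sq_sqrt (by positivity)
    exact_mod_cast congrArg (fun x : ℝ => (x : ℂ)) this
  have hzero : (Gp p - ((Real.sqrt p : ℝ) : ℂ) * Complex.I)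
      * (Gp p + ((Real.sqrt p : ℝ) : ℂ) * Complex.I) = 0 := by
    have hI : Complex.I ^ 2 = -1 := Complex.I_sq
    linear_combination h2 + hr - ((Real.sqrt p : ℝ) : ℂ) ^ 2 * hI
  rcases mul_eq_zero.mp hzero with h | h
  · exact Or.inl (sub_eq_zero.mp h)
  · exact Or.inr (eq_neg_of_add_eq_zero_left h)

lemma natCast_ne_zero_small (hp11 : 11 ≤ p) {n : ℕ} (h0 : 0 < n) (h : n ≤ 10) :
    ((n : ZMod p)) ≠ 0 := by
  intro h'
  rw [ZMod.natCast_eq_zero_iff] at h'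
  have := Nat.le_of_dvd h0 h'
  omega

lemma sq_points_inj (hp11 : 11 ≤ p) {i j : ℕ} (hi0 : 0 < i) (hi : i ≤ 5) (hj0 : 0 < j)
    (hj : j ≤ 5) (h : ((i : ZMod p)) ^ 2 = ((j : ZMod p)) ^ 2) : i = j := by
  by_contra hne
  have hfac : ((i : ZMod p) - j) * ((i : ZMod p) + j) = 0 := by linear_combination h
  have hsum : ((i : ZMod p) + (j : ZMod p)) ≠ 0 := by
    have h1 : (((i + j : ℕ) : ZMod p)) ≠ 0 := natCast_ne_zero_small hp11 (by omega) (by omega)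
    intro h2; apply h1; push_cast; exact h2
  rcases mul_eq_zero.mp hfac with h' | h'
  · have h1 : (i : ZMod p) = j := sub_eq_zero.mp h'
    have h2 := (ZMod.natCast_eq_natCast_iff' i j p).mp h1
    rw [Nat.mod_eq_of_lt (by omega), Nat.mod_eq_of_lt (by omega)] at h2
    exact hne h2
  · exact hsum h'

lemma legendreC_cases {t : ZMod p} (ht : t ≠ 0) : legendreC p t = 1 ∨ legendreC p t = -1 := by
  have := χc_cases (p := p) ht
  rwa [χc_apply] at this

lemma main_aux (hp11 : 11 ≤ p) (e₀ : ℂ) (c s : ℝ)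
    (habs0 : ‖e₀‖ = 1)
    (hcs : ‖(c : ℂ) + Complex.I * s‖ = 1)
    (hcs' : ‖(c : ℂ) - Complex.I * s‖ = 1)
    (hS : ∀ t : ZMod p, ‖e₀ + (c : ℂ) * ((if t = 0 then (p : ℂ) else 0) - 1)
        + Complex.I * s * (if t = 0 then 0 else χc p t * Gp p)‖ = Real.sqrt p) :
    ∃ f : ZMod p → ℂ,
      (∀ x : ZMod p, ‖f x‖ = 1) ∧
      (∀ x : ZMod p, ‖fourierZMod f x‖ = 1) ∧
      (¬ ∃ (c : ℂ) (m a : ZMod p), m ≠ 0 ∧ f = fun x => c * gaussFun p m a x) ∧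
      (¬ ∃ (c : ℂ) (a : ZMod p) (h : ZMod p → ℂ),
        IsBjorckSaffari p h ∧ f = fun x => c * h (x - a)) := by
  classical
  have hp0 : (0 : ℝ) < p := by positivity
  have hsq0 : (0 : ℝ) < Real.sqrt p := Real.sqrt_pos.mpr hp0
  set u : ℂ := (c : ℂ) + Complex.I * s with hu
  have hu1 : ‖u‖ = 1 := hcs
  have hu0 : u ≠ 0 := by
    intro h; rw [h] at hu1; simp at hu1
  -- the function
  refine ⟨fun x => (ZMod.stdAddChar x : ℂ) * bj p e₀ c s x, ?_, ?_, ?_, ?_⟩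
  · -- unimodular
    intro x
    rw [norm_mul, psi_abs, one_mul]
    by_cases hx : x = 0
    · rw [bj, if_pos hx]; exact habs0
    · rw [bj, if_neg hx]
      rcases χc_cases hx with h | h
      · rw [h, mul_one]; exact hcs
      · rw [h]
        rw [show (c : ℂ) + Complex.I * s * (-1) = (c : ℂ) - Complex.I * s by ring]
        exact hcs'
  · -- Fourier unimodular
    intro k
    have hrw : fourierZMod (fun x => (ZMod.stdAddChar x : ℂ) * bj p e₀ c s x) k
        = (1 / (Real.sqrt p : ℂ))
          * ∑ ℓ : ZMod p, (ZMod.stdAddChar ((k + 1) * ℓ) : ℂ) * bj p e₀ c s ℓ := by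
      unfold fourierZMod
      congr 1
      refine Finset.sum_congr rfl fun ℓ _ => ?_
      rw [← psi_apply]
      rw [show (k + 1) * ℓ = k * ℓ + ℓ by ring, AddChar.map_add_eq_mul]
      ring
    rw [hrw, norm_mul, sum_bj hp11, hS (k + 1)]
    rw [norm_div, norm_one, Complex.norm_real, Real.norm_eq_abs, _root_.abs_of_nonneg (Real.sqrt_nonneg _)]
    rw [one_div, inv_mul_cancel₀ (ne_of_gt hsq0)]
  · -- not a gaussian
    rintro ⟨c₀, m, a, hm, hf⟩
    have hkey : ∀ y : ZMod p, y ≠ 0 →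
        u * (ZMod.stdAddChar (y ^ 2 - m * (y ^ 2 - a) ^ 2) : ℂ) = c₀ := by
      intro y hy
      have hy2 : (y : ZMod p) ^ 2 ≠ 0 := pow_ne_zero _ hy
      have h1 := congrFun hf (y ^ 2)
      rw [bj, if_neg hy2, χc_sq_eq_one hy, mul_one, ← hu] at h1
      have hg : gaussFun p m a (y ^ 2) = (ZMod.stdAddChar (m * (y ^ 2 - a) ^ 2) : ℂ) := by
        rw [gaussFun, psi_apply]
      rw [hg] at h1
      have h2 : (ZMod.stdAddChar (m * (y ^ 2 - a) ^ 2) : ℂ)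
          * (ZMod.stdAddChar (-(m * (y ^ 2 - a) ^ 2)) : ℂ) = 1 := by
        rw [← AddChar.map_add_eq_mul]
        simp
      calc u * (ZMod.stdAddChar (y ^ 2 - m * (y ^ 2 - a) ^ 2) : ℂ)
          = ((ZMod.stdAddChar (y ^ 2) : ℂ) * u)
            * (ZMod.stdAddChar (-(m * (y ^ 2 - a) ^ 2)) : ℂ) := by
            rw [show y ^ 2 - m * (y ^ 2 - a) ^ 2 = y ^ 2 + -(m * (y ^ 2 - a) ^ 2) by ring,
              AddChar.map_add_eq_mul]
            ring
        _ = c₀ * ((ZMod.stdAddChar (m * (y ^ 2 - a) ^ 2) : ℂ)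
            * (ZMod.stdAddChar (-(m * (y ^ 2 - a) ^ 2)) : ℂ)) := by rw [h1]; ring
        _ = c₀ := by rw [h2, mul_one]
    have h1ne : ((1 : ZMod p)) ≠ 0 := one_ne_zero
    have h2ne : ((2 : ZMod p)) ≠ 0 := by
      have := natCast_ne_zero_small (p := p) hp11 (n := 2) (by norm_num) (by norm_num)
      exact_mod_cast this
    have h3ne : ((3 : ZMod p)) ≠ 0 := by
      have := natCast_ne_zero_small (p := p) hp11 (n := 3) (by norm_num) (by norm_num)
      exact_mod_cast this
    have e12 : (1 : ZMod p) ^ 2 - m * ((1 : ZMod p) ^ 2 - a) ^ 2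
        = (2 : ZMod p) ^ 2 - m * ((2 : ZMod p) ^ 2 - a) ^ 2 := by
      apply psi_inj
      have k1 := hkey 1 h1ne
      have k2 := hkey 2 h2ne
      have := k1.trans k2.symm
      exact mul_left_cancel₀ hu0 this
    have e13 : (1 : ZMod p) ^ 2 - m * ((1 : ZMod p) ^ 2 - a) ^ 2
        = (3 : ZMod p) ^ 2 - m * ((3 : ZMod p) ^ 2 - a) ^ 2 := by
      apply psi_inj
      have k1 := hkey 1 h1ne
      have k3 := hkey 3 h3ne
      have := k1.trans k3.symm
      exact mul_left_cancel₀ hu0 this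
    have h120 : (120 : ZMod p) * m = 0 := by
      linear_combination (-8 : ZMod p) * e12 + (3 : ZMod p) * e13
    have h120' : (120 : ZMod p) ≠ 0 := by
      have h8 : ((8 : ZMod p)) ≠ 0 := by
        have := natCast_ne_zero_small (p := p) hp11 (n := 8) (by norm_num) (by norm_num)
        exact_mod_cast this
      have h5 : ((5 : ZMod p)) ≠ 0 := by
        have := natCast_ne_zero_small (p := p) hp11 (n := 5) (by norm_num) (by norm_num)
        exact_mod_cast this
      have h120eq : (120 : ZMod p) = 8 * 3 * 5 := by norm_num
      rw [h120eq]
      exact mul_ne_zero (mul_ne_zero h8 h3ne) h5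
    rcases mul_eq_zero.mp h120 with h | h
    · exact h120' h
    · exact hm h
  · -- not a Björck–Saffari translate
    rintro ⟨c₀, a, h, hBS, hf⟩
    obtain ⟨E, ε, hh⟩ : ∃ (E : ℂ) (ε : ℝ), h = bsFun p E ε := by
      rcases hBS with ⟨_, ε, _, hh⟩ | ⟨_, ε₁, ε₂, _, _, hh⟩
      exacts [⟨1, ε, hh⟩, ⟨_, ε₂, hh⟩]
    subst hh
    set A : ℂ := (Real.cos (bsTheta p) : ℂ) with hA
    set B : ℂ := Complex.I * (ε : ℝ) * (Real.sin (bsTheta p) : ℂ) with hB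
    have hval : ∀ y : ZMod p, bsFun p E ε y ∈ ({E, A, A + B, A - B} : Finset ℂ) := by
      intro y
      by_cases hy : y = 0
      · rw [bsFun, if_pos hy]; simp
      · rcases legendreC_cases hy with h' | h'
        · have : bsFun p E ε y = A + B := by
            rw [bsFun, if_neg hy, h', hA, hB]; ring
          rw [this]; simp
        · have : bsFun p E ε y = A - B := by
            rw [bsFun, if_neg hy, h', hA, hB]; ring
          rw [this]; simp
    have hcard : ({E, A, A + B, A - B} : Finset ℂ).card < (Finset.univ : Finset (Fin 5)).card := by
      have hle : ({E, A, A + B, A - B} : Finset ℂ).card ≤ 4 := by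
        apply le_trans (Finset.card_insert_le _ _)
        have : ({A, A + B, A - B} : Finset ℂ).card ≤ 3 := by
          apply le_trans (Finset.card_insert_le _ _)
          have : ({A + B, A - B} : Finset ℂ).card ≤ 2 := by
            apply le_trans (Finset.card_insert_le _ _)
            simp
          omega
        omega
      simp only [Finset.card_univ, Fintype.card_fin]
      omega
    obtain ⟨i, -, j, -, hij, hEq⟩ :=
      Finset.exists_ne_map_eq_of_card_lt_of_maps_to hcard
        (f := fun i : Fin 5 => bsFun p E ε ((((i : ℕ) + 1 : ℕ) : ZMod p) ^ 2 - a))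
        (fun i _ => hval _)
    have hvne : ∀ i : Fin 5, ((((i : ℕ) + 1 : ℕ) : ZMod p)) ≠ 0 := fun i =>
      natCast_ne_zero_small hp11 (by omega) (by omega)
    have hfi := congrFun hf (((((i : ℕ) + 1 : ℕ) : ZMod p)) ^ 2)
    have hfj := congrFun hf (((((j : ℕ) + 1 : ℕ) : ZMod p)) ^ 2)
    rw [bj, if_neg (pow_ne_zero _ (hvne i)), χc_sq_eq_one (hvne i), mul_one, ← hu] at hfi
    rw [bj, if_neg (pow_ne_zero _ (hvne j)), χc_sq_eq_one (hvne j), mul_one, ← hu] at hfj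
    have hsame : (ZMod.stdAddChar ((((i : ℕ) + 1 : ℕ) : ZMod p) ^ 2) : ℂ) * u
        = (ZMod.stdAddChar ((((j : ℕ) + 1 : ℕ) : ZMod p) ^ 2) : ℂ) * u := by
      rw [hfi, hfj, hEq]
    have hpsi : (ZMod.stdAddChar ((((i : ℕ) + 1 : ℕ) : ZMod p) ^ 2) : ℂ)
        = (ZMod.stdAddChar ((((j : ℕ) + 1 : ℕ) : ZMod p) ^ 2) : ℂ) :=
      mul_right_cancel₀ hu0 hsame
    have hsq : ((((i : ℕ) + 1 : ℕ) : ZMod p)) ^ 2 = ((((j : ℕ) + 1 : ℕ) : ZMod p)) ^ 2 :=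
      psi_inj hpsi
    have : (i : ℕ) + 1 = (j : ℕ) + 1 :=
      sq_points_inj hp11 (by omega) (by omega) (by omega) (by omega) hsq
    exact hij (Fin.ext (by omega))

lemma abs_cs {c s : ℝ} (h : c ^ 2 + s ^ 2 = 1) :
    ‖(c : ℂ) + Complex.I * s‖ = 1 := by
  rw [show (c : ℂ) + Complex.I * s = (c : ℂ) + (s : ℂ) * Complex.I by ring,
    Complex.norm_add_mul_I, h, Real.sqrt_one]

lemma abs_cs' {c s : ℝ} (h : c ^ 2 + s ^ 2 = 1) :
    ‖(c : ℂ) - Complex.I * s‖ = 1 := by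
  rw [show (c : ℂ) - Complex.I * s = (c : ℂ) + ((-s : ℝ) : ℂ) * Complex.I by push_cast; ring,
    Complex.norm_add_mul_I]
  rw [show c ^ 2 + (-s) ^ 2 = 1 by nlinarith, Real.sqrt_one]

lemma case_one (hp11 : 11 ≤ p) (h4 : p % 4 = 1) :
    ∃ f : ZMod p → ℂ,
      (∀ x : ZMod p, ‖f x‖ = 1) ∧
      (∀ x : ZMod p, ‖fourierZMod f x‖ = 1) ∧
      (¬ ∃ (c : ℂ) (m a : ZMod p), m ≠ 0 ∧ f = fun x => c * gaussFun p m a x) ∧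
      (¬ ∃ (c : ℂ) (a : ZMod p) (h : ZMod p → ℂ),
        IsBjorckSaffari p h ∧ f = fun x => c * h (x - a)) := by
  have hp0 : (0 : ℝ) < p := by positivity
  set r : ℝ := Real.sqrt p with hr
  have hrp : r * r = p := Real.mul_self_sqrt (le_of_lt hp0)
  have hr3 : 3 ≤ r := by
    rw [hr, show (3 : ℝ) = Real.sqrt 9 by
      rw [show (9 : ℝ) = 3 ^ 2 by norm_num, Real.sqrt_sq (by norm_num)]]
    apply Real.sqrt_le_sqrt
    have : (11 : ℝ) ≤ p := by exact_mod_cast hp11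
    linarith
  have h1r : (0 : ℝ) < 1 + r := by linarith
  set c : ℝ := 1 / (1 + r) with hc
  have hck : c * (1 + r) = 1 := by
    rw [hc]; field_simp
  have hc0 : 0 < c := by rw [hc]; positivity
  have hc1 : c < 1 := by
    rw [hc]
    rw [div_lt_one h1r]
    linarith
  set s : ℝ := Real.sqrt (1 - c ^ 2) with hs
  have hs2 : s ^ 2 = 1 - c ^ 2 := Real.sq_sqrt (by nlinarith)
  have hcs1 : c ^ 2 + s ^ 2 = 1 := by rw [hs2]; ring
  apply main_aux hp11 1 c s
  · simp
  · exact abs_cs hcs1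
  · exact abs_cs' hcs1
  · intro t
    by_cases ht : t = 0
    · rw [if_pos ht, if_pos ht]
      have hre : (1 : ℂ) + (c : ℂ) * ((p : ℂ) - 1) + Complex.I * s * 0
          = ((1 + c * ((p : ℝ) - 1) : ℝ) : ℂ) := by push_cast; ring
      rw [hre, Complex.norm_real, Real.norm_eq_abs,
        _root_.abs_of_nonneg (by nlinarith : (0:ℝ) ≤ 1 + c * ((p : ℝ) - 1))]
      linear_combination (-c) * hrp + (r - 1) * hck
    · rw [if_neg ht, if_neg ht]
      obtain ⟨w, hw, hww⟩ : ∃ w : ℝ, χc p t * Gp p = (w : ℂ) ∧ w * w = p := by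
        rcases χc_cases ht with h | h <;> rcases Gp_cases_one hp11 h4 with hG | hG
        · exact ⟨r, by rw [h, hG, one_mul], hrp⟩
        · exact ⟨-r, by rw [h, hG, one_mul]; push_cast; ring, by nlinarith⟩
        · exact ⟨-r, by rw [h, hG]; push_cast; ring, by nlinarith⟩
        · exact ⟨r, by rw [h, hG]; push_cast; ring, hrp⟩
      rw [hw]
      have hre : (1 : ℂ) + (c : ℂ) * ((0 : ℂ) - 1) + Complex.I * s * (w : ℂ)
          = ((1 - c : ℝ) : ℂ) + ((s * w : ℝ) : ℂ) * Complex.I := by push_cast; ring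
      rw [hre, Complex.norm_add_mul_I]
      rw [show (1 - c) ^ 2 + (s * w) ^ 2 = p from by nlinarith [hs2, hww, hck, hrp]]

lemma case_three (hp11 : 11 ≤ p) (h4 : p % 4 = 3) :
    ∃ f : ZMod p → ℂ,
      (∀ x : ZMod p, ‖f x‖ = 1) ∧
      (∀ x : ZMod p, ‖fourierZMod f x‖ = 1) ∧
      (¬ ∃ (c : ℂ) (m a : ZMod p), m ≠ 0 ∧ f = fun x => c * gaussFun p m a x) ∧
      (¬ ∃ (c : ℂ) (a : ZMod p) (h : ZMod p → ℂ),
        IsBjorckSaffari p h ∧ f = fun x => c * h (x - a)) := by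
  have hp0 : (0 : ℝ) < p := by positivity
  have hp1 : (0 : ℝ) < (p : ℝ) + 1 := by positivity
  set r : ℝ := Real.sqrt p with hr
  have hrp : r * r = p := Real.mul_self_sqrt (le_of_lt hp0)
  set q : ℝ := Real.sqrt ((p : ℝ) + 1) with hq
  have hq2 : q * q = (p : ℝ) + 1 := Real.mul_self_sqrt (le_of_lt hp1)
  have hq0 : 0 < q := Real.sqrt_pos.mpr hp1
  set c : ℝ := 1 / q with hc
  have hck : c * q = 1 := by rw [hc]; field_simp
  have hc0 : 0 < c := by rw [hc]; positivity
  have hc2 : c ^ 2 * ((p : ℝ) + 1) = 1 := by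
    rw [← hq2]; rw [sq]; nlinarith [hck]
  set s : ℝ := Real.sqrt (1 - c ^ 2) with hs
  have hc1 : c ^ 2 ≤ 1 := by nlinarith
  have hs2 : s ^ 2 = 1 - c ^ 2 := Real.sq_sqrt (by nlinarith)
  have hcs1 : c ^ 2 + s ^ 2 = 1 := by rw [hs2]; ring
  apply main_aux hp11 ((c : ℂ) + Complex.I * s) c s
  · exact abs_cs hcs1
  · exact abs_cs hcs1
  · exact abs_cs' hcs1
  · intro t
    by_cases ht : t = 0
    · rw [if_pos ht, if_pos ht]
      have hre : ((c : ℂ) + Complex.I * s) + (c : ℂ) * ((p : ℂ) - 1) + Complex.I * s * 0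
          = ((c * (p : ℝ) : ℝ) : ℂ) + ((s : ℝ) : ℂ) * Complex.I := by push_cast; ring
      rw [hre, Complex.norm_add_mul_I]
      rw [show (c * (p : ℝ)) ^ 2 + s ^ 2 = (p : ℝ) from by nlinarith [hs2, hc2]]
    · rw [if_neg ht, if_neg ht]
      obtain ⟨w, hw, hww⟩ : ∃ w : ℝ, χc p t * Gp p = (w : ℂ) * Complex.I ∧ w * w = p := by
        rcases χc_cases ht with h | h <;> rcases Gp_cases_three hp11 h4 with hG | hG
        · exact ⟨r, by rw [h, hG, one_mul], hrp⟩
        · exact ⟨-r, by rw [h, hG, one_mul]; push_cast; ring, by nlinarith⟩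
        · exact ⟨-r, by rw [h, hG]; push_cast; ring, by nlinarith⟩
        · exact ⟨r, by rw [h, hG]; push_cast; ring, hrp⟩
      rw [hw]
      have hre : ((c : ℂ) + Complex.I * s) + (c : ℂ) * ((0 : ℂ) - 1)
            + Complex.I * s * ((w : ℂ) * Complex.I)
          = ((-(s * w) : ℝ) : ℂ) + ((s : ℝ) : ℂ) * Complex.I := by
        have hI : Complex.I ^ 2 = -1 := Complex.I_sq
        push_cast
        linear_combination ((s : ℂ) * (w : ℂ)) * hI
      rw [hre, Complex.norm_add_mul_I]
      rw [show (-(s * w)) ^ 2 + s ^ 2 = (p : ℝ) from by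
        linear_combination (w ^ 2 + 1) * hs2 + (1 - c ^ 2) * hww - hc2]

end NewBiuni

/-- **Theorem A.1.** Let `p ≥ 11` be prime. There exists a biunimodular function
on `𝔽_p` which is proportional neither to a gaussian function nor to a translate
of a Björck–Saffari function. -/
theorem exists_new_biunimodular_function (p : ℕ) [Fact p.Prime] (hp11 : 11 ≤ p) :
    ∃ f : ZMod p → ℂ,
      (∀ x : ZMod p, ‖f x‖ = 1) ∧
      (∀ x : ZMod p, ‖fourierZMod f x‖ = 1) ∧
      (¬ ∃ (c : ℂ) (m a : ZMod p), m ≠ 0 ∧ f = fun x => c * gaussFun p m a x) ∧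
      (¬ ∃ (c : ℂ) (a : ZMod p) (h : ZMod p → ℂ),
        IsBjorckSaffari p h ∧ f = fun x => c * h (x - a)) := by
  have hodd : p % 2 = 1 := Nat.odd_iff.mp ((Fact.out : p.Prime).odd_of_ne_two (by omega))
  rcases (by omega : p % 4 = 1 ∨ p % 4 = 3) with h4 | h4
  · exact NewBiuni.case_one hp11 h4
  · exact NewBiuni.case_three hp11 h4
end
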